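/- arXiv:1903.00074 — 9 statements merged into one kernel-verified Lean document; each statement's English description precedes it below -/
import Mathlib

section
/- Let m, n be positive integers and let B be an (mn)×n complex matrix with spectral norm ‖B‖ < 1/2. Then there exists an n×n Hermitian positive definite matrix Y with (1/2)I ≤ Y ≤ I such that Y + B* Ŷ^{-1} B = I. -/
open Matrix
open scoped Matrix.Norms.L2Operator Kronecker ComplexOrder

namespace Statement1Aux

variable {N : Type*} [Fintype N] [DecidableEq N]
variable {M : Type*} [Fintype M] [DecidableEq M]

noncomputable def ev {N : Type*} [Fintype N] (x : N → ℂ) : EuclideanSpace ℂ N :=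
  (WithLp.equiv 2 (N → ℂ)).symm x

lemma inner_ev {N : Type*} [Fintype N] (x y : N → ℂ) :
    (inner ℂ (ev x) (ev y) : ℂ) = star x ⬝ᵥ y := by
  rw [EuclideanSpace.inner_eq_star_dotProduct]
  simp [ev]
  exact dotProduct_comm _ _

lemma dot_self_ev {N : Type*} [Fintype N] (x : N → ℂ) :
    star x ⬝ᵥ x = (‖ev x‖ : ℂ) ^ 2 := by
  rw [← inner_ev, inner_self_eq_norm_sq_to_K]
  norm_cast

lemma norm_mulVec_le {M N : Type*} [Fintype M] [Fintype N] [DecidableEq N]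
    (A : Matrix M N ℂ) (x : N → ℂ) : ‖ev (A *ᵥ x)‖ ≤ ‖A‖ * ‖ev x‖ :=
  l2_opNorm_mulVec A (ev x)

lemma quad_im_eq_zero {A : Matrix N N ℂ} (hH : A.IsHermitian) (x : N → ℂ) :
    (star x ⬝ᵥ (A *ᵥ x)).im = 0 := by
  have him : (starRingEnd ℂ) (star x ⬝ᵥ (A *ᵥ x)) = star x ⬝ᵥ (A *ᵥ x) := by
    calc (starRingEnd ℂ) (star x ⬝ᵥ (A *ᵥ x))
        = star (star x ⬝ᵥ (A *ᵥ x)) := rfl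
      _ = star (A *ᵥ x) ⬝ᵥ x := by rw [← star_dotProduct]
      _ = (star x ᵥ* Aᴴ) ⬝ᵥ x := by rw [star_mulVec]
      _ = star x ⬝ᵥ (Aᴴ *ᵥ x) := by rw [dotProduct_mulVec]
      _ = star x ⬝ᵥ (A *ᵥ x) := by rw [hH.eq]
  have := congrArg Complex.im him
  simp only [Complex.conj_im] at this
  linarith

/-- A Hermitian matrix whose quadratic form has nonneg real part is PSD. -/
lemma posSemidef_of_quad {A : Matrix N N ℂ} (hH : A.IsHermitian)
    (h : ∀ x : N → ℂ, 0 ≤ (star x ⬝ᵥ (A *ᵥ x)).re) : A.PosSemidef := by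
  refine PosSemidef.of_dotProduct_mulVec_nonneg hH fun x => ?_
  rw [Complex.nonneg_iff]
  exact ⟨h x, (quad_im_eq_zero hH x).symm⟩

lemma real_smul_isHermitian {A : Matrix N N ℂ} (hA : A.IsHermitian) (c : ℝ) :
    ((c : ℂ) • A).IsHermitian := by
  unfold Matrix.IsHermitian
  rw [conjTranspose_smul, hA.eq]
  congr 1
  simp

lemma smul_posSemidef {A : Matrix N N ℂ} (hA : A.PosSemidef) {c : ℝ} (hc : 0 ≤ c) :
    ((c : ℂ) • A).PosSemidef := by
  refine posSemidef_of_quad (real_smul_isHermitian hA.isHermitian c) fun x => ?_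
  rw [smul_mulVec, dotProduct_smul]
  have h0 := hA.re_dotProduct_nonneg x
  simp only [smul_eq_mul, Complex.mul_re, Complex.ofReal_re, Complex.ofReal_im, zero_mul, sub_zero]
  exact mul_nonneg hc h0

lemma smul_one_posSemidef {c : ℝ} (hc : 0 ≤ c) :
    ((c : ℂ) • (1 : Matrix N N ℂ)).PosSemidef :=
  smul_posSemidef Matrix.PosSemidef.one hc

lemma smul_posDef {A : Matrix N N ℂ} (hA : A.PosDef) {c : ℝ} (hc : 0 < c) :
    ((c : ℂ) • A).PosDef := by
  refine PosDef.of_dotProduct_mulVec_pos (real_smul_isHermitian hA.isHermitian c) fun x hx => ?_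
  rw [smul_mulVec, dotProduct_smul]
  have h0 := hA.dotProduct_mulVec_pos hx
  rw [Complex.pos_iff] at h0 ⊢
  constructor
  · simp only [smul_eq_mul, Complex.mul_re, Complex.ofReal_re, Complex.ofReal_im, zero_mul,
      sub_zero]
    exact mul_pos hc h0.1
  · rw [smul_eq_mul, Complex.mul_im]
    simp [← h0.2]

lemma kron_conjTranspose {L P : Type*} (A : Matrix L L ℂ) (B : Matrix P P ℂ) :
    (A ⊗ₖ B)ᴴ = Aᴴ ⊗ₖ Bᴴ := by
  ext ⟨i, j⟩ ⟨k, l⟩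
  simp [conjTranspose_apply, mul_comm]

lemma kron_sub {L P : Type*} (A : Matrix L L ℂ) (B C : Matrix P P ℂ) :
    A ⊗ₖ (B - C) = A ⊗ₖ B - A ⊗ₖ C := by
  ext ⟨i, j⟩ ⟨k, l⟩
  simp [mul_sub]

lemma one_kron_smul_one (c : ℂ) :
    (1 : Matrix M M ℂ) ⊗ₖ (c • (1 : Matrix N N ℂ)) = c • (1 : Matrix (M × N) (M × N) ℂ) := by
  rw [kronecker_smul, one_kronecker_one]

lemma one_kron_posSemidef {W : Matrix N N ℂ} (hW : W.PosSemidef) :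
    ((1 : Matrix M M ℂ) ⊗ₖ W).PosSemidef := by
  obtain ⟨A, hA⟩ : ∃ A : Matrix N N ℂ, W = Aᴴ * A := by
    open scoped MatrixOrder in exact CStarAlgebra.nonneg_iff_eq_star_mul_self.mp hW.nonneg
  have : (1 : Matrix M M ℂ) ⊗ₖ W = ((1 : Matrix M M ℂ) ⊗ₖ A)ᴴ * ((1 : Matrix M M ℂ) ⊗ₖ A) := by
    rw [kron_conjTranspose, conjTranspose_one, ← mul_kronecker_mul, one_mul, ← hA]
  rw [this]
  exact posSemidef_conjTranspose_mul_self _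

/-- PSD and `≤ c•1` implies norm at most `c`. -/
lemma norm_le_of_le_smul_one {W : Matrix N N ℂ} (hW : W.PosSemidef) {c : ℝ} (hc : 0 ≤ c)
    (h : ((c : ℂ) • 1 - W).PosSemidef) : ‖W‖ ≤ c := by
  -- first: W^2 ≤ c^2 • 1
  open scoped MatrixOrder in set S := CFC.sqrt W with hS
  have hS2 : S * S = W := by open scoped MatrixOrder in exact CFC.sqrt_mul_sqrt_self W hW.nonneg
  have hSH : Sᴴ = S := by
    open scoped MatrixOrder in exact (CFC.sqrt_nonneg W).posSemidef.isHermitian.eq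
  have h1 : (Sᴴ * ((c : ℂ) • 1 - W) * S).PosSemidef := h.conjTranspose_mul_mul_same S
  have h1' : ((c : ℂ) • W - W * W).PosSemidef := by
    have aux : S * W * S = W * W := by
      rw [← hS2, ← mul_assoc S S S, mul_assoc (S * S) S S]
    have : Sᴴ * ((c : ℂ) • 1 - W) * S = (c : ℂ) • W - W * W := by
      rw [hSH, mul_sub, sub_mul, mul_smul_comm, smul_mul_assoc, mul_one, aux, hS2]
    rwa [this] at h1
  have h2 : ((c : ℂ) • ((c : ℂ) • 1 - W)).PosSemidef := smul_posSemidef h hc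
  have h3 : (((c ^ 2 : ℝ) : ℂ) • 1 - W * W).PosSemidef := by
    have : (((c ^ 2 : ℝ) : ℂ) • 1 - W * W)
        = (c : ℂ) • ((c : ℂ) • 1 - W) + ((c : ℂ) • W - W * W) := by
      push_cast
      module
    rw [this]
    exact h2.add h1'
  -- now bound mulVec
  have main : ∀ x : N → ℂ, ‖ev (W *ᵥ x)‖ ≤ c * ‖ev x‖ := by
    intro x
    have key : ‖ev (W *ᵥ x)‖ ^ 2 ≤ (c * ‖ev x‖) ^ 2 := by
      have hq := h3.dotProduct_mulVec_nonneg x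
      have e1 : star x ⬝ᵥ ((((c ^ 2 : ℝ) : ℂ) • 1 - W * W) *ᵥ x)
          = ((c ^ 2 : ℝ) : ℂ) * (star x ⬝ᵥ x) - star x ⬝ᵥ ((W * W) *ᵥ x) := by
        rw [sub_mulVec, dotProduct_sub, smul_mulVec, one_mulVec, dotProduct_smul]
        simp
      have e2 : star x ⬝ᵥ ((W * W) *ᵥ x) = (‖ev (W *ᵥ x)‖ : ℂ) ^ 2 := by
        rw [← mulVec_mulVec, dotProduct_mulVec, ← hW.isHermitian.eq, ← star_mulVec,
          hW.isHermitian.eq, dot_self_ev]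
      rw [e1, e2, dot_self_ev, Complex.nonneg_iff] at hq
      obtain ⟨hq1, -⟩ := hq
      simp only [← Complex.ofReal_pow, Complex.sub_re, Complex.mul_re, Complex.ofReal_re,
        Complex.ofReal_im, zero_mul, sub_zero] at hq1
      nlinarith [norm_nonneg (ev (W *ᵥ x)), norm_nonneg (ev x)]
    have h0 : 0 ≤ c * ‖ev x‖ := mul_nonneg hc (norm_nonneg _)
    calc ‖ev (W *ᵥ x)‖ = Real.sqrt (‖ev (W *ᵥ x)‖ ^ 2) := (Real.sqrt_sq (norm_nonneg _)).symm
      _ ≤ Real.sqrt ((c * ‖ev x‖) ^ 2) := Real.sqrt_le_sqrt key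
      _ = c * ‖ev x‖ := Real.sqrt_sq h0
  rw [l2_opNorm_def]
  refine ContinuousLinearMap.opNorm_le_bound _ hc fun y => ?_
  exact main ((WithLp.equiv 2 (N → ℂ)) y)

/-- PSD implies `W ≤ ‖W‖•1` (numerical radius bound). -/
lemma le_norm_smul_one {W : Matrix N N ℂ} (hW : W.PosSemidef) :
    (((‖W‖ : ℝ) : ℂ) • 1 - W).PosSemidef := by
  have hH : (((‖W‖ : ℝ) : ℂ) • 1 - W).IsHermitian :=
    ((real_smul_isHermitian Matrix.isHermitian_one ‖W‖).sub hW.isHermitian)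
  refine posSemidef_of_quad hH fun x => ?_
  have e1 : star x ⬝ᵥ (((((‖W‖ : ℝ) : ℂ) • 1 - W)) *ᵥ x)
      = ((‖W‖ : ℝ) : ℂ) * (star x ⬝ᵥ x) - star x ⬝ᵥ (W *ᵥ x) := by
    rw [sub_mulVec, dotProduct_sub, smul_mulVec, one_mulVec, dotProduct_smul]
    simp
  rw [e1]
  have hq : (star x ⬝ᵥ (W *ᵥ x)).re ≤ ‖W‖ * ‖ev x‖ ^ 2 := by
    have : star x ⬝ᵥ (W *ᵥ x) = (inner ℂ (ev x) (ev (W *ᵥ x)) : ℂ) := (inner_ev _ _).symm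
    rw [this]
    calc (inner ℂ (ev x) (ev (W *ᵥ x)) : ℂ).re
        ≤ ‖(inner ℂ (ev x) (ev (W *ᵥ x)) : ℂ)‖ := Complex.re_le_norm _
      _ ≤ ‖ev x‖ * ‖ev (W *ᵥ x)‖ := norm_inner_le_norm _ _
      _ ≤ ‖ev x‖ * (‖W‖ * ‖ev x‖) :=
          mul_le_mul_of_nonneg_left (norm_mulVec_le W x) (norm_nonneg _)
      _ = ‖W‖ * ‖ev x‖ ^ 2 := by ring
  rw [dot_self_ev]
  simp only [← Complex.ofReal_pow, Complex.sub_re, Complex.mul_re, Complex.ofReal_re,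
    Complex.ofReal_im, zero_mul, sub_zero]
  linarith [hq]

lemma norm_one_kron_le (X : Matrix N N ℂ) :
    ‖(1 : Matrix M M ℂ) ⊗ₖ X‖ ≤ ‖X‖ := by
  have hsq : ‖((1 : Matrix M M ℂ) ⊗ₖ X)ᴴ * ((1 : Matrix M M ℂ) ⊗ₖ X)‖ ≤ ‖X‖ * ‖X‖ := by
    have e : ((1 : Matrix M M ℂ) ⊗ₖ X)ᴴ * ((1 : Matrix M M ℂ) ⊗ₖ X)
        = (1 : Matrix M M ℂ) ⊗ₖ (Xᴴ * X) := by
      rw [kron_conjTranspose, conjTranspose_one, ← mul_kronecker_mul, one_mul]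
    rw [e]
    have hW : (Xᴴ * X).PosSemidef := posSemidef_conjTranspose_mul_self X
    have h1 : ((1 : Matrix M M ℂ) ⊗ₖ (Xᴴ * X)).PosSemidef := one_kron_posSemidef hW
    have h2 : (((‖Xᴴ * X‖ : ℝ) : ℂ) • 1 - (1 : Matrix M M ℂ) ⊗ₖ (Xᴴ * X)).PosSemidef := by
      have := one_kron_posSemidef (M := M) (le_norm_smul_one hW)
      rwa [kron_sub, one_kron_smul_one] at this
    have := norm_le_of_le_smul_one h1 (norm_nonneg _) h2
    calc ‖(1 : Matrix M M ℂ) ⊗ₖ (Xᴴ * X)‖ ≤ ‖Xᴴ * X‖ := this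
      _ ≤ ‖Xᴴ‖ * ‖X‖ := l2_opNorm_mul _ _
      _ = ‖X‖ * ‖X‖ := by rw [l2_opNorm_conjTranspose]
  rw [l2_opNorm_conjTranspose_mul_self] at hsq
  nlinarith [norm_nonneg ((1 : Matrix M M ℂ) ⊗ₖ X), norm_nonneg X]

/-- `BᴴB ≤ ‖B‖²•1` for rectangular `B`. -/
lemma conjTranspose_mul_self_le {P : Type*} [Fintype P]
    (B : Matrix P N ℂ) : (((‖B‖ ^ 2 : ℝ) : ℂ) • 1 - Bᴴ * B).PosSemidef := by
  have hH : (((‖B‖ ^ 2 : ℝ) : ℂ) • 1 - Bᴴ * B).IsHermitian :=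
    (real_smul_isHermitian Matrix.isHermitian_one _).sub
      (posSemidef_conjTranspose_mul_self B).isHermitian
  refine posSemidef_of_quad hH fun x => ?_
  have e1 : star x ⬝ᵥ ((((‖B‖ ^ 2 : ℝ) : ℂ) • 1 - Bᴴ * B) *ᵥ x)
      = ((‖B‖ ^ 2 : ℝ) : ℂ) * (star x ⬝ᵥ x) - star x ⬝ᵥ ((Bᴴ * B) *ᵥ x) := by
    rw [sub_mulVec, dotProduct_sub, smul_mulVec, one_mulVec, dotProduct_smul]
    simp
  have e2 : star x ⬝ᵥ ((Bᴴ * B) *ᵥ x) = (‖ev (B *ᵥ x)‖ : ℂ) ^ 2 := by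
    rw [← mulVec_mulVec, dotProduct_mulVec, ← star_mulVec, dot_self_ev]
  rw [e1, e2, dot_self_ev]
  have hq : ‖ev (B *ᵥ x)‖ ≤ ‖B‖ * ‖ev x‖ := norm_mulVec_le B x
  simp only [← Complex.ofReal_pow, Complex.sub_re, Complex.mul_re, Complex.ofReal_re,
    Complex.ofReal_im, zero_mul, sub_zero]
  nlinarith [norm_nonneg (ev (B *ᵥ x)), norm_nonneg (ev x), norm_nonneg B]

/-- If `A` is PD and `1 - A` PSD then `A⁻¹ - 1` is PSD. -/
lemma inv_sub_one_posSemidef {A : Matrix N N ℂ} (hA : A.PosDef)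
    (h : ((1 : Matrix N N ℂ) - A).PosSemidef) : (A⁻¹ - 1).PosSemidef := by
  have hAdet : IsUnit A.det := hA.det_pos.ne'.isUnit
  open scoped MatrixOrder in set R := CFC.sqrt A⁻¹ with hR
  have hR2 : R * R = A⁻¹ := by
    open scoped MatrixOrder in exact CFC.sqrt_mul_sqrt_self A⁻¹ hA.posSemidef.inv.nonneg
  have hRH : Rᴴ = R := by
    open scoped MatrixOrder in exact (CFC.sqrt_nonneg A⁻¹).posSemidef.isHermitian.eq
  have hRdet : IsUnit R.det := by
    have : R.det * R.det = A⁻¹.det := by rw [← det_mul, hR2]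
    have hinv : IsUnit A⁻¹.det := by
      rw [det_nonsing_inv]
      exact hAdet.ringInverse
    rw [← this] at hinv
    exact isUnit_of_mul_isUnit_left hinv
  have hRAR : R * A * R = 1 := by
    have hAeq : A = R⁻¹ * R⁻¹ := by
      rw [← Matrix.mul_inv_rev, hR2, Matrix.nonsing_inv_nonsing_inv _ hAdet]
    rw [hAeq, ← mul_assoc, mul_assoc (R * R⁻¹), Matrix.mul_nonsing_inv _ hRdet,
      Matrix.nonsing_inv_mul _ hRdet, one_mul]
  have key : Rᴴ * ((1 : Matrix N N ℂ) - A) * R = A⁻¹ - 1 := by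
    rw [hRH, mul_sub, sub_mul, mul_one, hR2, hRAR]
  rw [← key]
  exact h.conjTranspose_mul_mul_same R

/-- If `A` is PD and `A - 1` PSD then `1 - A⁻¹` is PSD. -/
lemma one_sub_inv_posSemidef {A : Matrix N N ℂ} (hA : A.PosDef)
    (h : (A - (1 : Matrix N N ℂ)).PosSemidef) : ((1 : Matrix N N ℂ) - A⁻¹).PosSemidef := by
  have hAdet : IsUnit A.det := hA.det_pos.ne'.isUnit
  open scoped MatrixOrder in set R := CFC.sqrt A⁻¹ with hR
  have hR2 : R * R = A⁻¹ := by
    open scoped MatrixOrder in exact CFC.sqrt_mul_sqrt_self A⁻¹ hA.posSemidef.inv.nonneg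
  have hRH : Rᴴ = R := by
    open scoped MatrixOrder in exact (CFC.sqrt_nonneg A⁻¹).posSemidef.isHermitian.eq
  have hRdet : IsUnit R.det := by
    have : R.det * R.det = A⁻¹.det := by rw [← det_mul, hR2]
    have hinv : IsUnit A⁻¹.det := by
      rw [det_nonsing_inv]
      exact hAdet.ringInverse
    rw [← this] at hinv
    exact isUnit_of_mul_isUnit_left hinv
  have hRAR : R * A * R = 1 := by
    have hAeq : A = R⁻¹ * R⁻¹ := by
      rw [← Matrix.mul_inv_rev, hR2, Matrix.nonsing_inv_nonsing_inv _ hAdet]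
    rw [hAeq, ← mul_assoc, mul_assoc (R * R⁻¹), Matrix.mul_nonsing_inv _ hRdet,
      Matrix.nonsing_inv_mul _ hRdet, one_mul]
  have key : Rᴴ * (A - (1 : Matrix N N ℂ)) * R = 1 - A⁻¹ := by
    rw [hRH, mul_sub, sub_mul, mul_one, hR2, hRAR]
  rw [← key]
  exact h.conjTranspose_mul_mul_same R



lemma isClosed_posSemidef : IsClosed {A : Matrix N N ℂ | A.PosSemidef} := by
  have h1 : IsClosed {A : Matrix N N ℂ | A.IsHermitian} := by
    have hlip : LipschitzWith 1 (fun A : Matrix N N ℂ => Aᴴ) := by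
      refine LipschitzWith.of_dist_le_mul fun A B => ?_
      rw [dist_eq_norm, dist_eq_norm, ← conjTranspose_sub, l2_opNorm_conjTranspose]
      simp
    exact isClosed_eq hlip.continuous continuous_id
  have h2 : ∀ x : N → ℂ, IsClosed {A : Matrix N N ℂ | 0 ≤ star x ⬝ᵥ (A *ᵥ x)} := by
    intro x
    let φ : Matrix N N ℂ →ₗ[ℂ] ℂ :=
      { toFun := fun A => star x ⬝ᵥ (A *ᵥ x)
        map_add' := fun A B => by simp [add_mulVec, dotProduct_add]
        map_smul' := fun c A => by simp [smul_mulVec, dotProduct_smul] }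
    have hφ : Continuous φ := φ.continuous_of_finiteDimensional
    have hset : {A : Matrix N N ℂ | 0 ≤ star x ⬝ᵥ (A *ᵥ x)} = φ ⁻¹' {z : ℂ | 0 ≤ z} := rfl
    rw [hset]
    refine IsClosed.preimage hφ ?_
    have : {z : ℂ | 0 ≤ z} = {z : ℂ | 0 ≤ z.re} ∩ {z : ℂ | (0 : ℝ) = z.im} := by
      ext z
      simp [Complex.nonneg_iff]
    rw [this]
    exact (isClosed_le continuous_const Complex.continuous_re).inter
      (isClosed_eq continuous_const Complex.continuous_im)
  have hset : {A : Matrix N N ℂ | A.PosSemidef}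
      = {A : Matrix N N ℂ | A.IsHermitian} ∩ ⋂ x : N → ℂ, {A | 0 ≤ star x ⬝ᵥ (A *ᵥ x)} := by
    ext A
    simp only [Set.mem_setOf_eq, Set.mem_inter_iff, Set.mem_iInter]
    exact ⟨fun h => ⟨h.1, fun x => h.dotProduct_mulVec_nonneg x⟩,
      fun h => PosSemidef.of_dotProduct_mulVec_nonneg h.1 fun x => h.2 x⟩
  rw [hset]
  exact h1.inter (isClosed_iInter h2)

end Statement1Aux



open Statement1Aux

/-- If `‖B‖ < 1/2` (spectral norm), then there exists a Hermitian positive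
definite `Y` with `(1/2)I ≤ Y ≤ I` satisfying `Y + Bᴴ Ŷ⁻¹ B = I`. -/
theorem statement1 (m n : ℕ) (hm : 0 < m) (hn : 0 < n)
    (B : Matrix (Fin m × Fin n) (Fin n) ℂ) (hB : ‖B‖ < 1 / 2) :
    ∃ Y : Matrix (Fin n) (Fin n) ℂ, Y.PosDef ∧
      (Y - (1 / 2 : ℂ) • 1).PosSemidef ∧
      ((1 : Matrix (Fin n) (Fin n) ℂ) - Y).PosSemidef ∧
      Y + Bᴴ * ((1 : Matrix (Fin m) (Fin m) ℂ) ⊗ₖ Y)⁻¹ * B = 1 := by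
  classical
  have hb0 : (0 : ℝ) ≤ ‖B‖ := norm_nonneg B
  set s : Set (Matrix (Fin n) (Fin n) ℂ) :=
    {Y | (Y - (1 / 2 : ℂ) • 1).PosSemidef ∧ ((1 : Matrix (Fin n) (Fin n) ℂ) - Y).PosSemidef}
    with hs
  -- key facts about elements of s
  have hmem : ∀ Y ∈ s, Y.PosDef ∧ ((2 : ℂ) • 1 - Y⁻¹).PosSemidef ∧ (Y⁻¹).PosSemidef
      ∧ ‖Y⁻¹‖ ≤ 2 := by
    intro Y hY
    obtain ⟨h1, h2⟩ := hY
    have hhalf : ((1 / 2 : ℂ) • (1 : Matrix (Fin n) (Fin n) ℂ)).PosDef := by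
      have := smul_posDef (Matrix.PosDef.one (n := Fin n) (R := ℂ)) (c := 1 / 2) (by norm_num)
      have hc : (((1 / 2 : ℝ)) : ℂ) = (1 / 2 : ℂ) := by norm_num
      rwa [hc] at this
    have hPD : Y.PosDef := by
      have := Matrix.PosDef.posSemidef_add h1 hhalf
      rwa [sub_add_cancel] at this
    have hdet : IsUnit Y.det := hPD.det_pos.ne'.isUnit
    have h2c : ((2 : ℝ) : ℂ) = (2 : ℂ) := by norm_num
    have hA_PD : ((2 : ℂ) • Y).PosDef := by
      have := smul_posDef hPD (c := 2) (by norm_num)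
      rwa [h2c] at this
    have hA1 : ((2 : ℂ) • Y - 1).PosSemidef := by
      have := smul_posSemidef h1 (c := 2) (by norm_num)
      rw [h2c, smul_sub, smul_smul] at this
      norm_num at this
      exact this
    have hoinv := one_sub_inv_posSemidef hA_PD hA1
    haveI : Invertible (2 : ℂ) := invertibleOfNonzero two_ne_zero
    have hAinv : ((2 : ℂ) • Y)⁻¹ = (2 : ℂ)⁻¹ • Y⁻¹ := by
      rw [Matrix.inv_smul (k := (2:ℂ)) (A := Y) hdet, invOf_eq_inv (2:ℂ)]
    have h2' : ((2 : ℂ) • 1 - Y⁻¹).PosSemidef := by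
      have := smul_posSemidef hoinv (c := 2) (by norm_num)
      rw [h2c, smul_sub, hAinv, smul_smul] at this
      norm_num at this
      exact this
    have hinv_psd : (Y⁻¹).PosSemidef := hPD.posSemidef.inv
    have hnorm : ‖Y⁻¹‖ ≤ 2 := by
      have := norm_le_of_le_smul_one hinv_psd (c := 2) (by norm_num) (by rwa [h2c])
      exact this
    exact ⟨hPD, h2', hinv_psd, hnorm⟩
  -- the iteration map
  set F : Matrix (Fin n) (Fin n) ℂ → Matrix (Fin n) (Fin n) ℂ :=
    fun Y => 1 - Bᴴ * ((1 : Matrix (Fin m) (Fin m) ℂ) ⊗ₖ Y⁻¹) * B with hF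
  have hMapsTo : Set.MapsTo F s s := by
    intro Y hY
    obtain ⟨hPD, h2', hinv_psd, -⟩ := hmem Y hY
    constructor
    · -- F Y - ½•1 PSD
      have t1 : (Bᴴ * ((1 : Matrix (Fin m) (Fin m) ℂ) ⊗ₖ ((2 : ℂ) • 1 - Y⁻¹)) * B).PosSemidef :=
        (one_kron_posSemidef h2').conjTranspose_mul_mul_same B
      have t2 : (((2 : ℝ) : ℂ) • (((‖B‖ ^ 2 : ℝ) : ℂ) • 1 - Bᴴ * B)).PosSemidef :=
        smul_posSemidef (conjTranspose_mul_self_le B) (by norm_num)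
      have t3 : ((((1 / 2 - 2 * ‖B‖ ^ 2 : ℝ)) : ℂ) • (1 : Matrix (Fin n) (Fin n) ℂ)).PosSemidef :=
        smul_one_posSemidef (by nlinarith)
      have hsum := (t1.add t2).add t3
      have hid : Bᴴ * ((1 : Matrix (Fin m) (Fin m) ℂ) ⊗ₖ ((2 : ℂ) • 1 - Y⁻¹)) * B
            + ((2 : ℝ) : ℂ) • (((‖B‖ ^ 2 : ℝ) : ℂ) • 1 - Bᴴ * B)
            + (((1 / 2 - 2 * ‖B‖ ^ 2 : ℝ)) : ℂ) • (1 : Matrix (Fin n) (Fin n) ℂ)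
          = F Y - (1 / 2 : ℂ) • 1 := by
        simp only [hF]
        rw [kron_sub, one_kron_smul_one]
        have e : Bᴴ * ((2 : ℂ) • 1 - (1 : Matrix (Fin m) (Fin m) ℂ) ⊗ₖ Y⁻¹) * B
            = (2 : ℂ) • (Bᴴ * B) - Bᴴ * ((1 : Matrix (Fin m) (Fin m) ℂ) ⊗ₖ Y⁻¹) * B := by
          rw [Matrix.mul_sub, Matrix.sub_mul, Matrix.mul_smul, Matrix.mul_one, Matrix.smul_mul]
        rw [e]
        have hd : (((1 / 2 - 2 * ‖B‖ ^ 2 : ℝ)) : ℂ) = 1 / 2 - ((2:ℝ):ℂ) * ((‖B‖ ^ 2 : ℝ) : ℂ) := by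
          push_cast
          ring
        rw [hd]
        module
      rw [← hid]
      exact hsum
    · -- 1 - F Y PSD
      have : (1 : Matrix (Fin n) (Fin n) ℂ) - F Y
          = Bᴴ * ((1 : Matrix (Fin m) (Fin m) ℂ) ⊗ₖ Y⁻¹) * B := by
        simp only [hF, sub_sub_cancel]
      rw [this]
      exact (one_kron_posSemidef hinv_psd).conjTranspose_mul_mul_same B
  -- contraction estimate
  have hcontr_est : ∀ Y ∈ s, ∀ Y' ∈ s, ‖F Y - F Y'‖ ≤ 4 * ‖B‖ ^ 2 * ‖Y - Y'‖ := by
    intro Y hY Y' hY'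
    obtain ⟨hPD, -, -, hn1⟩ := hmem Y hY
    obtain ⟨hPD', -, -, hn2⟩ := hmem Y' hY'
    have hdet : IsUnit Y.det := hPD.det_pos.ne'.isUnit
    have hdet' : IsUnit Y'.det := hPD'.det_pos.ne'.isUnit
    have hdiff : F Y - F Y' = Bᴴ * ((1 : Matrix (Fin m) (Fin m) ℂ) ⊗ₖ (Y'⁻¹ - Y⁻¹)) * B := by
      simp only [hF]
      rw [kron_sub, Matrix.mul_sub, Matrix.sub_mul]
      abel
    have hres : Y'⁻¹ * (Y - Y') * Y⁻¹ = Y'⁻¹ - Y⁻¹ := by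
      rw [mul_sub, sub_mul, mul_assoc, Matrix.mul_nonsing_inv _ hdet, mul_one,
        Matrix.nonsing_inv_mul _ hdet', one_mul]
    have n0 : ‖Y'⁻¹ - Y⁻¹‖ ≤ 2 * ‖Y - Y'‖ * 2 := by
      rw [← hres]
      have a1 : ‖Y'⁻¹ * (Y - Y') * Y⁻¹‖ ≤ ‖Y'⁻¹ * (Y - Y')‖ * ‖Y⁻¹‖ := l2_opNorm_mul _ _
      have a2 : ‖Y'⁻¹ * (Y - Y')‖ ≤ ‖Y'⁻¹‖ * ‖Y - Y'‖ := l2_opNorm_mul _ _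
      have hnn : (0 : ℝ) ≤ ‖Y - Y'‖ := norm_nonneg _
      nlinarith [norm_nonneg (Y'⁻¹ * (Y - Y')), norm_nonneg (Y⁻¹), norm_nonneg (Y'⁻¹)]
    have n1 : ‖F Y - F Y'‖
        ≤ ‖B‖ * ‖(1 : Matrix (Fin m) (Fin m) ℂ) ⊗ₖ (Y'⁻¹ - Y⁻¹)‖ * ‖B‖ := by
      rw [hdiff]
      have a1 : ‖Bᴴ * ((1 : Matrix (Fin m) (Fin m) ℂ) ⊗ₖ (Y'⁻¹ - Y⁻¹)) * B‖
          ≤ ‖Bᴴ * ((1 : Matrix (Fin m) (Fin m) ℂ) ⊗ₖ (Y'⁻¹ - Y⁻¹))‖ * ‖B‖ := l2_opNorm_mul _ _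
      have a2 : ‖Bᴴ * ((1 : Matrix (Fin m) (Fin m) ℂ) ⊗ₖ (Y'⁻¹ - Y⁻¹))‖
          ≤ ‖Bᴴ‖ * ‖(1 : Matrix (Fin m) (Fin m) ℂ) ⊗ₖ (Y'⁻¹ - Y⁻¹)‖ := l2_opNorm_mul _ _
      rw [l2_opNorm_conjTranspose] at a2
      nlinarith [norm_nonneg ((1 : Matrix (Fin m) (Fin m) ℂ) ⊗ₖ (Y'⁻¹ - Y⁻¹))]
    have n2 : ‖(1 : Matrix (Fin m) (Fin m) ℂ) ⊗ₖ (Y'⁻¹ - Y⁻¹)‖ ≤ ‖Y'⁻¹ - Y⁻¹‖ :=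
      norm_one_kron_le _
    nlinarith [norm_nonneg (Y - Y'), norm_nonneg ((1 : Matrix (Fin m) (Fin m) ℂ) ⊗ₖ (Y'⁻¹ - Y⁻¹))]
  -- closedness and Banach fixed point
  have hclosed : IsClosed s := by
    have hrepr : s = (fun Y : Matrix (Fin n) (Fin n) ℂ => Y - (1 / 2 : ℂ) • 1) ⁻¹'
          {A : Matrix (Fin n) (Fin n) ℂ | A.PosSemidef}
        ∩ (fun Y : Matrix (Fin n) (Fin n) ℂ => 1 - Y) ⁻¹'
          {A : Matrix (Fin n) (Fin n) ℂ | A.PosSemidef} := rfl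
    rw [hrepr]
    exact (isClosed_posSemidef.preimage (continuous_id.sub continuous_const)).inter
      (isClosed_posSemidef.preimage (continuous_const.sub continuous_id))
  have hone : (1 : Matrix (Fin n) (Fin n) ℂ) ∈ s := by
    constructor
    · have hid : (1 : Matrix (Fin n) (Fin n) ℂ) - (1 / 2 : ℂ) • 1
          = (((1 / 2 : ℝ)) : ℂ) • (1 : Matrix (Fin n) (Fin n) ℂ) := by
        push_cast
        module
      rw [hid]
      exact smul_one_posSemidef (by norm_num)
    · rw [sub_self]
      exact Matrix.PosSemidef.zero
  set K : NNReal := ⟨4 * ‖B‖ ^ 2, by positivity⟩ with hK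
  have hKlt : K < 1 := by
    rw [← NNReal.coe_lt_coe]
    show 4 * ‖B‖ ^ 2 < (1 : ℝ)
    nlinarith
  have hlip : LipschitzWith K (hMapsTo.restrict F s s) := by
    refine LipschitzWith.of_dist_le_mul fun a b => ?_
    have := hcontr_est a.1 a.2 b.1 b.2
    have hKc : ((K : NNReal) : ℝ) = 4 * ‖B‖ ^ 2 := rfl
    simpa [Subtype.dist_eq, dist_eq_norm, hKc] using this
  have hcw : ContractingWith K (hMapsTo.restrict F s s) := ⟨hKlt, hlip⟩
  have hfixmem := ContractingWith.efixedPoint_mem' hclosed.isComplete hMapsTo hcw hone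
    (edist_ne_top _ _)
  have hfixpt := ContractingWith.efixedPoint_isFixedPt' hclosed.isComplete hMapsTo hcw hone
    (edist_ne_top _ _)
  set Y := ContractingWith.efixedPoint' F hclosed.isComplete hMapsTo hcw 1 hone
    (edist_ne_top _ _) with hYdef
  refine ⟨Y, (hmem Y hfixmem).1, hfixmem.1, hfixmem.2, ?_⟩
  rw [Matrix.inv_kronecker, inv_one]
  have heq : F Y = Y := hfixpt
  simp only [hF] at heq
  nth_rewrite 1 [← heq]
  rw [sub_add_cancel]
end

section
/- Let m, n be positive integers and let B be an (mn)×n complex matrix with spectral norm ‖B‖ < 1/2. If Y₁ and Y₂ are n×n Hermitian matrices with (1/2)I ≤ Y₁ ≤ I and (1/2)I ≤ Y₂ ≤ I that both satisfy the equation Y + B* Ŷ^{-1} B = I, then Y₁ = Y₂. -/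
open Matrix
open scoped Matrix.Norms.L2Operator Kronecker ComplexOrder

section Aux

variable {ι : Type*} [Fintype ι] [DecidableEq ι]

private lemma aux_posDef {A : Matrix ι ι ℂ} (h : (A - (1 / 2 : ℂ) • 1).PosSemidef) :
    A.PosDef := by
  have h2 : ((1 / 2 : ℂ) • (1 : Matrix ι ι ℂ)).PosDef := by
    rw [smul_one_eq_diagonal]
    exact Matrix.PosDef.diagonal fun i => by
      simp [Complex.lt_def]
  simpa using Matrix.PosDef.posSemidef_add h h2

private lemma aux_quad_lower {A : Matrix ι ι ℂ} (h : (A - (1 / 2 : ℂ) • 1).PosSemidef)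
    (w : ι → ℂ) :
    (1 / 2) * ‖(WithLp.equiv 2 (ι → ℂ)).symm w‖ ^ 2 ≤
      ‖(WithLp.equiv 2 (ι → ℂ)).symm w‖ * ‖(WithLp.equiv 2 (ι → ℂ)).symm (A *ᵥ w)‖ := by
  have h0 := h.re_dotProduct_nonneg w
  have e1 : (A - (1 / 2 : ℂ) • 1) *ᵥ w = A *ᵥ w - (1 / 2 : ℂ) • w := by
    rw [sub_mulVec, smul_mulVec, one_mulVec]
  rw [e1, dotProduct_sub, dotProduct_smul] at h0
  set u : EuclideanSpace ℂ ι := (WithLp.equiv 2 (ι → ℂ)).symm w with hu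
  set v : EuclideanSpace ℂ ι := (WithLp.equiv 2 (ι → ℂ)).symm (A *ᵥ w) with hv
  have e2 : dotProduct (star w) (A *ᵥ w) = inner (𝕜 := ℂ) u v :=
    (dotProduct_comm _ _).trans rfl
  have e3 : dotProduct (star w) w = inner (𝕜 := ℂ) u u :=
    (dotProduct_comm _ _).trans rfl
  rw [e2, e3] at h0
  have e4 : RCLike.re (inner (𝕜 := ℂ) u u) = ‖u‖ ^ 2 := inner_self_eq_norm_sq u
  have e5 : RCLike.re (inner (𝕜 := ℂ) u v) ≤ ‖u‖ * ‖v‖ :=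
    (RCLike.re_le_norm _).trans (norm_inner_le_norm u v)
  have h0' : 0 ≤ RCLike.re (inner (𝕜 := ℂ) u v) - (1 / 2) * RCLike.re (inner (𝕜 := ℂ) u u) := by
    have : RCLike.re (inner (𝕜 := ℂ) u v - (1 / 2 : ℂ) • inner (𝕜 := ℂ) u u) =
        RCLike.re (inner (𝕜 := ℂ) u v) - (1 / 2) * RCLike.re (inner (𝕜 := ℂ) u u) := by
      simp [smul_eq_mul, Complex.sub_re, Complex.mul_re]
    rw [← this]
    exact h0
  rw [e4] at h0'
  linarith

private lemma aux_inv_norm {A : Matrix ι ι ℂ} (h : (A - (1 / 2 : ℂ) • 1).PosSemidef) :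
    ‖A⁻¹‖ ≤ 2 := by
  have hpd : A.PosDef := aux_posDef h
  have hdet : IsUnit A.det := (Matrix.isUnit_iff_isUnit_det _).mp hpd.isUnit
  have hmul : ∀ x : ι → ℂ, A *ᵥ (A⁻¹ *ᵥ x) = x := fun x => by
    rw [mulVec_mulVec, mul_nonsing_inv _ hdet, one_mulVec]
  rw [Matrix.cstar_norm_def]
  refine ContinuousLinearMap.opNorm_le_bound _ (by norm_num) fun x => ?_
  obtain ⟨v, rfl⟩ : ∃ v : ι → ℂ, (WithLp.equiv 2 (ι → ℂ)).symm v = x :=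
    ⟨WithLp.equiv 2 (ι → ℂ) x, rfl⟩
  rw [show toEuclideanCLM (n := ι) (𝕜 := ℂ) A⁻¹ ((WithLp.equiv 2 (ι → ℂ)).symm v) =
      (WithLp.equiv 2 (ι → ℂ)).symm (toLin' A⁻¹ v) from rfl, toLin'_apply]
  have key := aux_quad_lower h (A⁻¹ *ᵥ v)
  rw [hmul v] at key
  have ha : (0 : ℝ) ≤ ‖(WithLp.equiv 2 (ι → ℂ)).symm (A⁻¹ *ᵥ v)‖ := norm_nonneg _
  have hb : (0 : ℝ) ≤ ‖(WithLp.equiv 2 (ι → ℂ)).symm v‖ := norm_nonneg _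
  nlinarith [key, ha, hb]

private lemma aux_kron_norm (m : ℕ) (Z : Matrix ι ι ℂ) :
    ‖(1 : Matrix (Fin m) (Fin m) ℂ) ⊗ₖ Z‖ ≤ ‖Z‖ := by
  rw [Matrix.cstar_norm_def]
  refine ContinuousLinearMap.opNorm_le_bound _ (norm_nonneg _) fun x => ?_
  obtain ⟨v, rfl⟩ : ∃ v : Fin m × ι → ℂ, (WithLp.equiv 2 (Fin m × ι → ℂ)).symm v = x :=
    ⟨WithLp.equiv 2 _ x, rfl⟩
  rw [show toEuclideanCLM (n := Fin m × ι) (𝕜 := ℂ) ((1 : Matrix (Fin m) (Fin m) ℂ) ⊗ₖ Z) ((WithLp.equiv 2 (Fin m × ι → ℂ)).symm v) =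
      (WithLp.equiv 2 (Fin m × ι → ℂ)).symm (toLin' ((1 : Matrix (Fin m) (Fin m) ℂ) ⊗ₖ Z) v) from rfl, toLin'_apply]
  have hv : ∀ p : Fin m × ι, (((1 : Matrix (Fin m) (Fin m) ℂ) ⊗ₖ Z) *ᵥ v) p =
      (Z *ᵥ fun l => v (p.1, l)) p.2 := by
    rintro ⟨i, j⟩
    simp [mulVec, dotProduct, Fintype.sum_prod_type, kroneckerMap_apply, one_apply,
      ite_mul, Finset.sum_ite_eq, Finset.mem_univ]
  have per : ∀ i : Fin m, ∑ j, ‖(Z *ᵥ fun l => v (i, l)) j‖ ^ 2 ≤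
      ‖Z‖ ^ 2 * ∑ l, ‖v (i, l)‖ ^ 2 := by
    intro i
    have h1 := Z.l2_opNorm_mulVec ((WithLp.equiv 2 (ι → ℂ)).symm fun l => v (i, l))
    have h2 := pow_le_pow_left₀ (norm_nonneg _) h1 2
    rw [mul_pow] at h2
    rw [EuclideanSpace.norm_eq, EuclideanSpace.norm_eq] at h2
    rw [Real.sq_sqrt (Finset.sum_nonneg fun _ _ => sq_nonneg _),
      Real.sq_sqrt (Finset.sum_nonneg fun _ _ => sq_nonneg _)] at h2
    simpa using h2
  rw [EuclideanSpace.norm_eq, EuclideanSpace.norm_eq]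
  have hZ : (0 : ℝ) ≤ ‖Z‖ := norm_nonneg _
  rw [show ‖Z‖ * Real.sqrt (∑ p : Fin m × ι, ‖((WithLp.equiv 2 (Fin m × ι → ℂ)).symm v : EuclideanSpace ℂ (Fin m × ι)) p‖ ^ 2) =
      Real.sqrt (‖Z‖ ^ 2 * ∑ p : Fin m × ι, ‖((WithLp.equiv 2 (Fin m × ι → ℂ)).symm v : EuclideanSpace ℂ (Fin m × ι)) p‖ ^ 2) by
    rw [Real.sqrt_mul (sq_nonneg _), Real.sqrt_sq hZ]]
  apply Real.sqrt_le_sqrt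
  calc ∑ p : Fin m × ι, ‖((WithLp.equiv 2 (Fin m × ι → ℂ)).symm
        (((1 : Matrix (Fin m) (Fin m) ℂ) ⊗ₖ Z) *ᵥ v) : EuclideanSpace ℂ (Fin m × ι)) p‖ ^ 2
      = ∑ i : Fin m, ∑ j : ι, ‖(Z *ᵥ fun l => v (i, l)) j‖ ^ 2 := by
        simp only [WithLp.equiv_symm_apply, WithLp.ofLp_toLp]
        rw [Fintype.sum_prod_type]
        exact Finset.sum_congr rfl fun i _ => Finset.sum_congr rfl fun j _ => by
          rw [hv (i, j)]
    _ ≤ ∑ i : Fin m, ‖Z‖ ^ 2 * ∑ l, ‖v (i, l)‖ ^ 2 := Finset.sum_le_sum fun i _ => per i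
    _ = ‖Z‖ ^ 2 * ∑ p : Fin m × ι, ‖((WithLp.equiv 2 (Fin m × ι → ℂ)).symm v : EuclideanSpace ℂ (Fin m × ι)) p‖ ^ 2 := by
        simp only [WithLp.equiv_symm_apply, WithLp.ofLp_toLp]
        rw [Fintype.sum_prod_type, Finset.mul_sum]

end Aux

/-- If `‖B‖ < 1/2` (spectral norm), then the equation `Y + Bᴴ Ŷ⁻¹ B = I` has at
most one Hermitian solution `Y` with `(1/2)I ≤ Y ≤ I`. -/
theorem statement2 (m n : ℕ) (hm : 0 < m) (hn : 0 < n)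
    (B : Matrix (Fin m × Fin n) (Fin n) ℂ) (hB : ‖B‖ < 1 / 2)
    (Y₁ Y₂ : Matrix (Fin n) (Fin n) ℂ)
    (hY₁ : Y₁.IsHermitian) (hY₂ : Y₂.IsHermitian)
    (hY₁l : (Y₁ - (1 / 2 : ℂ) • 1).PosSemidef)
    (hY₁u : ((1 : Matrix (Fin n) (Fin n) ℂ) - Y₁).PosSemidef)
    (hY₂l : (Y₂ - (1 / 2 : ℂ) • 1).PosSemidef)
    (hY₂u : ((1 : Matrix (Fin n) (Fin n) ℂ) - Y₂).PosSemidef)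
    (hsol₁ : Y₁ + Bᴴ * ((1 : Matrix (Fin m) (Fin m) ℂ) ⊗ₖ Y₁)⁻¹ * B = 1)
    (hsol₂ : Y₂ + Bᴴ * ((1 : Matrix (Fin m) (Fin m) ℂ) ⊗ₖ Y₂)⁻¹ * B = 1) :
    Y₁ = Y₂ := by
  have hpd₁ : Y₁.PosDef := aux_posDef hY₁l
  have hpd₂ : Y₂.PosDef := aux_posDef hY₂l
  have hd₁ : IsUnit Y₁.det := (Matrix.isUnit_iff_isUnit_det _).mp hpd₁.isUnit
  have hd₂ : IsUnit Y₂.det := (Matrix.isUnit_iff_isUnit_det _).mp hpd₂.isUnit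
  have hinv₁ : ((1 : Matrix (Fin m) (Fin m) ℂ) ⊗ₖ Y₁)⁻¹ =
      (1 : Matrix (Fin m) (Fin m) ℂ) ⊗ₖ Y₁⁻¹ := by rw [inv_kronecker, inv_one]
  have hinv₂ : ((1 : Matrix (Fin m) (Fin m) ℂ) ⊗ₖ Y₂)⁻¹ =
      (1 : Matrix (Fin m) (Fin m) ℂ) ⊗ₖ Y₂⁻¹ := by rw [inv_kronecker, inv_one]
  set W₁ : Matrix (Fin m × Fin n) (Fin m × Fin n) ℂ := (1 : Matrix (Fin m) (Fin m) ℂ) ⊗ₖ Y₁⁻¹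
    with hW₁def
  set W₂ : Matrix (Fin m × Fin n) (Fin m × Fin n) ℂ := (1 : Matrix (Fin m) (Fin m) ℂ) ⊗ₖ Y₂⁻¹
    with hW₂def
  have hW₁ : W₁ * ((1 : Matrix (Fin m) (Fin m) ℂ) ⊗ₖ Y₁) = 1 := by
    rw [hW₁def, ← mul_kronecker_mul, one_mul, nonsing_inv_mul _ hd₁, one_kronecker_one]
  have hW₂ : ((1 : Matrix (Fin m) (Fin m) ℂ) ⊗ₖ Y₂) * W₂ = 1 := by
    rw [hW₂def, ← mul_kronecker_mul, one_mul, mul_nonsing_inv _ hd₂, one_kronecker_one]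
  have hdiff : (1 : Matrix (Fin m) (Fin m) ℂ) ⊗ₖ (Y₁ - Y₂) =
      (1 : Matrix (Fin m) (Fin m) ℂ) ⊗ₖ Y₁ - (1 : Matrix (Fin m) (Fin m) ℂ) ⊗ₖ Y₂ := by
    ext p q
    simp [kroneckerMap_apply, Matrix.sub_apply, mul_sub]
  have emid : W₁ * ((1 : Matrix (Fin m) (Fin m) ℂ) ⊗ₖ (Y₁ - Y₂)) * W₂ = W₂ - W₁ := by
    rw [hdiff, mul_sub, sub_mul, hW₁, one_mul, mul_assoc, hW₂, mul_one]
  have hs₁ : Bᴴ * W₁ * B = 1 - Y₁ := by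
    rw [← hinv₁]; exact eq_sub_of_add_eq' hsol₁
  have hs₂ : Bᴴ * W₂ * B = 1 - Y₂ := by
    rw [← hinv₂]; exact eq_sub_of_add_eq' hsol₂
  have hkey : Y₁ - Y₂ = Bᴴ * (W₁ * ((1 : Matrix (Fin m) (Fin m) ℂ) ⊗ₖ (Y₁ - Y₂)) * W₂) * B := by
    rw [emid, Matrix.mul_sub, Matrix.sub_mul, hs₁, hs₂]
    abel
  have hw₁ : ‖W₁‖ ≤ 2 := (aux_kron_norm m Y₁⁻¹).trans (aux_inv_norm hY₁l)
  have hw₂ : ‖W₂‖ ≤ 2 := (aux_kron_norm m Y₂⁻¹).trans (aux_inv_norm hY₂l)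
  have hk : ‖(1 : Matrix (Fin m) (Fin m) ℂ) ⊗ₖ (Y₁ - Y₂)‖ ≤ ‖Y₁ - Y₂‖ :=
    aux_kron_norm m (Y₁ - Y₂)
  set K : Matrix (Fin m × Fin n) (Fin m × Fin n) ℂ :=
    (1 : Matrix (Fin m) (Fin m) ℂ) ⊗ₖ (Y₁ - Y₂) with hKdef
  have hmid : ‖W₁ * K * W₂‖ ≤ 2 * ‖Y₁ - Y₂‖ * 2 := by
    calc ‖W₁ * K * W₂‖ ≤ ‖W₁ * K‖ * ‖W₂‖ := l2_opNorm_mul _ _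
      _ ≤ (‖W₁‖ * ‖K‖) * ‖W₂‖ :=
          mul_le_mul_of_nonneg_right (l2_opNorm_mul _ _) (norm_nonneg _)
      _ ≤ 2 * ‖Y₁ - Y₂‖ * 2 := by
          have h1 : ‖W₁‖ * ‖K‖ ≤ 2 * ‖Y₁ - Y₂‖ :=
            mul_le_mul hw₁ hk (norm_nonneg _) (by norm_num)
          exact mul_le_mul h1 hw₂ (norm_nonneg _) (by positivity)
  have hfinal : ‖Y₁ - Y₂‖ ≤ ‖B‖ * (2 * ‖Y₁ - Y₂‖ * 2) * ‖B‖ := by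
    calc ‖Y₁ - Y₂‖ = ‖Bᴴ * (W₁ * K * W₂) * B‖ := by rw [← hkey]
      _ ≤ ‖Bᴴ * (W₁ * K * W₂)‖ * ‖B‖ := l2_opNorm_mul _ _
      _ ≤ (‖Bᴴ‖ * ‖W₁ * K * W₂‖) * ‖B‖ :=
          mul_le_mul_of_nonneg_right (l2_opNorm_mul _ _) (norm_nonneg _)
      _ = (‖B‖ * ‖W₁ * K * W₂‖) * ‖B‖ := by rw [l2_opNorm_conjTranspose]
      _ ≤ (‖B‖ * (2 * ‖Y₁ - Y₂‖ * 2)) * ‖B‖ :=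
          mul_le_mul_of_nonneg_right
            (mul_le_mul_of_nonneg_left hmid (norm_nonneg _)) (norm_nonneg _)
  have hz : ‖Y₁ - Y₂‖ = 0 := by
    by_contra hne
    have hzpos : 0 < ‖Y₁ - Y₂‖ := lt_of_le_of_ne (norm_nonneg _) (Ne.symm hne)
    have hb0 : (0 : ℝ) ≤ ‖B‖ := norm_nonneg _
    have ha2 : ‖B‖ ^ 2 < 1 / 4 := by nlinarith
    nlinarith [hfinal, mul_lt_mul_of_pos_right ha2 hzpos]
  have : Y₁ - Y₂ = 0 := by
    rwa [norm_eq_zero] at hz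
  exact sub_eq_zero.mp this
end

section
/- Let m, n be positive integers and let B be an (mn)×n complex matrix with spectral norm ‖B‖ < 1/2. Then the equation Y + B* Ŷ^{-1} B = I has a maximal Hermitian positive definite solution Y_L (i.e. Y_L is a Hermitian positive definite solution and Y ≤ Y_L for every Hermitian positive definite solution Y) satisfying (1/2)I ≤ Y_L ≤ I. Moreover, every Hermitian positive definite solution Y with Y ≠ Y_L satisfies ‖Y^{-1}‖ > 2. -/
open Matrix
open scoped Matrix.Norms.L2Operator Kronecker ComplexOrder

set_option linter.unusedSectionVars false
set_option maxHeartbeats 1600000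

namespace S3

variable {n : Type*} [Fintype n] [DecidableEq n] {m : Type*} [Fintype m] [DecidableEq m]

lemma star_quad {A : Matrix n n ℂ} (hA : A.IsHermitian) (x : n → ℂ) :
    star (star x ⬝ᵥ A *ᵥ x) = star x ⬝ᵥ A *ᵥ x := by
  calc star (star x ⬝ᵥ A *ᵥ x) = star (A *ᵥ x) ⬝ᵥ x := by
        rw [← star_dotProduct]
    _ = star x ⬝ᵥ A *ᵥ x := by
        rw [star_mulVec, hA.eq, dotProduct_mulVec]

lemma im_quad {A : Matrix n n ℂ} (hA : A.IsHermitian) (x : n → ℂ) :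
    (star x ⬝ᵥ A *ᵥ x).im = 0 := by
  have h2 := star_quad hA x
  rw [Complex.ext_iff] at h2
  simp only [Complex.star_def, Complex.conj_re, Complex.conj_im] at h2
  linarith [h2.2]

lemma posSemidef_of_re {A : Matrix n n ℂ} (hA : A.IsHermitian)
    (h : ∀ x : n → ℂ, 0 ≤ Complex.re (star x ⬝ᵥ A *ᵥ x)) : A.PosSemidef := by
  refine .of_dotProduct_mulVec_nonneg hA fun x => ?_
  rw [Complex.le_def]
  exact ⟨by simpa using h x, by simpa using (im_quad hA x).symm⟩

lemma quad_conj (A : Matrix n n ℂ) (B : Matrix n m ℂ) (x : m → ℂ) :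
    star x ⬝ᵥ (Bᴴ * A * B) *ᵥ x = star (B *ᵥ x) ⬝ᵥ A *ᵥ (B *ᵥ x) := by
  simp only [star_mulVec, dotProduct_mulVec, vecMul_vecMul, Matrix.mul_assoc]

lemma kron_mulVec (Y : Matrix n n ℂ) (x : m × n → ℂ) (i : m) (j : n) :
    (((1 : Matrix m m ℂ) ⊗ₖ Y) *ᵥ x) (i, j) = (Y *ᵥ fun l => x (i, l)) j := by
  simp [mulVec, dotProduct, Fintype.sum_prod_type, kroneckerMap_apply, one_apply,
    Finset.sum_ite_eq, ite_mul]

lemma kron_quad (Y : Matrix n n ℂ) (x : m × n → ℂ) :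
    star x ⬝ᵥ ((1 : Matrix m m ℂ) ⊗ₖ Y) *ᵥ x
      = ∑ i : m, star (fun l => x (i, l)) ⬝ᵥ Y *ᵥ (fun l => x (i, l)) := by
  rw [dotProduct]
  rw [Fintype.sum_prod_type]
  congr 1; ext i
  rw [dotProduct]
  congr 1; ext j
  rw [kron_mulVec]
  rfl

lemma kron_hermitian {Y : Matrix n n ℂ} (hY : Y.IsHermitian) :
    (((1 : Matrix m m ℂ) ⊗ₖ Y)).IsHermitian := by
  have hy : ∀ j l, star (Y l j) = Y j l := fun j l => by
    conv_rhs => rw [← hY.eq]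
    simp [conjTranspose_apply]
  ext ⟨i, j⟩ ⟨k, l⟩
  show star ((1 : Matrix m m ℂ) k i * Y l j) = (1 : Matrix m m ℂ) i k * Y j l
  rw [star_mul']
  by_cases h : i = k
  · subst h
    simp [hy]
  · rw [one_apply_ne h, one_apply_ne (Ne.symm h)]
    simp

lemma kron_posSemidef {Y : Matrix n n ℂ} (hY : Y.PosSemidef) :
    (((1 : Matrix m m ℂ) ⊗ₖ Y)).PosSemidef := by
  refine PosSemidef.of_dotProduct_mulVec_nonneg (kron_hermitian hY.1) fun x => ?_
  rw [kron_quad]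
  exact Finset.sum_nonneg fun i _ => hY.dotProduct_mulVec_nonneg _

lemma isUnit_det_of_mul_self {T W : Matrix n n ℂ} (h : T * T = W) (hW : IsUnit W.det) :
    IsUnit T.det := by
  have : T.det * T.det = W.det := by rw [← det_mul, h]
  exact isUnit_of_mul_isUnit_left (this ▸ hW)

lemma pd_isUnit_det {A : Matrix n n ℂ} (hA : A.PosDef) : IsUnit A.det :=
  isUnit_iff_ne_zero.mpr (ne_of_gt hA.det_pos)

/-- conjugation by an invertible matrix preserves positive definiteness -/
lemma posDef_conj {A T : Matrix n n ℂ} (hA : A.PosDef) (hT : T.IsHermitian)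
    (hTd : IsUnit T.det) : (T * A * T).PosDef := by
  have herm : (T * A * T).IsHermitian := by
    have : (T * A * T)ᴴ = Tᴴ * Aᴴ * Tᴴ := by
      rw [conjTranspose_mul, conjTranspose_mul, Matrix.mul_assoc]
    rw [IsHermitian, this, hT.eq, hA.1.eq]
  refine PosDef.of_dotProduct_mulVec_pos herm fun x hx => ?_
  have hTx : T *ᵥ x ≠ 0 := by
    intro h0
    apply hx
    have : (T⁻¹ * T) *ᵥ x = T⁻¹ *ᵥ (T *ᵥ x) := (mulVec_mulVec x T⁻¹ T).symm
    rw [nonsing_inv_mul T hTd, one_mulVec, h0, mulVec_zero] at this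
    exact this
  have := hA.dotProduct_mulVec_pos hTx
  calc (0:ℂ) < star (T *ᵥ x) ⬝ᵥ A *ᵥ (T *ᵥ x) := this
    _ = star x ⬝ᵥ (T * A * T) *ᵥ x := by
        conv_rhs => rw [show T * A * T = Tᴴ * A * T by rw [hT.eq]]
        rw [S3.quad_conj]

open scoped MatrixOrder in
noncomputable def psqrt (A : Matrix n n ℂ) : Matrix n n ℂ := CFC.sqrt A

open scoped MatrixOrder in
lemma psd_sqrt_mul_self {A : Matrix n n ℂ} (hA : A.PosSemidef) : psqrt A * psqrt A = A :=
  CFC.sqrt_mul_sqrt_self A hA.nonneg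

open scoped MatrixOrder in
lemma psd_sqrt_herm {A : Matrix n n ℂ} (hA : A.PosSemidef) : (psqrt A).IsHermitian :=
  (CFC.sqrt_nonneg A).posSemidef.1

/-- Loewner anti-monotonicity of matrix inverse on positive definite matrices -/
lemma inv_anti {A B : Matrix n n ℂ} (hA : A.PosDef) (hB : B.PosDef)
    (hBA : (B - A).PosSemidef) : (A⁻¹ - B⁻¹).PosSemidef := by
  have hBd := pd_isUnit_det hB
  set T := psqrt B⁻¹ with hTdef
  have hT2 : T * T = B⁻¹ := psd_sqrt_mul_self (hB.inv).posSemidef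
  have hTH : T.IsHermitian := psd_sqrt_herm (hB.inv).posSemidef
  have hTd : IsUnit T.det := isUnit_det_of_mul_self hT2 (pd_isUnit_det hB.inv)
  have hTinv : T * T⁻¹ = 1 := mul_nonsing_inv T hTd
  have hinvT : T⁻¹ * T = 1 := nonsing_inv_mul T hTd
  have hBeq : B = T⁻¹ * T⁻¹ := by
    rw [← Matrix.mul_inv_rev, hT2, nonsing_inv_nonsing_inv B hBd]
  have hTBT : T * B * T = 1 := by
    rw [hBeq, Matrix.mul_assoc, Matrix.mul_assoc, hinvT, Matrix.mul_one, hTinv]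
  set C := T * A * T with hCdef
  have hC : C.PosDef := posDef_conj hA hTH hTd
  have hCd := pd_isUnit_det hC
  have hC1 : ((1 : Matrix n n ℂ) - C).PosSemidef := by
    have : (1 : Matrix n n ℂ) - C = Tᴴ * (B - A) * T := by
      rw [hTH.eq, Matrix.mul_sub, Matrix.sub_mul, hTBT]
    rw [this]
    exact hBA.conjTranspose_mul_mul_same T
  set D := psqrt C⁻¹ with hDdef
  have hD2 : D * D = C⁻¹ := psd_sqrt_mul_self (hC.inv).posSemidef
  have hDH : D.IsHermitian := psd_sqrt_herm (hC.inv).posSemidef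
  have hDd : IsUnit D.det := isUnit_det_of_mul_self hD2 (pd_isUnit_det hC.inv)
  have hCeq : C = D⁻¹ * D⁻¹ := by
    rw [← Matrix.mul_inv_rev, hD2, nonsing_inv_nonsing_inv C hCd]
  have hDCD : D * C * D = 1 := by
    rw [hCeq, Matrix.mul_assoc, Matrix.mul_assoc, nonsing_inv_mul D hDd, Matrix.mul_one,
      mul_nonsing_inv D hDd]
  have key : C⁻¹ - 1 = Dᴴ * ((1 : Matrix n n ℂ) - C) * D := by
    rw [hDH.eq, Matrix.mul_sub, Matrix.mul_one, Matrix.sub_mul, hD2, hDCD]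
  have hkey : (C⁻¹ - (1 : Matrix n n ℂ)).PosSemidef := by
    rw [key]; exact hC1.conjTranspose_mul_mul_same D
  have hCinv : C⁻¹ = T⁻¹ * A⁻¹ * T⁻¹ := by
    rw [hCdef, Matrix.mul_inv_rev, Matrix.mul_inv_rev, Matrix.mul_assoc]
  have final : A⁻¹ - B⁻¹ = Tᴴ * (C⁻¹ - 1) * T := by
    rw [hTH.eq, Matrix.mul_sub, Matrix.mul_one, Matrix.sub_mul, hT2, hCinv]
    congr 1
    rw [← Matrix.mul_assoc, ← Matrix.mul_assoc, hTinv, Matrix.one_mul, Matrix.mul_assoc, hinvT,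
      Matrix.mul_one]
  rw [final]
  exact hkey.conjTranspose_mul_mul_same T

noncomputable def ee (v : n → ℂ) : EuclideanSpace ℂ n := (EuclideanSpace.equiv n ℂ).symm v

lemma inner_ee (v w : n → ℂ) : (inner ℂ (ee v) (ee w) : ℂ) = star v ⬝ᵥ w := by
  rw [EuclideanSpace.inner_eq_star_dotProduct]
  exact dotProduct_comm _ _

lemma norm_ee_sq (v : n → ℂ) : ‖ee v‖ ^ 2 = Complex.re (star v ⬝ᵥ v) := by
  rw [← inner_ee v v]
  exact (inner_self_eq_norm_sq (𝕜 := ℂ) _).symm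

lemma re_dot_le (v w : n → ℂ) : Complex.re (star v ⬝ᵥ w) ≤ ‖ee v‖ * ‖ee w‖ := by
  rw [← inner_ee v w]
  exact le_trans (Complex.re_le_norm _) (norm_inner_le_norm (𝕜 := ℂ) _ _)

lemma opNorm_le (A : Matrix m n ℂ) {c : ℝ} (hc : 0 ≤ c)
    (h : ∀ x : n → ℂ, ‖ee (A *ᵥ x)‖ ≤ c * ‖ee x‖) : ‖A‖ ≤ c := by
  rw [Matrix.l2_opNorm_def]
  refine ContinuousLinearMap.opNorm_le_bound _ hc fun x => ?_
  have : ((Matrix.toEuclideanLin.trans LinearMap.toContinuousLinearMap) A) x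
      = ee (A *ᵥ (WithLp.equiv 2 (n → ℂ)) x) := by
    simp [Matrix.toEuclideanLin_apply, ee]
  rw [this]
  simpa [ee] using h ((WithLp.equiv 2 (n → ℂ)) x)

lemma mulVec_norm_le (A : Matrix m n ℂ) (x : n → ℂ) : ‖ee (A *ᵥ x)‖ ≤ ‖A‖ * ‖ee x‖ := by
  simpa [ee] using Matrix.l2_opNorm_mulVec A ((EuclideanSpace.equiv n ℂ).symm x)

lemma smul_one_posDef {c : ℝ} (hc : 0 < c) : (((c : ℂ)) • (1 : Matrix n n ℂ)).PosDef := by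
  refine PosDef.of_dotProduct_mulVec_pos ?_ fun x hx => ?_
  · unfold Matrix.IsHermitian
    rw [conjTranspose_smul, conjTranspose_one]
    simp [Complex.conj_ofReal]
  · have h1 := (Matrix.PosDef.one (n := n) (R := ℂ)).dotProduct_mulVec_pos hx
    rw [smul_mulVec, dotProduct_smul]
    have : (0 : ℂ) < (c : ℂ) := by exact_mod_cast hc
    exact mul_pos this h1

lemma smul_one_posSemidef {c : ℝ} (hc : 0 ≤ c) :
    (((c : ℂ)) • (1 : Matrix n n ℂ)).PosSemidef := by
  rcases eq_or_lt_of_le hc with h | h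
  · rw [← h]
    simpa using Matrix.PosSemidef.zero (n := n) (R := ℂ)
  · exact (smul_one_posDef h).posSemidef

lemma re_quad_smul (c : ℝ) (x : n → ℂ) :
    Complex.re (star x ⬝ᵥ (((c : ℂ)) • (1 : Matrix n n ℂ)) *ᵥ x) = c * ‖ee x‖ ^ 2 := by
  rw [norm_ee_sq, smul_mulVec, dotProduct_smul, one_mulVec]
  simp

/-- a PSD matrix dominated by `c • 1` has norm at most `c` -/
lemma psd_norm_le {A : Matrix n n ℂ} (hA : A.PosSemidef) {c : ℝ} (hc : 0 ≤ c)
    (h : (((c : ℂ)) • (1 : Matrix n n ℂ) - A).PosSemidef) : ‖A‖ ≤ c := by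
  set R := psqrt A with hR
  have hR2 : R * R = A := psd_sqrt_mul_self hA
  have hRH : R.IsHermitian := psd_sqrt_herm hA
  have quad_le : ∀ y : n → ℂ, Complex.re (star y ⬝ᵥ A *ᵥ y) ≤ c * ‖ee y‖ ^ 2 := by
    intro y
    have h0 : 0 ≤ Complex.re (star y ⬝ᵥ (((c : ℂ)) • (1 : Matrix n n ℂ) - A) *ᵥ y) := by
      have := h.dotProduct_mulVec_nonneg y
      rw [Complex.le_def] at this
      simpa using this.1
    have heq : Complex.re (star y ⬝ᵥ (((c : ℂ)) • (1 : Matrix n n ℂ) - A) *ᵥ y)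
        = c * ‖ee y‖ ^ 2 - Complex.re (star y ⬝ᵥ A *ᵥ y) := by
      rw [Matrix.sub_mulVec, dotProduct_sub, Complex.sub_re, re_quad_smul]
    linarith [heq ▸ h0]
  refine opNorm_le A hc fun x => ?_
  have q1 : ‖ee (A *ᵥ x)‖ ^ 2 = Complex.re (star x ⬝ᵥ (A * A) *ᵥ x) := by
    rw [norm_ee_sq]
    have := quad_conj (1 : Matrix n n ℂ) A x
    rw [Matrix.mul_one, hA.1.eq, one_mulVec] at this
    rw [← this]
  have q2 : star x ⬝ᵥ (A * A) *ᵥ x = star (R *ᵥ x) ⬝ᵥ A *ᵥ (R *ᵥ x) := by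
    rw [← quad_conj A R x, hRH.eq]
    congr 2
    rw [← hR2]
    simp only [Matrix.mul_assoc]
  have q3 : ‖ee (R *ᵥ x)‖ ^ 2 = Complex.re (star x ⬝ᵥ A *ᵥ x) := by
    rw [norm_ee_sq]
    have := quad_conj (1 : Matrix n n ℂ) R x
    rw [Matrix.mul_one, hRH.eq, one_mulVec, hR2] at this
    rw [← this]
  have key : ‖ee (A *ᵥ x)‖ ^ 2 ≤ (c * ‖ee x‖) ^ 2 := by
    have k1 : Complex.re (star (R *ᵥ x) ⬝ᵥ A *ᵥ (R *ᵥ x)) ≤ c * ‖ee (R *ᵥ x)‖ ^ 2 :=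
      quad_le (R *ᵥ x)
    have k2 : Complex.re (star x ⬝ᵥ A *ᵥ x) ≤ c * ‖ee x‖ ^ 2 := quad_le x
    have : ‖ee (A *ᵥ x)‖ ^ 2 ≤ c * (c * ‖ee x‖ ^ 2) := by
      rw [q1, q2]
      calc Complex.re (star (R *ᵥ x) ⬝ᵥ A *ᵥ (R *ᵥ x)) ≤ c * ‖ee (R *ᵥ x)‖ ^ 2 := k1
        _ = c * Complex.re (star x ⬝ᵥ A *ᵥ x) := by rw [q3]
        _ ≤ c * (c * ‖ee x‖ ^ 2) := by nlinarith [k2]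
    nlinarith [this]
  have h1 : (0:ℝ) ≤ c * ‖ee x‖ := mul_nonneg hc (norm_nonneg _)
  exact le_of_pow_le_pow_left₀ two_ne_zero h1 key

/-- converse: PSD matrix with norm at most `c` is dominated by `c • 1` -/
lemma norm_le_psd {A : Matrix n n ℂ} (hA : A.PosSemidef) {c : ℝ}
    (h : ‖A‖ ≤ c) : ((((c : ℂ)) • (1 : Matrix n n ℂ)) - A).PosSemidef := by
  have hc : 0 ≤ c := le_trans (norm_nonneg _) h
  have herm : ((((c : ℂ)) • (1 : Matrix n n ℂ)) - A).IsHermitian :=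
    ((smul_one_posSemidef (n := n) hc).1).sub hA.1
  refine posSemidef_of_re herm fun x => ?_
  have heq : Complex.re (star x ⬝ᵥ (((c : ℂ)) • (1 : Matrix n n ℂ) - A) *ᵥ x)
      = c * ‖ee x‖ ^ 2 - Complex.re (star x ⬝ᵥ A *ᵥ x) := by
    rw [Matrix.sub_mulVec, dotProduct_sub, Complex.sub_re, re_quad_smul]
  rw [heq]
  have : Complex.re (star x ⬝ᵥ A *ᵥ x) ≤ ‖ee x‖ * ‖ee (A *ᵥ x)‖ := re_dot_le x (A *ᵥ x)
  have h2 : ‖ee (A *ᵥ x)‖ ≤ ‖A‖ * ‖ee x‖ := mulVec_norm_le A x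
  nlinarith [norm_nonneg (ee x), norm_nonneg (ee (A *ᵥ x)), norm_nonneg A]

lemma re_dot_self_decomp (v : m × n → ℂ) :
    Complex.re (star v ⬝ᵥ v) = ∑ i : m, Complex.re
      (star (fun j => v (i, j)) ⬝ᵥ (fun j => v (i, j))) := by
  rw [dotProduct, Fintype.sum_prod_type, Complex.re_sum]
  simp [dotProduct, Complex.re_sum]

lemma kron_norm_le (M : Matrix n n ℂ) : ‖(1 : Matrix m m ℂ) ⊗ₖ M‖ ≤ ‖M‖ := by
  refine opNorm_le _ (norm_nonneg M) fun x => ?_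
  have key : ‖ee (((1 : Matrix m m ℂ) ⊗ₖ M) *ᵥ x)‖ ^ 2 ≤ (‖M‖ * ‖ee x‖) ^ 2 := by
    rw [norm_ee_sq, re_dot_self_decomp]
    have e1 : ∀ i : m, (fun j => (((1 : Matrix m m ℂ) ⊗ₖ M) *ᵥ x) (i, j))
        = M *ᵥ (fun l => x (i, l)) := by
      intro i; ext j; exact kron_mulVec M x i j
    calc ∑ i : m, Complex.re (star (fun j => (((1 : Matrix m m ℂ) ⊗ₖ M) *ᵥ x) (i, j)) ⬝ᵥ
            (fun j => (((1 : Matrix m m ℂ) ⊗ₖ M) *ᵥ x) (i, j)))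
        = ∑ i : m, ‖ee (M *ᵥ fun l => x (i, l))‖ ^ 2 := by
          refine Finset.sum_congr rfl fun i _ => ?_
          rw [e1 i, norm_ee_sq]
      _ ≤ ∑ i : m, (‖M‖ * ‖ee (fun l => x (i, l))‖) ^ 2 := by
          refine Finset.sum_le_sum fun i _ => ?_
          have := mulVec_norm_le M (fun l => x (i, l))
          have h0 : (0:ℝ) ≤ ‖ee (M *ᵥ fun l => x (i, l))‖ := norm_nonneg _
          nlinarith [this]
      _ = ‖M‖ ^ 2 * ∑ i : m, ‖ee (fun l => x (i, l))‖ ^ 2 := by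
          rw [Finset.mul_sum]; congr 1; ext i; ring
      _ = ‖M‖ ^ 2 * Complex.re (star x ⬝ᵥ x) := by
          rw [re_dot_self_decomp]
          congr 1
          refine Finset.sum_congr rfl fun i _ => ?_
          rw [norm_ee_sq]
      _ = (‖M‖ * ‖ee x‖) ^ 2 := by rw [← norm_ee_sq]; ring
  exact le_of_pow_le_pow_left₀ two_ne_zero (mul_nonneg (norm_nonneg _) (norm_nonneg _)) key

lemma half_smul_eq : ((1/2 : ℂ)) • (1 : Matrix n n ℂ) = (((1/2 : ℝ) : ℂ)) • 1 := by norm_num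

lemma inv_norm_le_imp {Y : Matrix n n ℂ} (hY : Y.PosDef) (h : ‖Y⁻¹‖ ≤ 2) :
    (Y - (1/2 : ℂ) • (1 : Matrix n n ℂ)).PosSemidef := by
  set R := psqrt Y with hR
  have hR2 : R * R = Y := psd_sqrt_mul_self hY.posSemidef
  have hRH : R.IsHermitian := psd_sqrt_herm hY.posSemidef
  have hRd : IsUnit R.det := by
    have : R.det * R.det = Y.det := by rw [← det_mul, hR2]
    exact isUnit_of_mul_isUnit_left (this ▸ pd_isUnit_det hY)
  have hRinvH : (R⁻¹).IsHermitian := by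
    unfold Matrix.IsHermitian
    rw [conjTranspose_nonsing_inv, hRH.eq]
  have hinv : R⁻¹ * R⁻¹ = Y⁻¹ := by rw [← Matrix.mul_inv_rev, hR2]
  have hnormR : ‖R⁻¹‖ * ‖R⁻¹‖ ≤ 2 := by
    have := Matrix.l2_opNorm_conjTranspose_mul_self R⁻¹
    rw [hRinvH.eq, hinv] at this
    linarith [this ▸ h]
  have herm : (Y - (1/2 : ℂ) • (1 : Matrix n n ℂ)).IsHermitian := by
    rw [half_smul_eq]
    exact hY.1.sub (smul_one_posSemidef (by norm_num : (0:ℝ) ≤ 1/2)).1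
  refine posSemidef_of_re herm fun x => ?_
  have hx : x = R⁻¹ *ᵥ (R *ᵥ x) := by
    rw [mulVec_mulVec, nonsing_inv_mul R hRd, one_mulVec]
  have hb : ‖ee x‖ ≤ ‖R⁻¹‖ * ‖ee (R *ᵥ x)‖ := by
    conv_lhs => rw [hx]
    exact mulVec_norm_le R⁻¹ (R *ᵥ x)
  have hq : ‖ee (R *ᵥ x)‖ ^ 2 = Complex.re (star x ⬝ᵥ Y *ᵥ x) := by
    rw [norm_ee_sq]
    have := quad_conj (1 : Matrix n n ℂ) R x
    rw [Matrix.mul_one, hRH.eq, one_mulVec, hR2] at this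
    rw [← this]
  have hsub : Complex.re (star x ⬝ᵥ (Y - (1/2 : ℂ) • (1 : Matrix n n ℂ)) *ᵥ x)
      = Complex.re (star x ⬝ᵥ Y *ᵥ x) - (1/2 : ℝ) * ‖ee x‖ ^ 2 := by
    rw [Matrix.sub_mulVec, dotProduct_sub, Complex.sub_re, half_smul_eq, re_quad_smul]
  rw [hsub]
  have h2 : ‖ee x‖ ^ 2 ≤ 2 * Complex.re (star x ⬝ᵥ Y *ᵥ x) := by
    have hnn : (0:ℝ) ≤ ‖ee (R *ᵥ x)‖ := norm_nonneg _
    have hnn2 : (0:ℝ) ≤ ‖R⁻¹‖ := norm_nonneg _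
    nlinarith [hb, hq, hnormR, norm_nonneg (ee x)]
  linarith

/-- the fixed point map -/
noncomputable def F (B : Matrix (m × n) n ℂ) (Y : Matrix n n ℂ) : Matrix n n ℂ :=
  1 - Bᴴ * ((1 : Matrix m m ℂ) ⊗ₖ Y)⁻¹ * B

lemma kron_inv (Y : Matrix n n ℂ) :
    ((1 : Matrix m m ℂ) ⊗ₖ Y)⁻¹ = (1 : Matrix m m ℂ) ⊗ₖ Y⁻¹ := by
  rw [Matrix.inv_kronecker,
    show (1 : Matrix m m ℂ)⁻¹ = 1 from Matrix.inv_eq_right_inv (by simp)]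

/-- membership in the order interval `[1/2 • 1, 1]` -/
def Sset : Set (Matrix n n ℂ) :=
  {Y | (Y - (1/2 : ℂ) • 1).PosSemidef ∧ ((1 : Matrix n n ℂ) - Y).PosSemidef}

lemma mem_S_posDef {Y : Matrix n n ℂ} (h : Y ∈ Sset) : Y.PosDef := by
  have := (smul_one_posDef (n := n) (by norm_num : (0:ℝ) < 1/2)).add_posSemidef h.1
  rwa [half_smul_eq, add_sub_cancel] at this

lemma half_inv : (((1/2 : ℂ)) • (1 : Matrix n n ℂ))⁻¹ = ((2 : ℂ)) • 1 := by
  apply Matrix.inv_eq_right_inv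
  rw [Matrix.smul_mul, Matrix.mul_smul, Matrix.one_mul, smul_smul]
  norm_num

lemma mem_S_inv_norm {Y : Matrix n n ℂ} (h : Y ∈ Sset) : ‖Y⁻¹‖ ≤ 2 := by
  have hY := mem_S_posDef h
  have h2 : ((((1/2 : ℂ)) • (1 : Matrix n n ℂ))⁻¹ - Y⁻¹).PosSemidef :=
    inv_anti (by rw [half_smul_eq]; exact smul_one_posDef (by norm_num)) hY h.1
  rw [half_inv] at h2
  have h2' : ((((2 : ℝ) : ℂ)) • (1 : Matrix n n ℂ) - Y⁻¹).PosSemidef := by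
    norm_num at h2 ⊢
    exact h2
  exact psd_norm_le hY.inv.posSemidef (by norm_num) h2'

lemma one_sub_half : (1 : Matrix n n ℂ) - (1/2 : ℂ) • 1 = (1/2 : ℂ) • 1 := by
  have : (1 : Matrix n n ℂ) - (1/2 : ℂ) • 1 = (1 : ℂ) • 1 - (1/2 : ℂ) • 1 := by rw [one_smul]
  rw [this, ← sub_smul]
  norm_num

lemma one_mem_S : (1 : Matrix n n ℂ) ∈ Sset := by
  constructor
  · rw [one_sub_half, half_smul_eq]
    exact smul_one_posSemidef (by norm_num)
  · simpa using Matrix.PosSemidef.zero (n := n) (R := ℂ)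

lemma one_sub_F {B : Matrix (m × n) n ℂ} {Y : Matrix n n ℂ} (hY : Y.PosDef) :
    (1 - F B Y).PosSemidef := by
  rw [F, sub_sub_cancel, kron_inv]
  exact (kron_posSemidef hY.inv.posSemidef).conjTranspose_mul_mul_same B

lemma F_sub_F {B : Matrix (m × n) n ℂ} {Y Z : Matrix n n ℂ} :
    F B Z - F B Y = Bᴴ * ((1 : Matrix m m ℂ) ⊗ₖ (Y⁻¹ - Z⁻¹)) * B := by
  rw [F, F, kron_inv, kron_inv]
  have : (1 : Matrix m m ℂ) ⊗ₖ (Y⁻¹ - Z⁻¹)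
      = (1 : Matrix m m ℂ) ⊗ₖ Y⁻¹ - (1 : Matrix m m ℂ) ⊗ₖ Z⁻¹ := by
    ext ⟨i, j⟩ ⟨k, l⟩
    simp [kroneckerMap_apply, Matrix.sub_apply, mul_sub]
  rw [this, Matrix.mul_sub, Matrix.sub_mul]
  abel

lemma F_mono {B : Matrix (m × n) n ℂ} {Y Z : Matrix n n ℂ} (hY : Y.PosDef) (hZ : Z.PosDef)
    (h : (Z - Y).PosSemidef) : (F B Z - F B Y).PosSemidef := by
  rw [F_sub_F]
  exact (kron_posSemidef (inv_anti hY hZ h)).conjTranspose_mul_mul_same B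

lemma F_maps_S {B : Matrix (m × n) n ℂ} (hB : ‖B‖ < 1/2) {Y : Matrix n n ℂ} (hY : Y ∈ Sset) :
    F B Y ∈ Sset := by
  have hYpd := mem_S_posDef hY
  have hXpsd : (Bᴴ * ((1 : Matrix m m ℂ) ⊗ₖ Y⁻¹) * B).PosSemidef :=
    (kron_posSemidef hYpd.inv.posSemidef).conjTranspose_mul_mul_same B
  have hnorm : ‖Bᴴ * ((1 : Matrix m m ℂ) ⊗ₖ Y⁻¹) * B‖ ≤ 1/2 := by
    calc ‖Bᴴ * ((1 : Matrix m m ℂ) ⊗ₖ Y⁻¹) * B‖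
        ≤ ‖Bᴴ * ((1 : Matrix m m ℂ) ⊗ₖ Y⁻¹)‖ * ‖B‖ := Matrix.l2_opNorm_mul _ _
      _ ≤ ‖Bᴴ‖ * ‖(1 : Matrix m m ℂ) ⊗ₖ Y⁻¹‖ * ‖B‖ := by
          have := Matrix.l2_opNorm_mul Bᴴ ((1 : Matrix m m ℂ) ⊗ₖ Y⁻¹)
          nlinarith [norm_nonneg B]
      _ ≤ ‖B‖ * 2 * ‖B‖ := by
          rw [Matrix.l2_opNorm_conjTranspose]
          have h1 : ‖(1 : Matrix m m ℂ) ⊗ₖ Y⁻¹‖ ≤ 2 :=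
            le_trans (kron_norm_le _) (mem_S_inv_norm hY)
          exact mul_le_mul_of_nonneg_right
            (mul_le_mul_of_nonneg_left h1 (norm_nonneg B)) (norm_nonneg B)
      _ ≤ 1/2 := by nlinarith [norm_nonneg B]
  constructor
  · have heq : F B Y - (1/2 : ℂ) • 1
        = ((1/2 : ℂ)) • (1 : Matrix n n ℂ) - Bᴴ * ((1 : Matrix m m ℂ) ⊗ₖ Y⁻¹) * B := by
      rw [F, kron_inv, sub_right_comm, one_sub_half]
    rw [heq, half_smul_eq]
    exact norm_le_psd hXpsd hnorm
  · rw [F, kron_inv, sub_sub_cancel]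
    exact hXpsd

lemma dot_norm_le (v w : n → ℂ) : ‖star v ⬝ᵥ w‖ ≤ ‖ee v‖ * ‖ee w‖ := by
  rw [← inner_ee]
  exact norm_inner_le_norm (𝕜 := ℂ) _ _

lemma nonneg_isClosed : IsClosed {z : ℂ | 0 ≤ z} := by
  have : {z : ℂ | 0 ≤ z} = {z | 0 ≤ z.re} ∩ {z | 0 = z.im} := by
    ext z
    simp only [Set.mem_setOf_eq, Set.mem_inter_iff, Complex.le_def, Complex.zero_re,
      Complex.zero_im]
  rw [this]
  exact (isClosed_le continuous_const Complex.continuous_re).inter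
    (isClosed_eq continuous_const Complex.continuous_im)

lemma quad_continuous (x : n → ℂ) :
    Continuous (fun A : Matrix n n ℂ => star x ⬝ᵥ A *ᵥ x) := by
  have : LipschitzWith (Real.toNNReal (‖ee x‖ ^ 2))
      (fun A : Matrix n n ℂ => star x ⬝ᵥ A *ᵥ x) := by
    refine LipschitzWith.of_dist_le_mul fun A A' => ?_
    rw [dist_eq_norm, dist_eq_norm]
    have h1 : star x ⬝ᵥ A *ᵥ x - star x ⬝ᵥ A' *ᵥ x = star x ⬝ᵥ (A - A') *ᵥ x := by
      rw [Matrix.sub_mulVec, dotProduct_sub]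
    rw [h1]
    calc ‖star x ⬝ᵥ (A - A') *ᵥ x‖ ≤ ‖ee x‖ * ‖ee ((A - A') *ᵥ x)‖ := dot_norm_le _ _
      _ ≤ ‖ee x‖ * (‖A - A'‖ * ‖ee x‖) := by
          exact mul_le_mul_of_nonneg_left (mulVec_norm_le _ _) (norm_nonneg _)
      _ = (Real.toNNReal (‖ee x‖ ^ 2) : ℝ) * ‖A - A'‖ := by
          rw [Real.coe_toNNReal _ (sq_nonneg _)]
          ring
  exact this.continuous

lemma psd_isClosed : IsClosed {A : Matrix n n ℂ | A.PosSemidef} := by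
  have hset : {A : Matrix n n ℂ | A.PosSemidef}
      = {A : Matrix n n ℂ | A.IsHermitian} ∩ ⋂ x : n → ℂ, {A | 0 ≤ star x ⬝ᵥ A *ᵥ x} := by
    ext A
    simp only [Set.mem_setOf_eq, Set.mem_inter_iff, Set.mem_iInter]
    exact posSemidef_iff_dotProduct_mulVec
  rw [hset]
  refine IsClosed.inter ?_ (isClosed_iInter fun x => ?_)
  · have : IsClosed {A : Matrix n n ℂ | Aᴴ = A} := by
      refine isClosed_eq ?_ continuous_id
      have : Isometry (fun A : Matrix n n ℂ => Aᴴ) := by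
        refine Isometry.of_dist_eq fun A B => ?_
        rw [dist_eq_norm, dist_eq_norm, ← Matrix.conjTranspose_sub,
          Matrix.l2_opNorm_conjTranspose]
      exact this.continuous
    exact this
  · exact nonneg_isClosed.preimage (quad_continuous x)

lemma S_isClosed : IsClosed (Sset (n := n)) := by
  have : Sset (n := n) = (fun Y : Matrix n n ℂ => Y - (1/2 : ℂ) • 1) ⁻¹' {A | A.PosSemidef}
      ∩ (fun Y : Matrix n n ℂ => 1 - Y) ⁻¹' {A | A.PosSemidef} := rfl
  rw [this]
  exact (psd_isClosed.preimage (continuous_id.sub continuous_const)).inter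
    (psd_isClosed.preimage (continuous_const.sub continuous_id))

lemma F_lip {B : Matrix (m × n) n ℂ} {Y Z : Matrix n n ℂ} (hY : Y ∈ Sset) (hZ : Z ∈ Sset) :
    ‖F B Z - F B Y‖ ≤ ‖B‖ ^ 2 * 4 * ‖Z - Y‖ := by
  have hYpd := mem_S_posDef hY
  have hZpd := mem_S_posDef hZ
  have hid : Y⁻¹ - Z⁻¹ = Y⁻¹ * (Z - Y) * Z⁻¹ := by
    rw [Matrix.mul_sub, Matrix.sub_mul, Matrix.mul_assoc,
      mul_nonsing_inv Z (pd_isUnit_det hZpd), nonsing_inv_mul Y (pd_isUnit_det hYpd),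
      Matrix.mul_one, Matrix.one_mul]
  have hmid : ‖Y⁻¹ - Z⁻¹‖ ≤ 4 * ‖Z - Y‖ := by
    rw [hid]
    calc ‖Y⁻¹ * (Z - Y) * Z⁻¹‖ ≤ ‖Y⁻¹ * (Z - Y)‖ * ‖Z⁻¹‖ := Matrix.l2_opNorm_mul _ _
      _ ≤ ‖Y⁻¹‖ * ‖Z - Y‖ * ‖Z⁻¹‖ := by
          exact mul_le_mul_of_nonneg_right (Matrix.l2_opNorm_mul _ _) (norm_nonneg _)
      _ ≤ 2 * ‖Z - Y‖ * 2 := by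
          have h2 := mem_S_inv_norm hY
          have h3 := mem_S_inv_norm hZ
          have hb := norm_nonneg (Z - Y)
          have hc := norm_nonneg (Z⁻¹)
          calc ‖Y⁻¹‖ * ‖Z - Y‖ * ‖Z⁻¹‖ ≤ 2 * ‖Z - Y‖ * ‖Z⁻¹‖ :=
                mul_le_mul_of_nonneg_right (mul_le_mul_of_nonneg_right h2 hb) hc
            _ ≤ 2 * ‖Z - Y‖ * 2 := mul_le_mul_of_nonneg_left h3 (by positivity)
      _ = 4 * ‖Z - Y‖ := by ring
  rw [F_sub_F]
  calc ‖Bᴴ * ((1 : Matrix m m ℂ) ⊗ₖ (Y⁻¹ - Z⁻¹)) * B‖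
      ≤ ‖Bᴴ * ((1 : Matrix m m ℂ) ⊗ₖ (Y⁻¹ - Z⁻¹))‖ * ‖B‖ := Matrix.l2_opNorm_mul _ _
    _ ≤ ‖Bᴴ‖ * ‖(1 : Matrix m m ℂ) ⊗ₖ (Y⁻¹ - Z⁻¹)‖ * ‖B‖ :=
        mul_le_mul_of_nonneg_right (Matrix.l2_opNorm_mul _ _) (norm_nonneg _)
    _ ≤ ‖B‖ ^ 2 * 4 * ‖Z - Y‖ := by
        rw [Matrix.l2_opNorm_conjTranspose]
        have hk : ‖(1 : Matrix m m ℂ) ⊗ₖ (Y⁻¹ - Z⁻¹)‖ ≤ 4 * ‖Z - Y‖ :=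
          le_trans (kron_norm_le _) hmid
        have h0 := norm_nonneg B
        have h1 := norm_nonneg ((1 : Matrix m m ℂ) ⊗ₖ (Y⁻¹ - Z⁻¹))
        nlinarith

end S3

open S3 Filter Topology in
/-- (Lemma 2.1 of the paper.) If `‖B‖ < 1/2` (spectral norm), then the equation
`Y + Bᴴ Ŷ⁻¹ B = I` has a maximal Hermitian positive definite solution `Y_L` with
`(1/2)I ≤ Y_L ≤ I`, and every Hermitian positive definite solution `Y ≠ Y_L` satisfies
`‖Y⁻¹‖ > 2`. -/
theorem statement3 (m n : ℕ) (hm : 0 < m) (hn : 0 < n)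
    (B : Matrix (Fin m × Fin n) (Fin n) ℂ) (hB : ‖B‖ < 1 / 2) :
    ∃ Y_L : Matrix (Fin n) (Fin n) ℂ, Y_L.PosDef ∧
      Y_L + Bᴴ * ((1 : Matrix (Fin m) (Fin m) ℂ) ⊗ₖ Y_L)⁻¹ * B = 1 ∧
      (Y_L - (1 / 2 : ℂ) • 1).PosSemidef ∧
      ((1 : Matrix (Fin n) (Fin n) ℂ) - Y_L).PosSemidef ∧
      (∀ Y : Matrix (Fin n) (Fin n) ℂ, Y.PosDef →
        Y + Bᴴ * ((1 : Matrix (Fin m) (Fin m) ℂ) ⊗ₖ Y)⁻¹ * B = 1 → (Y_L - Y).PosSemidef) ∧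
      (∀ Y : Matrix (Fin n) (Fin n) ℂ, Y.PosDef →
        Y + Bᴴ * ((1 : Matrix (Fin m) (Fin m) ℂ) ⊗ₖ Y)⁻¹ * B = 1 → Y ≠ Y_L →
          2 < ‖Y⁻¹‖) := by
  classical
  -- the set S = [1/2 • 1, 1]
  haveI : CompleteSpace (S3.Sset (n := Fin n) : Set (Matrix (Fin n) (Fin n) ℂ)) :=
    (S_isClosed (n := Fin n)).completeSpace_coe
  haveI : Nonempty (S3.Sset (n := Fin n) : Set (Matrix (Fin n) (Fin n) ℂ)) :=
    ⟨⟨1, one_mem_S⟩⟩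
  set K : NNReal := Real.toNNReal (‖B‖ ^ 2 * 4) with hKdef
  have hBnn : (0:ℝ) ≤ ‖B‖ := norm_nonneg B
  have hKcoe : (K : ℝ) = ‖B‖ ^ 2 * 4 := Real.coe_toNNReal _ (by positivity)
  have hK1 : K < 1 := by
    rw [← NNReal.coe_lt_coe, hKcoe]
    push_cast
    nlinarith [hB, hBnn]
  set g : (S3.Sset (n := Fin n) : Set (Matrix (Fin n) (Fin n) ℂ)) →
      (S3.Sset (n := Fin n) : Set (Matrix (Fin n) (Fin n) ℂ)) :=
    fun p => ⟨F B p.1, F_maps_S hB p.2⟩ with hgdef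
  have hg : ContractingWith K g := by
    constructor
    · exact hK1
    · refine LipschitzWith.of_dist_le_mul fun p q => ?_
      rw [Subtype.dist_eq, Subtype.dist_eq, dist_eq_norm, dist_eq_norm]
      have : (g p).1 = F B p.1 := rfl
      calc ‖(g p).1 - (g q).1‖ = ‖F B p.1 - F B q.1‖ := rfl
        _ ≤ ‖B‖ ^ 2 * 4 * ‖p.1 - q.1‖ := F_lip q.2 p.2
        _ = (K : ℝ) * ‖p.1 - q.1‖ := by rw [hKcoe]
  set Y_Lp := ContractingWith.fixedPoint g hg with hYLp
  set Y_L := Y_Lp.1 with hYL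
  have hfix : F B Y_L = Y_L := congrArg Subtype.val hg.fixedPoint_isFixedPt
  have hmemL := Y_Lp.2
  have hLpd : Y_L.PosDef := mem_S_posDef hmemL
  -- helper: a positive definite solution gives a fixed point and 1 - Y PSD
  have sol_fix : ∀ Y : Matrix (Fin n) (Fin n) ℂ, Y.PosDef →
      Y + Bᴴ * ((1 : Matrix (Fin m) (Fin m) ℂ) ⊗ₖ Y)⁻¹ * B = 1 →
      F B Y = Y ∧ ((1 : Matrix (Fin n) (Fin n) ℂ) - Y).PosSemidef := by
    intro Y hY hsol
    constructor
    · rw [F, ← hsol]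
      abel
    · have hX : (1 : Matrix (Fin n) (Fin n) ℂ) - Y
          = Bᴴ * ((1 : Matrix (Fin m) (Fin m) ℂ) ⊗ₖ Y)⁻¹ * B := by
        rw [← hsol]; abel
      rw [hX, kron_inv]
      exact (kron_posSemidef hY.inv.posSemidef).conjTranspose_mul_mul_same B
  refine ⟨Y_L, hLpd, ?_, hmemL.1, hmemL.2, ?_, ?_⟩
  · -- the equation
    have : Y_L + Bᴴ * ((1 : Matrix (Fin m) (Fin m) ℂ) ⊗ₖ Y_L)⁻¹ * B
        = F B Y_L + Bᴴ * ((1 : Matrix (Fin m) (Fin m) ℂ) ⊗ₖ Y_L)⁻¹ * B := by rw [hfix]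
    rw [this, F]
    abel
  · -- maximality
    intro Y hY hsol
    obtain ⟨hfixY, h1Y⟩ := sol_fix Y hY hsol
    set seq : ℕ → (S3.Sset (n := Fin n) : Set (Matrix (Fin n) (Fin n) ℂ)) :=
      fun k => g^[k] ⟨1, one_mem_S⟩ with hseq
    have claim : ∀ k, ((seq k).1 - Y).PosSemidef := by
      intro k
      induction k with
      | zero => simpa [hseq] using h1Y
      | succ k ih =>
        have hZ : (seq k).1.PosDef := mem_S_posDef (seq k).2
        have hmono := F_mono (B := B) hY hZ ih
        rw [hfixY] at hmono
        have hs : seq (k+1) = g (seq k) := Function.iterate_succ_apply' g k _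
        rw [hs]
        exact hmono
    have htend : Tendsto (fun k => (seq k).1) atTop (𝓝 Y_L) :=
      (continuous_subtype_val.tendsto Y_Lp).comp (hg.tendsto_iterate_fixedPoint ⟨1, one_mem_S⟩)
    have htend2 : Tendsto (fun k => (seq k).1 - Y) atTop (𝓝 (Y_L - Y)) :=
      htend.sub_const Y
    exact (psd_isClosed (n := Fin n)).mem_of_tendsto htend2
      (Filter.Eventually.of_forall claim)
  · -- strict norm inequality for other solutions
    intro Y hY hsol hne
    by_contra hcon
    push_neg at hcon
    have h1 : (Y - (1/2 : ℂ) • 1).PosSemidef := inv_norm_le_imp hY hcon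
    obtain ⟨hfixY, h1Y⟩ := sol_fix Y hY hsol
    have hmem : Y ∈ S3.Sset (n := Fin n) := ⟨h1, h1Y⟩
    have hfp : Function.IsFixedPt g ⟨Y, hmem⟩ := Subtype.ext hfixY
    have := hg.fixedPoint_unique hfp
    exact hne (congrArg Subtype.val this)
end

section
/- Let m, n be positive integers, let Q be an n×n Hermitian positive definite matrix with positive definite square root Q^{1/2}, and let A be an (mn)×n complex matrix. If ‖(I_m ⊗ Q^{-1/2}) A Q^{-1/2}‖ < 1/2 (spectral norm), then the equation X + A* X̂^{-1} A = Q has a maximal Hermitian positive definite solution X_L (i.e. X ≤ X_L for every Hermitian positive definite solution X) satisfying (1/2)Q ≤ X_L ≤ Q, and X_L is the unique Hermitian positive definite solution X with (1/2)Q ≤ X ≤ Q. -/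
open Matrix
open scoped Matrix.Norms.L2Operator Kronecker ComplexOrder

namespace S4

set_option linter.unusedSectionVars false
variable {ι κ : Type*} [Fintype ι] [Fintype κ] [DecidableEq ι] [DecidableEq κ]

noncomputable def ev (x : ι → ℂ) : EuclideanSpace ℂ ι := (WithLp.equiv 2 _).symm x

lemma dot_self_eq_norm (x : ι → ℂ) : star x ⬝ᵥ x = (‖ev x‖ ^ 2 : ℝ) := by
  rw [dotProduct_comm, ← EuclideanSpace.inner_toLp_toLp]
  exact_mod_cast inner_self_eq_norm_sq_to_K (𝕜 := ℂ) (ev x)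

lemma star_dot_mulVec (M : Matrix ι ι ℂ) (h : M.IsHermitian) (x : ι → ℂ) :
    star (star x ⬝ᵥ M *ᵥ x) = star x ⬝ᵥ M *ᵥ x := by
  conv_lhs => rw [← star_dotProduct, star_mulVec, h.eq, ← dotProduct_mulVec]

lemma herm_dot_re (M : Matrix ι ι ℂ) (h : M.IsHermitian) (x : ι → ℂ) :
    star x ⬝ᵥ M *ᵥ x = ((star x ⬝ᵥ M *ᵥ x).re : ℂ) := by
  have h2 := star_dot_mulVec M h x
  exact ((Complex.conj_eq_iff_re).mp h2).symm

lemma psd_of_re {M : Matrix ι ι ℂ} (h : M.IsHermitian)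
    (hre : ∀ x, 0 ≤ (star x ⬝ᵥ M *ᵥ x).re) : M.PosSemidef := by
  refine .of_dotProduct_mulVec_nonneg h fun x => ?_
  rw [herm_dot_re M h x]
  exact_mod_cast Complex.zero_le_real.mpr (hre x)

lemma pd_of_re {M : Matrix ι ι ℂ} (h : M.IsHermitian)
    (hre : ∀ x, x ≠ 0 → 0 < (star x ⬝ᵥ M *ᵥ x).re) : M.PosDef := by
  refine .of_dotProduct_mulVec_pos h fun x hx => ?_
  rw [herm_dot_re M h x]
  exact_mod_cast Complex.zero_lt_real.mpr (hre x hx)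

lemma re_of_psd {M : Matrix ι ι ℂ} (h : M.PosSemidef) (x : ι → ℂ) :
    0 ≤ (star x ⬝ᵥ M *ᵥ x).re := h.re_dotProduct_nonneg x

end S4

namespace S4
variable {ι κ : Type*} [Fintype ι] [Fintype κ] [DecidableEq ι] [DecidableEq κ]

lemma ev_mulVec_norm (M : Matrix κ ι ℂ) (x : ι → ℂ) : ‖ev (M *ᵥ x)‖ ≤ ‖M‖ * ‖ev x‖ := by
  simpa [ev] using M.l2_opNorm_mulVec (ev x)

lemma opNorm_le {M : Matrix κ ι ℂ} {c : ℝ} (hc : 0 ≤ c)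
    (h : ∀ x : ι → ℂ, ‖ev (M *ᵥ x)‖ ≤ c * ‖ev x‖) : ‖M‖ ≤ c := by
  rw [Matrix.l2_opNorm_def]
  refine ContinuousLinearMap.opNorm_le_bound _ hc fun x => ?_
  have := h ((WithLp.equiv 2 _) x)
  exact this

lemma re_dot_le_norm (M : Matrix ι ι ℂ) (x : ι → ℂ) :
    (star x ⬝ᵥ M *ᵥ x).re ≤ ‖M‖ * ‖ev x‖ ^ 2 := by
  have h1 : star x ⬝ᵥ M *ᵥ x = inner ℂ (ev x) (ev (M *ᵥ x)) :=
    (dotProduct_comm _ _).trans (EuclideanSpace.inner_toLp_toLp x (M *ᵥ x)).symm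
  rw [h1]
  calc (inner ℂ (ev x) (ev (M *ᵥ x)) : ℂ).re ≤ ‖ev x‖ * ‖ev (M *ᵥ x)‖ :=
        re_inner_le_norm (𝕜 := ℂ) _ _
    _ ≤ ‖ev x‖ * (‖M‖ * ‖ev x‖) := by
        have := ev_mulVec_norm M x
        nlinarith [norm_nonneg (ev x), norm_nonneg (ev (M *ᵥ x))]
    _ = ‖M‖ * ‖ev x‖ ^ 2 := by ring

end S4

namespace S4
variable {ι p : Type*} [Fintype ι] [Fintype p] [DecidableEq ι] [DecidableEq p]

lemma ev_norm_sq (x : ι → ℂ) : ‖ev x‖ ^ 2 = ∑ i, ‖x i‖ ^ 2 := by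
  simpa [ev] using PiLp.norm_sq_eq_of_L2 _ (ev x)

lemma kron_conjT (M : Matrix ι ι ℂ) :
    ((1 : Matrix p p ℂ) ⊗ₖ M)ᴴ = (1 : Matrix p p ℂ) ⊗ₖ Mᴴ := by
  ext ⟨i, j⟩ ⟨k, l⟩
  simp only [Matrix.conjTranspose_apply, Matrix.kroneckerMap_apply, Matrix.one_apply]
  by_cases h : k = i
  · subst h; simp
  · simp [h, Ne.symm h]

lemma kron_sub (X Y : Matrix ι ι ℂ) :
    (1 : Matrix p p ℂ) ⊗ₖ (X - Y) = (1 : Matrix p p ℂ) ⊗ₖ X - (1 : Matrix p p ℂ) ⊗ₖ Y := by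
  ext ⟨i, j⟩ ⟨k, l⟩
  simp [Matrix.kroneckerMap_apply, mul_sub]

lemma kron_mulVec (M : Matrix ι ι ℂ) (x : p × ι → ℂ) (i : p) (j : ι) :
    (((1 : Matrix p p ℂ) ⊗ₖ M) *ᵥ x) (i, j) = (M *ᵥ fun l => x (i, l)) j := by
  simp [Matrix.mulVec, dotProduct, Fintype.sum_prod_type, Matrix.one_apply,
    ite_mul, Finset.sum_ite_eq]

lemma kron_dot (M : Matrix ι ι ℂ) (x : p × ι → ℂ) :
    star x ⬝ᵥ (((1 : Matrix p p ℂ) ⊗ₖ M) *ᵥ x)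
      = ∑ i, star (fun l => x (i, l)) ⬝ᵥ (M *ᵥ fun l => x (i, l)) := by
  simp only [dotProduct, Fintype.sum_prod_type, Pi.star_apply]
  refine Finset.sum_congr rfl fun i _ => Finset.sum_congr rfl fun j _ => ?_
  rw [kron_mulVec]

lemma psd_kron {M : Matrix ι ι ℂ} (h : M.PosSemidef) :
    ((1 : Matrix p p ℂ) ⊗ₖ M).PosSemidef := by
  refine .of_dotProduct_mulVec_nonneg (by rw [Matrix.IsHermitian, kron_conjT, h.1.eq]) fun x => ?_
  rw [kron_dot]
  exact Finset.sum_nonneg fun i _ => h.dotProduct_mulVec_nonneg _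

lemma pd_kron {M : Matrix ι ι ℂ} (h : M.PosDef) :
    ((1 : Matrix p p ℂ) ⊗ₖ M).PosDef := by
  refine .of_dotProduct_mulVec_pos (by rw [Matrix.IsHermitian, kron_conjT, h.1.eq]) fun x hx => ?_
  rw [kron_dot]
  obtain ⟨⟨i0, j0⟩, hij⟩ := Function.ne_iff.mp hx
  refine Finset.sum_pos' (fun i _ => h.posSemidef.dotProduct_mulVec_nonneg _) ⟨i0, Finset.mem_univ _, ?_⟩
  exact h.dotProduct_mulVec_pos (fun hz => hij (by simpa using congrFun hz j0))

lemma kron_norm_le (M : Matrix ι ι ℂ) : ‖(1 : Matrix p p ℂ) ⊗ₖ M‖ ≤ ‖M‖ := by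
  refine opNorm_le (norm_nonneg M) fun x => ?_
  have hsq : ‖ev (((1 : Matrix p p ℂ) ⊗ₖ M) *ᵥ x)‖ ^ 2 ≤ (‖M‖ * ‖ev x‖) ^ 2 := by
    rw [ev_norm_sq]
    calc ∑ ij : p × ι, ‖(((1 : Matrix p p ℂ) ⊗ₖ M) *ᵥ x) ij‖ ^ 2
        = ∑ i, ∑ j, ‖(M *ᵥ fun l => x (i, l)) j‖ ^ 2 := by
          rw [Fintype.sum_prod_type]
          exact Finset.sum_congr rfl fun i _ => Finset.sum_congr rfl fun j _ => by
            rw [kron_mulVec]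
      _ = ∑ i, ‖ev (M *ᵥ fun l => x (i, l))‖ ^ 2 := by
          exact Finset.sum_congr rfl fun i _ => (ev_norm_sq _).symm
      _ ≤ ∑ i, (‖M‖ * ‖ev fun l => x (i, l)‖) ^ 2 := by
          refine Finset.sum_le_sum fun i _ => ?_
          have := ev_mulVec_norm M (fun l => x (i, l))
          have h0 : (0:ℝ) ≤ ‖ev (M *ᵥ fun l => x (i, l))‖ := norm_nonneg _
          nlinarith
      _ = ‖M‖ ^ 2 * ∑ i, ‖ev fun l => x (i, l)‖ ^ 2 := by
          rw [Finset.mul_sum]; exact Finset.sum_congr rfl fun i _ => by ring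
      _ = ‖M‖ ^ 2 * ∑ i, ∑ j, ‖x (i, j)‖ ^ 2 := by
          congr 1; exact Finset.sum_congr rfl fun i _ => ev_norm_sq _
      _ = (‖M‖ * ‖ev x‖) ^ 2 := by
          have : ‖ev x‖ ^ 2 = ∑ i, ∑ j, ‖x (i, j)‖ ^ 2 := by
            rw [ev_norm_sq, Fintype.sum_prod_type]
          rw [mul_pow, this]
  have h1 : (0:ℝ) ≤ ‖M‖ * ‖ev x‖ := mul_nonneg (norm_nonneg _) (norm_nonneg _)
  nlinarith [norm_nonneg (ev (((1 : Matrix p p ℂ) ⊗ₖ M) *ᵥ x))]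

end S4

namespace S4
variable {ι : Type*} [Fintype ι] [DecidableEq ι]

lemma dot_smul_one (c : ℂ) (x : ι → ℂ) :
    star x ⬝ᵥ ((c • (1 : Matrix ι ι ℂ)) *ᵥ x) = c * (star x ⬝ᵥ x) := by
  rw [Matrix.smul_mulVec, Matrix.one_mulVec, dotProduct_smul, smul_eq_mul]

lemma herm_smul_one (c : ℝ) : ((c : ℂ) • (1 : Matrix ι ι ℂ)).IsHermitian := by
  rw [Matrix.IsHermitian, Matrix.conjTranspose_smul, Matrix.conjTranspose_one]
  norm_num

lemma psd_smul_one {c : ℝ} (hc : 0 ≤ c) : ((c : ℂ) • (1 : Matrix ι ι ℂ)).PosSemidef := by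
  refine psd_of_re (herm_smul_one c) fun x => ?_
  rw [dot_smul_one, dot_self_eq_norm, ← Complex.ofReal_mul, Complex.ofReal_re]
  positivity

lemma pd_smul_one {c : ℝ} (hc : 0 < c) : ((c : ℂ) • (1 : Matrix ι ι ℂ)).PosDef := by
  refine pd_of_re (herm_smul_one c) fun x hx => ?_
  rw [dot_smul_one, dot_self_eq_norm]
  have hx' : ev x ≠ 0 := fun h => hx (by simpa [ev] using congrArg (WithLp.equiv 2 _) h)
  have : 0 < ‖ev x‖ := norm_pos_iff.mpr hx'
  rw [← Complex.ofReal_mul, Complex.ofReal_re]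
  positivity

lemma pd_congr {M : Matrix ι ι ℂ} (hM : M.PosDef) (N : Matrix ι ι ℂ) (hN : IsUnit N.det) :
    (Nᴴ * M * N).PosDef := by
  refine .of_dotProduct_mulVec_pos (Matrix.isHermitian_conjTranspose_mul_mul N hM.1) fun x hx => ?_
  have hx' : N *ᵥ x ≠ 0 := by
    have hinj := Matrix.mulVec_injective_iff_isUnit.mpr (Matrix.isUnit_iff_isUnit_det N |>.mpr hN)
    intro h
    exact hx (hinj (by simpa using h))
  have : star x ⬝ᵥ ((Nᴴ * M * N) *ᵥ x) = star (N *ᵥ x) ⬝ᵥ (M *ᵥ (N *ᵥ x)) := by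
    rw [← Matrix.mulVec_mulVec, ← Matrix.mulVec_mulVec, Matrix.star_mulVec,
      ← Matrix.dotProduct_mulVec]
  rw [this]
  exact hM.dotProduct_mulVec_pos hx'

lemma isUnit_det_of_pd {M : Matrix ι ι ℂ} (hM : M.PosDef) : IsUnit M.det :=
  hM.det_pos.ne'.isUnit

lemma inv_antitone {X Y : Matrix ι ι ℂ} (hX : X.PosDef) (hY : Y.PosDef)
    (h : (Y - X).PosSemidef) : (X⁻¹ - Y⁻¹).PosSemidef := by
  have hdX := isUnit_det_of_pd hX
  have hdY := isUnit_det_of_pd hY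
  have h1 : ∀ Z : Matrix ι ι ℂ, X * (X⁻¹ * Z) = Z := fun Z => by
    rw [← Matrix.mul_assoc, Matrix.mul_nonsing_inv _ hdX, Matrix.one_mul]
  have h2 : ∀ Z : Matrix ι ι ℂ, Y⁻¹ * (Y * Z) = Z := fun Z => by
    rw [← Matrix.mul_assoc, Matrix.nonsing_inv_mul _ hdY, Matrix.one_mul]
  have h3 : ∀ Z : Matrix ι ι ℂ, X⁻¹ * (X * Z) = Z := fun Z => by
    rw [← Matrix.mul_assoc, Matrix.nonsing_inv_mul _ hdX, Matrix.one_mul]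
  have h4 : ∀ Z : Matrix ι ι ℂ, Y * (Y⁻¹ * Z) = Z := fun Z => by
    rw [← Matrix.mul_assoc, Matrix.mul_nonsing_inv _ hdY, Matrix.one_mul]
  have key : X⁻¹ - Y⁻¹
      = (Y⁻¹ - X⁻¹)ᴴ * X * (Y⁻¹ - X⁻¹) + Y⁻¹ᴴ * (Y - X) * Y⁻¹ := by
    rw [(hY.1.inv.sub hX.1.inv).eq, hY.1.inv.eq]
    simp only [Matrix.sub_mul, Matrix.mul_sub, Matrix.mul_assoc, h1, h2, h3, h4,
      Matrix.mul_nonsing_inv _ hdX, Matrix.nonsing_inv_mul _ hdY,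
      Matrix.mul_one, Matrix.one_mul]
    abel
  rw [key]
  exact ((hX.posSemidef.conjTranspose_mul_mul_same _).add
    (h.conjTranspose_mul_mul_same _))

end S4

namespace S4
variable {ι : Type*} [Fintype ι] [DecidableEq ι]

lemma isClosed_nonnegℂ : IsClosed {z : ℂ | 0 ≤ z} := by
  have : {z : ℂ | 0 ≤ z} = Complex.re ⁻¹' (Set.Ici 0) ∩ Complex.im ⁻¹' {0} := by
    ext z
    simp only [Set.mem_setOf_eq, Complex.le_def, Set.mem_inter_iff, Set.mem_preimage,
      Set.mem_Ici, Set.mem_singleton_iff, Complex.zero_re, Complex.zero_im]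
    tauto
  rw [this]
  exact (isClosed_Ici.preimage Complex.continuous_re).inter
    (isClosed_singleton.preimage Complex.continuous_im)

lemma continuous_conjT : Continuous (fun M : Matrix ι ι ℂ => Mᴴ) := by
  let L : Matrix ι ι ℂ →ₗ[ℝ] Matrix ι ι ℂ :=
    { toFun := fun M => Mᴴ
      map_add' := fun M N => Matrix.conjTranspose_add M N
      map_smul' := fun r M => by
        ext i j
        simp [Matrix.conjTranspose_apply, star_smul] }
  exact L.continuous_of_finiteDimensional

lemma continuous_dot (x : ι → ℂ) :
    Continuous (fun M : Matrix ι ι ℂ => star x ⬝ᵥ M *ᵥ x) := by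
  let L : Matrix ι ι ℂ →ₗ[ℂ] ℂ :=
    { toFun := fun M => star x ⬝ᵥ M *ᵥ x
      map_add' := fun M N => by
        simp only [Matrix.add_mulVec, dotProduct_add]
      map_smul' := fun r M => by
        simp only [Matrix.smul_mulVec, dotProduct_smul, RingHom.id_apply,
          smul_eq_mul] }
  exact L.continuous_of_finiteDimensional

lemma isClosed_psd : IsClosed {M : Matrix ι ι ℂ | M.PosSemidef} := by
  have : {M : Matrix ι ι ℂ | M.PosSemidef}
      = {M : Matrix ι ι ℂ | Mᴴ = M} ∩ ⋂ x : ι → ℂ, {M | 0 ≤ star x ⬝ᵥ M *ᵥ x} := by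
    ext M
    simp only [Set.mem_setOf_eq, Set.mem_inter_iff, Set.mem_iInter]
    exact ⟨fun h => ⟨h.1, h.dotProduct_mulVec_nonneg⟩, fun h => .of_dotProduct_mulVec_nonneg h.1 h.2⟩
  rw [this]
  refine IsClosed.inter ?_ (isClosed_iInter fun x => ?_)
  · exact isClosed_eq continuous_conjT continuous_id
  · exact isClosed_nonnegℂ.preimage (continuous_dot x)

lemma inv_norm_le {M : Matrix ι ι ℂ} {c : ℝ} (hc : 0 < c) (hM : M.PosDef)
    (h : (M - (c : ℂ) • 1).PosSemidef) : ‖M⁻¹‖ ≤ 1 / c := by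
  refine opNorm_le (by positivity) fun x => ?_
  set y := M⁻¹ *ᵥ x with hy
  have hMy : M *ᵥ y = x := by
    rw [hy, Matrix.mulVec_mulVec, Matrix.mul_nonsing_inv _ (isUnit_det_of_pd hM),
      Matrix.one_mulVec]
  have hkey : c * ‖ev y‖ ^ 2 ≤ ‖ev y‖ * ‖ev x‖ := by
    have e1 : (star y ⬝ᵥ ((c : ℂ) • (1 : Matrix ι ι ℂ)) *ᵥ y).re = c * ‖ev y‖ ^ 2 := by
      rw [dot_smul_one, dot_self_eq_norm, ← Complex.ofReal_mul, Complex.ofReal_re]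
    have e2 : 0 ≤ (star y ⬝ᵥ (M - (c : ℂ) • 1) *ᵥ y).re := re_of_psd h y
    have e3 : (star y ⬝ᵥ (M - (c : ℂ) • 1) *ᵥ y).re
        = (star y ⬝ᵥ M *ᵥ y).re - (star y ⬝ᵥ ((c : ℂ) • (1 : Matrix ι ι ℂ)) *ᵥ y).re := by
      rw [Matrix.sub_mulVec, dotProduct_sub, Complex.sub_re]
    have e4 : (star y ⬝ᵥ M *ᵥ y).re ≤ ‖ev y‖ * ‖ev x‖ := by
      rw [hMy]
      have : star y ⬝ᵥ x = inner ℂ (ev y) (ev x) :=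
        (dotProduct_comm _ _).trans (EuclideanSpace.inner_toLp_toLp y x).symm
      rw [this]
      exact re_inner_le_norm (𝕜 := ℂ) _ _
    linarith
  rcases eq_or_lt_of_le (norm_nonneg (ev y)) with h0 | h0
  · rw [← h0]
    positivity
  · have : c * ‖ev y‖ ≤ ‖ev x‖ := by nlinarith
    rw [div_mul_eq_mul_div, le_div_iff₀ hc]
    nlinarith

end S4

namespace S4

section core
variable {m n : ℕ}

local notation "Mat" => Matrix (Fin n) (Fin n) ℂ
local notation "hat" Y => (1 : Matrix (Fin m) (Fin m) ℂ) ⊗ₖ Y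

lemma dot_conj {ι κ : Type*} [Fintype ι] [Fintype κ]
    (N : Matrix κ ι ℂ) (M : Matrix κ κ ℂ) (x : ι → ℂ) :
    star x ⬝ᵥ ((Nᴴ * M * N) *ᵥ x) = star (N *ᵥ x) ⬝ᵥ (M *ᵥ (N *ᵥ x)) := by
  rw [← Matrix.mulVec_mulVec, ← Matrix.mulVec_mulVec, Matrix.star_mulVec,
    ← Matrix.dotProduct_mulVec]

lemma hat_inv_eq {Y : Mat} : (hat Y)⁻¹ = (hat Y⁻¹) := by
  rw [Matrix.inv_kronecker,
    show (1 : Matrix (Fin m) (Fin m) ℂ)⁻¹ = 1 from inv_eq_right_inv (mul_one 1)]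

lemma half_smul_one_eq : ((1/2 : ℂ) • (1 : Matrix (Fin m × Fin n) (Fin m × Fin n) ℂ))
    = (hat ((1/2 : ℂ) • (1 : Mat))) := by
  rw [Matrix.kronecker_smul, Matrix.one_kronecker_one]

set_option maxHeartbeats 1600000 in
theorem core (B : Matrix (Fin m × Fin n) (Fin n) ℂ) (hB : ‖B‖ < 1 / 2) :
    ∃ Y_L : Mat, Y_L.PosDef ∧
      Y_L + Bᴴ * (hat Y_L)⁻¹ * B = 1 ∧
      (∀ Y : Mat, Y.PosDef → Y + Bᴴ * (hat Y)⁻¹ * B = 1 → (Y_L - Y).PosSemidef) ∧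
      (Y_L - (1/2 : ℂ) • 1).PosSemidef ∧ ((1 : Mat) - Y_L).PosSemidef ∧
      (∀ Y : Mat, Y.PosDef → Y + Bᴴ * (hat Y)⁻¹ * B = 1 →
        (Y - (1/2 : ℂ) • 1).PosSemidef → ((1 : Mat) - Y).PosSemidef → Y = Y_L) := by
  classical
  have hB0 : (0:ℝ) ≤ ‖B‖ := norm_nonneg B
  have hhalf : ((1/2 : ℝ) : ℂ) = (1/2 : ℂ) := by norm_num
  -- the set S
  set S : Set Mat := ((fun Y : Mat => Y - (1/2 : ℂ) • 1) ⁻¹' {M : Mat | M.PosSemidef})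
    ∩ ((fun Y : Mat => 1 - Y) ⁻¹' {M : Mat | M.PosSemidef}) with hS
  have memS : ∀ Y : Mat, Y ∈ S ↔ (Y - (1/2 : ℂ) • 1).PosSemidef ∧ ((1 : Mat) - Y).PosSemidef :=
    fun Y => Iff.rfl
  have hSpd : ∀ Y ∈ S, Y.PosDef := by
    intro Y hY
    have h1 : Y = (1/2 : ℂ) • 1 + (Y - (1/2 : ℂ) • 1) := by abel
    have h2 : ((1/2 : ℂ) • (1 : Mat)).PosDef := by
      rw [← hhalf]; exact pd_smul_one (by norm_num)
    rw [h1]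
    exact h2.add_posSemidef ((memS Y).mp hY).1
  -- the iteration map
  set g : Mat → Mat := fun Y => 1 - Bᴴ * (hat Y)⁻¹ * B with hg
  -- basic facts for Y ∈ S
  have hatpd : ∀ Y : Mat, Y.PosDef → ((hat Y)).PosDef := fun Y hY => pd_kron hY
  have hatinvpd : ∀ Y : Mat, Y.PosDef → ((hat Y)⁻¹).PosDef := fun Y hY => (pd_kron hY).inv
  have hbnd : ∀ Y ∈ S, ‖(hat Y)⁻¹‖ ≤ 2 := by
    intro Y hY
    have hpd := hatpd Y (hSpd Y hY)
    have hpsd : ((hat Y) - ((1/2 : ℝ) : ℂ) • 1).PosSemidef := by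
      rw [hhalf, half_smul_one_eq, ← kron_sub]
      exact psd_kron ((memS Y).mp hY).1
    have := inv_norm_le (c := 1/2) (by norm_num) hpd hpsd
    linarith
  -- g maps S into S
  have hgS : ∀ Y ∈ S, g Y ∈ S := by
    intro Y hY
    have hpdY := hSpd Y hY
    have hpsdT : (Bᴴ * (hat Y)⁻¹ * B).PosSemidef :=
      (hatinvpd Y hpdY).posSemidef.conjTranspose_mul_mul_same B
    refine (memS _).mpr ⟨?_, ?_⟩
    · -- g Y - (1/2)•1 = (1/2)•1 - T
      have e : g Y - (1/2 : ℂ) • 1 = (1/2 : ℂ) • (1 : Mat) - Bᴴ * (hat Y)⁻¹ * B := by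
        rw [hg]; module
      rw [e]
      have hermhalf : ((1/2 : ℂ) • (1 : Mat)).IsHermitian := by
        rw [← hhalf]; exact herm_smul_one (1/2)
      refine psd_of_re (Matrix.IsHermitian.sub hermhalf
        (Matrix.isHermitian_conjTranspose_mul_mul B (hatinvpd Y hpdY).1)) fun x => ?_
      have e2 : (star x ⬝ᵥ ((1/2 : ℂ) • (1 : Mat)) *ᵥ x).re = 1/2 * ‖ev x‖ ^ 2 := by
        rw [dot_smul_one, dot_self_eq_norm, ← hhalf, ← Complex.ofReal_mul, Complex.ofReal_re]
      have e3 : (star x ⬝ᵥ (Bᴴ * (hat Y)⁻¹ * B) *ᵥ x).re ≤ 2 * ‖B‖ ^ 2 * ‖ev x‖ ^ 2 := by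
        rw [dot_conj]
        calc (star (B *ᵥ x) ⬝ᵥ ((hat Y)⁻¹ *ᵥ (B *ᵥ x))).re
            ≤ ‖(hat Y)⁻¹‖ * ‖ev (B *ᵥ x)‖ ^ 2 := re_dot_le_norm _ _
          _ ≤ 2 * ‖B‖ ^ 2 * ‖ev x‖ ^ 2 := by
              have b1 := hbnd Y hY
              have b2 := ev_mulVec_norm B x
              have b3 : (0:ℝ) ≤ ‖ev (B *ᵥ x)‖ := norm_nonneg _
              have b4 : (0:ℝ) ≤ ‖ev x‖ := norm_nonneg _
              nlinarith [norm_nonneg ((hat Y)⁻¹)]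
      have e4 : (star x ⬝ᵥ ((1/2 : ℂ) • (1 : Mat) - Bᴴ * (hat Y)⁻¹ * B) *ᵥ x).re
          = (star x ⬝ᵥ ((1/2 : ℂ) • (1 : Mat)) *ᵥ x).re
            - (star x ⬝ᵥ (Bᴴ * (hat Y)⁻¹ * B) *ᵥ x).re := by
        rw [Matrix.sub_mulVec, dotProduct_sub, Complex.sub_re]
      rw [e4, e2]
      have b4 : (0:ℝ) ≤ ‖ev x‖ := norm_nonneg _
      have key : 2 * ‖B‖ ^ 2 * ‖ev x‖ ^ 2 ≤ 1/2 * ‖ev x‖ ^ 2 := by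
        have hq : (0:ℝ) ≤ (1/2 - ‖B‖) * (1/2 + ‖B‖) * ‖ev x‖ ^ 2 :=
          mul_nonneg (mul_nonneg (by linarith) (by linarith)) (sq_nonneg _)
        nlinarith [hq, sq_nonneg ‖ev x‖]
      linarith
    · -- 1 - g Y = T
      have e : (1 : Mat) - g Y = Bᴴ * (hat Y)⁻¹ * B := sub_sub_cancel _ _
      rw [e]; exact hpsdT
  -- difference identity & contraction
  have hdiff : ∀ Y ∈ S, ∀ Z ∈ S,
      g Y - g Z = Bᴴ * ((hat Z)⁻¹ * (((hat Y) - (hat Z)) * (hat Y)⁻¹)) * B := by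
    intro Y hY Z hZ
    have hdY := isUnit_det_of_pd (hatpd Y (hSpd Y hY))
    have hdZ := isUnit_det_of_pd (hatpd Z (hSpd Z hZ))
    have key : (hat Z)⁻¹ * (((hat Y) - (hat Z)) * (hat Y)⁻¹) = (hat Z)⁻¹ - (hat Y)⁻¹ := by
      rw [Matrix.sub_mul, Matrix.mul_sub, Matrix.mul_nonsing_inv _ hdY,
        ← Matrix.mul_assoc, Matrix.nonsing_inv_mul _ hdZ, Matrix.one_mul, Matrix.mul_one]
    rw [key, hg]
    simp only [Matrix.mul_sub, Matrix.sub_mul]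
    abel
  have hlip : ∀ Y ∈ S, ∀ Z ∈ S, ‖g Y - g Z‖ ≤ 4 * ‖B‖ ^ 2 * ‖Y - Z‖ := by
    intro Y hY Z hZ
    rw [hdiff Y hY Z hZ]
    set D := (hat Z)⁻¹ * (((hat Y) - (hat Z)) * (hat Y)⁻¹) with hD
    have h1 : ‖(hat Y) - (hat Z)‖ ≤ ‖Y - Z‖ := by
      rw [← kron_sub]; exact kron_norm_le _
    have h2 := hbnd Y hY
    have h3 := hbnd Z hZ
    have n1 : (0:ℝ) ≤ ‖(hat Y)⁻¹‖ := norm_nonneg _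
    have n2 : (0:ℝ) ≤ ‖(hat Z)⁻¹‖ := norm_nonneg _
    have n3 : (0:ℝ) ≤ ‖(hat Y) - (hat Z)‖ := norm_nonneg _
    have n4 : (0:ℝ) ≤ ‖Y - Z‖ := norm_nonneg _
    have t3 : ‖D‖ ≤ ‖(hat Z)⁻¹‖ * ‖((hat Y) - (hat Z)) * (hat Y)⁻¹‖ := Matrix.l2_opNorm_mul _ _
    have t4 : ‖((hat Y) - (hat Z)) * (hat Y)⁻¹‖ ≤ ‖(hat Y) - (hat Z)‖ * ‖(hat Y)⁻¹‖ :=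
      Matrix.l2_opNorm_mul _ _
    have hDle : ‖D‖ ≤ 4 * ‖Y - Z‖ := by nlinarith [norm_nonneg (((hat Y) - (hat Z)) * (hat Y)⁻¹)]
    have t1 : ‖Bᴴ * D * B‖ ≤ ‖Bᴴ * D‖ * ‖B‖ := Matrix.l2_opNorm_mul _ _
    have t2 : ‖Bᴴ * D‖ ≤ ‖Bᴴ‖ * ‖D‖ := Matrix.l2_opNorm_mul _ _
    have tc : ‖Bᴴ‖ = ‖B‖ := Matrix.l2_opNorm_conjTranspose B
    rw [tc] at t2
    have nD : (0:ℝ) ≤ ‖D‖ := norm_nonneg _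
    have nBD : (0:ℝ) ≤ ‖Bᴴ * D‖ := norm_nonneg _
    nlinarith
  -- fixed points of g are exactly solutions of the equation
  have heqfix : ∀ Y : Mat, Y + Bᴴ * (hat Y)⁻¹ * B = 1 → g Y = Y := by
    intro Y hYeq
    have hTY : (1 : Mat) - Y = Bᴴ * (hat Y)⁻¹ * B := by rw [← hYeq]; abel
    show (1 : Mat) - Bᴴ * (hat Y)⁻¹ * B = Y
    rw [← hTY, sub_sub_cancel]
  -- completeness setup
  have hclosed : IsClosed S := by
    refine IsClosed.inter (isClosed_psd.preimage ?_) (isClosed_psd.preimage ?_)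
    · exact continuous_id.sub continuous_const
    · exact continuous_const.sub continuous_id
  have h1S : (1 : Mat) ∈ S := by
    refine (memS 1).mpr ⟨?_, ?_⟩
    · have e : (1 : Mat) - (1/2 : ℂ) • 1 = (1/2 : ℂ) • (1 : Mat) := by module
      rw [e, ← hhalf]
      exact psd_smul_one (by norm_num)
    · rw [sub_self]; exact Matrix.PosSemidef.zero
  haveI : Nonempty S := ⟨⟨1, h1S⟩⟩
  haveI : CompleteSpace S := hclosed.completeSpace_coe
  set g' : S → S := fun Y => ⟨g Y.1, hgS Y.1 Y.2⟩ with hg'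
  set Knn : NNReal := 4 * ‖B‖₊ ^ 2 with hKnn
  have hKcoe : (Knn : ℝ) = 4 * ‖B‖ ^ 2 := by
    rw [hKnn]; push_cast; rfl
  have hKlt : Knn < 1 := by
    rw [← NNReal.coe_lt_coe, hKcoe]
    push_cast
    nlinarith
  have hcon : ContractingWith Knn g' := by
    refine ⟨hKlt, LipschitzWith.of_dist_le_mul fun Y Z => ?_⟩
    rw [Subtype.dist_eq, Subtype.dist_eq, dist_eq_norm, dist_eq_norm, hKcoe]
    exact hlip Y.1 Y.2 Z.1 Z.2
  set YL : S := ContractingWith.fixedPoint g' hcon with hYL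
  have hfix : g' YL = YL := hcon.fixedPoint_isFixedPt
  have hfixval : g YL.1 = YL.1 := congrArg Subtype.val hfix
  refine ⟨YL.1, hSpd _ YL.2, ?_, ?_, ((memS _).mp YL.2).1, ((memS _).mp YL.2).2, ?_⟩
  · -- the equation
    nth_rewrite 1 [← hfixval]
    show (1 : Mat) - Bᴴ * (hat YL.1)⁻¹ * B + Bᴴ * (hat YL.1)⁻¹ * B = 1
    rw [sub_add_cancel]
  · -- maximality
    intro Y hYpd hYeq
    have hTY : (1 : Mat) - Y = Bᴴ * (hat Y)⁻¹ * B := by rw [← hYeq]; abel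
    have hfixY : g Y = Y := heqfix Y hYeq
    set W : ℕ → S := fun k => g'^[k] ⟨1, h1S⟩ with hW
    have hWsucc : ∀ k, (W (k+1)).1 = g (W k).1 := by
      intro k
      rw [hW]
      simp only [Function.iterate_succ_apply']
      rfl
    have hmono : ∀ k, ((W k).1 - Y).PosSemidef := by
      intro k
      induction k with
      | zero =>
        have : (W 0).1 = (1 : Mat) := rfl
        rw [this, hTY]
        exact (hatinvpd Y hYpd).posSemidef.conjTranspose_mul_mul_same B
      | succ k ih =>
        have hWpd : (W k).1.PosDef := hSpd _ (W k).2
        have hinv : ((hat Y)⁻¹ - (hat (W k).1)⁻¹).PosSemidef := by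
          apply inv_antitone (hatpd _ hYpd) (hatpd _ hWpd)
          rw [← kron_sub]
          exact psd_kron ih
        have e : (W (k+1)).1 - Y = Bᴴ * ((hat Y)⁻¹ - (hat (W k).1)⁻¹) * B := by
          rw [hWsucc k]
          have e1 : g (W k).1 - Y = ((1 : Mat) - Y) - Bᴴ * (hat (W k).1)⁻¹ * B := by
            show (1 : Mat) - Bᴴ * (hat (W k).1)⁻¹ * B - Y = _
            abel
          rw [e1, hTY]
          simp only [Matrix.sub_mul, Matrix.mul_sub]
        rw [e]
        exact hinv.conjTranspose_mul_mul_same B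
    have hlim : Filter.Tendsto (fun k => (W k).1) Filter.atTop (nhds YL.1) :=
      (continuous_subtype_val.tendsto YL).comp (hcon.tendsto_iterate_fixedPoint ⟨1, h1S⟩)
    have hlim2 : Filter.Tendsto (fun k => (W k).1 - Y) Filter.atTop (nhds (YL.1 - Y)) :=
      hlim.sub tendsto_const_nhds
    exact isClosed_psd.mem_of_tendsto hlim2 (Filter.Eventually.of_forall hmono)
  · -- uniqueness
    intro Y hYpd hYeq hlow hup
    have hyS : Y ∈ S := (memS Y).mpr ⟨hlow, hup⟩
    have hfixY : g' ⟨Y, hyS⟩ = ⟨Y, hyS⟩ := Subtype.ext (heqfix Y hYeq)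
    have := hcon.fixedPoint_unique hfixY
    exact congrArg Subtype.val this

end core
end S4

set_option maxHeartbeats 1600000 in
/-- (Remark 2.2 of the paper.) If `‖(I_m ⊗ Q^{-1/2}) A Q^{-1/2}‖ < 1/2`
(spectral norm), then `X + Aᴴ X̂⁻¹ A = Q` has a maximal Hermitian positive definite solution
`X_L` with `(1/2)Q ≤ X_L ≤ Q`, and `X_L` is the unique Hermitian positive definite solution
lying in `[(1/2)Q, Q]`. -/
theorem statement4 (m n : ℕ) (hm : 0 < m) (hn : 0 < n)
    (Q : Matrix (Fin n) (Fin n) ℂ) (hQ : Q.PosDef)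
    (sqrtQ : Matrix (Fin n) (Fin n) ℂ) (hsqrtQ : sqrtQ.PosDef) (hsq : sqrtQ * sqrtQ = Q)
    (A : Matrix (Fin m × Fin n) (Fin n) ℂ)
    (hA : ‖((1 : Matrix (Fin m) (Fin m) ℂ) ⊗ₖ sqrtQ⁻¹) * A * sqrtQ⁻¹‖ < 1 / 2) :
    ∃ X_L : Matrix (Fin n) (Fin n) ℂ, X_L.PosDef ∧
      X_L + Aᴴ * ((1 : Matrix (Fin m) (Fin m) ℂ) ⊗ₖ X_L)⁻¹ * A = Q ∧
      (∀ X : Matrix (Fin n) (Fin n) ℂ, X.PosDef →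
        X + Aᴴ * ((1 : Matrix (Fin m) (Fin m) ℂ) ⊗ₖ X)⁻¹ * A = Q → (X_L - X).PosSemidef) ∧
      (X_L - (1 / 2 : ℂ) • Q).PosSemidef ∧
      (Q - X_L).PosSemidef ∧
      (∀ X : Matrix (Fin n) (Fin n) ℂ, X.PosDef →
        X + Aᴴ * ((1 : Matrix (Fin m) (Fin m) ℂ) ⊗ₖ X)⁻¹ * A = Q →
        (X - (1 / 2 : ℂ) • Q).PosSemidef → (Q - X).PosSemidef → X = X_L) := by
  classical
  have hdSq : IsUnit sqrtQ.det := S4.isUnit_det_of_pd hsqrtQ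
  have hSipd : (sqrtQ⁻¹).PosDef := hsqrtQ.inv
  have hc1 : sqrtQ * sqrtQ⁻¹ = 1 := Matrix.mul_nonsing_inv _ hdSq
  have hc2 : sqrtQ⁻¹ * sqrtQ = 1 := Matrix.nonsing_inv_mul _ hdSq
  have hSqH : sqrtQᴴ = sqrtQ := hsqrtQ.1
  have hSiH : (sqrtQ⁻¹)ᴴ = sqrtQ⁻¹ := hsqrtQ.1.inv
  set B : Matrix (Fin m × Fin n) (Fin n) ℂ
    := ((1 : Matrix (Fin m) (Fin m) ℂ) ⊗ₖ sqrtQ⁻¹) * A * sqrtQ⁻¹ with hBdef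
  -- conjugation helpers
  have unconj : ∀ M : Matrix (Fin n) (Fin n) ℂ,
      sqrtQ⁻¹ * (sqrtQ * M * sqrtQ) * sqrtQ⁻¹ = M := by
    intro M
    simp only [Matrix.mul_assoc, hc1, Matrix.mul_one]
    rw [← Matrix.mul_assoc, hc2, Matrix.one_mul]
  have conj : ∀ M : Matrix (Fin n) (Fin n) ℂ,
      sqrtQ * (sqrtQ⁻¹ * M * sqrtQ⁻¹) * sqrtQ = M := by
    intro M
    simp only [Matrix.mul_assoc, hc2, Matrix.mul_one]
    rw [← Matrix.mul_assoc, hc1, Matrix.one_mul]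
  have psd_conj_Sq : ∀ M : Matrix (Fin n) (Fin n) ℂ, M.PosSemidef →
      (sqrtQ * M * sqrtQ).PosSemidef := by
    intro M hM
    have := hM.conjTranspose_mul_mul_same sqrtQ
    rwa [hSqH] at this
  have psd_conj_Si : ∀ M : Matrix (Fin n) (Fin n) ℂ, M.PosSemidef →
      (sqrtQ⁻¹ * M * sqrtQ⁻¹).PosSemidef := by
    intro M hM
    have := hM.conjTranspose_mul_mul_same sqrtQ⁻¹
    rwa [hSiH] at this
  have pd_conj_Sq : ∀ M : Matrix (Fin n) (Fin n) ℂ, M.PosDef →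
      (sqrtQ * M * sqrtQ).PosDef := by
    intro M hM
    have := S4.pd_congr hM sqrtQ hdSq
    rwa [hSqH] at this
  have pd_conj_Si : ∀ M : Matrix (Fin n) (Fin n) ℂ, M.PosDef →
      (sqrtQ⁻¹ * M * sqrtQ⁻¹).PosDef := by
    intro M hM
    have := S4.pd_congr hM sqrtQ⁻¹ (S4.isUnit_det_of_pd hSipd)
    rwa [hSiH] at this
  have hBH : Bᴴ = sqrtQ⁻¹ * (Aᴴ * ((1 : Matrix (Fin m) (Fin m) ℂ) ⊗ₖ sqrtQ⁻¹)) := by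
    rw [hBdef, Matrix.conjTranspose_mul, Matrix.conjTranspose_mul, S4.kron_conjT, hSiH]
  -- the key conjugation identity
  have key : ∀ Y : Matrix (Fin n) (Fin n) ℂ,
      sqrtQ * (Y + Bᴴ * ((1 : Matrix (Fin m) (Fin m) ℂ) ⊗ₖ Y)⁻¹ * B) * sqrtQ
        = (sqrtQ * Y * sqrtQ)
          + Aᴴ * ((1 : Matrix (Fin m) (Fin m) ℂ) ⊗ₖ (sqrtQ * Y * sqrtQ))⁻¹ * A := by
    intro Y
    have h1 : ((1 : Matrix (Fin m) (Fin m) ℂ) ⊗ₖ (sqrtQ * Y * sqrtQ))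
        = (((1 : Matrix (Fin m) (Fin m) ℂ) ⊗ₖ sqrtQ)
            * ((1 : Matrix (Fin m) (Fin m) ℂ) ⊗ₖ Y))
          * ((1 : Matrix (Fin m) (Fin m) ℂ) ⊗ₖ sqrtQ) := by
      rw [← Matrix.mul_kronecker_mul, ← Matrix.mul_kronecker_mul, Matrix.one_mul, Matrix.one_mul]
    have hSqk : ((1 : Matrix (Fin m) (Fin m) ℂ) ⊗ₖ sqrtQ)⁻¹
        = (1 : Matrix (Fin m) (Fin m) ℂ) ⊗ₖ sqrtQ⁻¹ := S4.hat_inv_eq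
    have hinvX : ((1 : Matrix (Fin m) (Fin m) ℂ) ⊗ₖ (sqrtQ * Y * sqrtQ))⁻¹
        = ((1 : Matrix (Fin m) (Fin m) ℂ) ⊗ₖ sqrtQ⁻¹)
          * (((1 : Matrix (Fin m) (Fin m) ℂ) ⊗ₖ Y)⁻¹
            * ((1 : Matrix (Fin m) (Fin m) ℂ) ⊗ₖ sqrtQ⁻¹)) := by
      rw [h1, Matrix.mul_inv_rev, Matrix.mul_inv_rev, hSqk]
    rw [Matrix.mul_add, Matrix.add_mul, hinvX, hBH, hBdef]
    congr 1
    simp only [Matrix.mul_assoc]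
    rw [← Matrix.mul_assoc sqrtQ sqrtQ⁻¹ _, hc1, Matrix.one_mul]
    rw [show sqrtQ⁻¹ * sqrtQ = 1 from hc2, Matrix.mul_one]
  -- apply the core theorem
  obtain ⟨Y_L, hYLpd, hYLeq, hYLmax, hYLlow, hYLup, hYLuniq⟩ := S4.core B hA
  refine ⟨sqrtQ * Y_L * sqrtQ, pd_conj_Sq _ hYLpd, ?_, ?_, ?_, ?_, ?_⟩
  · -- equation
    have := key Y_L
    rw [hYLeq] at this
    rw [← this, Matrix.mul_one, hsq]
  · -- maximality
    intro X hXpd hXeq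
    set Y : Matrix (Fin n) (Fin n) ℂ := sqrtQ⁻¹ * X * sqrtQ⁻¹ with hYdef
    have hYpd : Y.PosDef := pd_conj_Si _ hXpd
    have hXY : sqrtQ * Y * sqrtQ = X := conj X
    have hYeq : Y + Bᴴ * ((1 : Matrix (Fin m) (Fin m) ℂ) ⊗ₖ Y)⁻¹ * B = 1 := by
      have hk := key Y
      rw [hXY, hXeq] at hk
      have := congrArg (fun M => sqrtQ⁻¹ * M * sqrtQ⁻¹) hk
      rw [unconj] at this
      rw [this, ← hsq]
      simp only [Matrix.mul_assoc, hc1, Matrix.mul_one]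
      exact hc2
    have hps := hYLmax Y hYpd hYeq
    have := psd_conj_Sq _ hps
    rwa [Matrix.mul_sub, Matrix.sub_mul, hXY] at this
  · -- lower bound
    have := psd_conj_Sq _ hYLlow
    rw [Matrix.mul_sub, Matrix.sub_mul] at this
    have e : sqrtQ * ((1 / 2 : ℂ) • (1 : Matrix (Fin n) (Fin n) ℂ)) * sqrtQ
        = (1 / 2 : ℂ) • Q := by
      rw [Matrix.mul_smul, Matrix.smul_mul, Matrix.mul_one, hsq]
    rwa [e] at this
  · -- upper bound
    have := psd_conj_Sq _ hYLup
    rw [Matrix.mul_sub, Matrix.sub_mul, Matrix.mul_one, hsq] at this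
    exact this
  · -- uniqueness
    intro X hXpd hXeq hlow hup
    set Y : Matrix (Fin n) (Fin n) ℂ := sqrtQ⁻¹ * X * sqrtQ⁻¹ with hYdef
    have hYpd : Y.PosDef := pd_conj_Si _ hXpd
    have hXY : sqrtQ * Y * sqrtQ = X := conj X
    have hYeq : Y + Bᴴ * ((1 : Matrix (Fin m) (Fin m) ℂ) ⊗ₖ Y)⁻¹ * B = 1 := by
      have hk := key Y
      rw [hXY, hXeq] at hk
      have := congrArg (fun M => sqrtQ⁻¹ * M * sqrtQ⁻¹) hk
      rw [unconj] at this
      rw [this, ← hsq]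
      simp only [Matrix.mul_assoc, hc1, Matrix.mul_one]
      exact hc2
    have hYlow : (Y - (1 / 2 : ℂ) • (1 : Matrix (Fin n) (Fin n) ℂ)).PosSemidef := by
      have := psd_conj_Si _ hlow
      rw [Matrix.mul_sub, Matrix.sub_mul] at this
      have e : sqrtQ⁻¹ * ((1 / 2 : ℂ) • Q) * sqrtQ⁻¹
          = (1 / 2 : ℂ) • (1 : Matrix (Fin n) (Fin n) ℂ) := by
        rw [Matrix.mul_smul, Matrix.smul_mul, ← hsq]
        congr 1
        simp only [Matrix.mul_assoc, hc1, Matrix.mul_one, hc2]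
      rwa [e] at this
    have hYup : ((1 : Matrix (Fin n) (Fin n) ℂ) - Y).PosSemidef := by
      have := psd_conj_Si _ hup
      rw [Matrix.mul_sub, Matrix.sub_mul] at this
      have e : sqrtQ⁻¹ * Q * sqrtQ⁻¹ = (1 : Matrix (Fin n) (Fin n) ℂ) := by
        rw [← hsq]
        simp only [Matrix.mul_assoc, hc1, Matrix.mul_one, hc2]
      rwa [e] at this
    have := hYLuniq Y hYpd hYeq hYlow hYup
    rw [← hXY, this]
end

section
/- Let m, n be positive integers, let Q be an n×n Hermitian positive definite matrix, and let A be an (mn)×n complex matrix with n×n blocks A₁,…,A_m (so A is the block column of the A_i and A* X̂^{-1} A = Σ_{i=1}^m A_i* X^{-1} A_i). Suppose the equation X + A* X̂^{-1} A = Q has a maximal Hermitian positive definite solution X_L (i.e. X ≤ X_L for every Hermitian positive definite solution X). If X₊ is a Hermitian positive definite solution of this equation such that the spectral radius of the n²×n² matrix Σ_{i=1}^m (X₊^{-1}A_i)^T ⊗ (X₊^{-1}A_i)* is strictly less than 1, then X₊ = X_L. -/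
open Matrix
open scoped Matrix.Norms.L2Operator Kronecker ComplexOrder

section Aux

open Filter
open scoped Topology ENNReal NNReal

/-- Block-sum identity: `Aᴴ (1 ⊗ₖ W) A = ∑ᵢ Aᵢᴴ W Aᵢ`. -/
private lemma aux_block_sum (m n : ℕ) (A : Matrix (Fin m × Fin n) (Fin n) ℂ)
    (W : Matrix (Fin n) (Fin n) ℂ) :
    Aᴴ * ((1 : Matrix (Fin m) (Fin m) ℂ) ⊗ₖ W) * A =
      ∑ i : Fin m, (Matrix.of fun j k => A (i, j) k)ᴴ * W * (Matrix.of fun j k => A (i, j) k) := by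
  ext k l
  simp [Matrix.mul_apply, Matrix.sum_apply, Matrix.kroneckerMap_apply, Matrix.one_apply,
    Fintype.sum_prod_type, ite_mul, mul_ite, Finset.mul_sum, Finset.sum_mul, mul_assoc]
  have hsc : ∀ (f : Fin n → Fin n → ℂ), ∑ y, ∑ x1, f y x1 = ∑ x1, ∑ y, f y x1 :=
    fun f => Finset.sum_comm
  exact Finset.sum_congr rfl fun x _ => (hsc _).symm

/-- Vectorization: `(Bᵀ ⊗ₖ Bᴴ) vec Z = vec (Bᵀ Z B̄)`. -/
private lemma aux_vec (n : ℕ) (B Z : Matrix (Fin n) (Fin n) ℂ) :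
    (Bᵀ ⊗ₖ Bᴴ) *ᵥ (fun p : Fin n × Fin n => Z p.1 p.2) =
      fun p : Fin n × Fin n => ((Bᴴᵀ)ᴴ * Z * Bᴴᵀ) p.1 p.2 := by
  have h : (Bᴴᵀ)ᴴ = Bᵀ := by ext i j; simp
  rw [h]
  funext p
  simp [Matrix.mulVec, dotProduct, Matrix.mul_apply, Fintype.sum_prod_type,
    Finset.mul_sum, Finset.sum_mul, mul_assoc, mul_comm, mul_left_comm]
  exact Finset.sum_comm

/-- A finite sum of positive semidefinite matrices is positive semidefinite. -/
private lemma aux_sum_posSemidef {ι : Type*} (s : Finset ι) {n : ℕ}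
    (f : ι → Matrix (Fin n) (Fin n) ℂ) (h : ∀ i ∈ s, (f i).PosSemidef) :
    (∑ i ∈ s, f i).PosSemidef :=
  Finset.sum_induction f _ (fun _ _ ha hb => ha.add hb) Matrix.PosSemidef.zero h

/-- Key algebraic identity for the difference of inverses. -/
private lemma aux_inv_diff {n : ℕ} (Xp XL P L : Matrix (Fin n) (Fin n) ℂ)
    (h1 : P * Xp = 1) (h2 : Xp * P = 1) (h3 : L * XL = 1) (h4 : XL * L = 1) :
    P - L = P * (XL - Xp) * P - P * (XL - Xp) * L * (XL - Xp) * P := by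
  have c1 : ∀ M : Matrix (Fin n) (Fin n) ℂ, P * (Xp * M) = M := fun M => by
    rw [← Matrix.mul_assoc, h1, Matrix.one_mul]
  have c2 : ∀ M : Matrix (Fin n) (Fin n) ℂ, Xp * (P * M) = M := fun M => by
    rw [← Matrix.mul_assoc, h2, Matrix.one_mul]
  have c3 : ∀ M : Matrix (Fin n) (Fin n) ℂ, L * (XL * M) = M := fun M => by
    rw [← Matrix.mul_assoc, h3, Matrix.one_mul]
  have c4 : ∀ M : Matrix (Fin n) (Fin n) ℂ, XL * (L * M) = M := fun M => by
    rw [← Matrix.mul_assoc, h4, Matrix.one_mul]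
  simp only [Matrix.mul_sub, Matrix.sub_mul, Matrix.mul_assoc, c1, c2, c3, c4,
    h1, h2, h3, h4, Matrix.mul_one, Matrix.one_mul]
  abel

/-- Powers of a matrix with spectral radius `< 1` tend to zero. -/
private lemma aux_pow_tendsto_zero {N : Type*} [Fintype N] [DecidableEq N] (M : Matrix N N ℂ)
    (h : spectralRadius ℂ M < 1) :
    Tendsto (fun k : ℕ => M ^ k) atTop (𝓝 0) := by
  have hg := spectrum.pow_nnnorm_pow_one_div_tendsto_nhds_spectralRadius M
  obtain ⟨r, hr1, hr2⟩ := ENNReal.lt_iff_exists_nnreal_btwn.mp h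
  have hr2' : r < 1 := by exact_mod_cast hr2
  have hev : ∀ᶠ k : ℕ in atTop, (‖M ^ k‖₊ : ℝ≥0∞) ^ (1 / (k : ℝ)) < (r : ℝ≥0∞) :=
    hg.eventually_lt_const hr1
  have hev2 : ∀ᶠ k : ℕ in atTop, ‖M ^ k‖ ≤ (r : ℝ) ^ k := by
    filter_upwards [hev, eventually_ge_atTop 1] with k hk hk1
    have hkne : (k : ℝ) ≠ 0 := by positivity
    have h2 : ((‖M ^ k‖₊ : ℝ≥0∞) ^ (1 / (k : ℝ))) ^ (k : ℝ) ≤ (r : ℝ≥0∞) ^ (k : ℝ) :=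
      ENNReal.rpow_le_rpow hk.le (by positivity)
    rw [← ENNReal.rpow_mul, one_div, inv_mul_cancel₀ hkne, ENNReal.rpow_one] at h2
    rw [ENNReal.rpow_natCast] at h2
    have h3 : (‖M ^ k‖₊ : ℝ≥0∞) ≤ ((r ^ k : ℝ≥0) : ℝ≥0∞) := by rwa [ENNReal.coe_pow]
    have h4 : ‖M ^ k‖₊ ≤ r ^ k := by exact_mod_cast h3
    calc ‖M ^ k‖ = (‖M ^ k‖₊ : ℝ) := rfl
      _ ≤ ((r ^ k : ℝ≥0) : ℝ) := by exact_mod_cast h4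
      _ = (r : ℝ) ^ k := by push_cast; ring
  have hpow : Tendsto (fun k : ℕ => (r : ℝ) ^ k) atTop (𝓝 0) :=
    tendsto_pow_atTop_nhds_zero_of_lt_one r.coe_nonneg (by exact_mod_cast hr2')
  exact squeeze_zero_norm' hev2 hpow

end Aux

/-- (Lemma 2.4 of the paper.) If `Xp` is a Hermitian positive definite solution
of `X + Aᴴ X̂⁻¹ A = Q` such that the spectral radius of
`Σᵢ (Xp⁻¹Aᵢ)ᵀ ⊗ (Xp⁻¹Aᵢ)ᴴ` is less than `1`, then `Xp` is the maximal solution `X_L`. -/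
theorem statement5 (m n : ℕ) (hm : 0 < m) (hn : 0 < n)
    (Q : Matrix (Fin n) (Fin n) ℂ) (hQ : Q.PosDef)
    (A : Matrix (Fin m × Fin n) (Fin n) ℂ)
    (X_L : Matrix (Fin n) (Fin n) ℂ) (hXL : X_L.PosDef)
    (hXLsol : X_L + Aᴴ * ((1 : Matrix (Fin m) (Fin m) ℂ) ⊗ₖ X_L)⁻¹ * A = Q)
    (hmax : ∀ X : Matrix (Fin n) (Fin n) ℂ, X.PosDef →
      X + Aᴴ * ((1 : Matrix (Fin m) (Fin m) ℂ) ⊗ₖ X)⁻¹ * A = Q → (X_L - X).PosSemidef)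
    (Xp : Matrix (Fin n) (Fin n) ℂ) (hXp : Xp.PosDef)
    (hXpsol : Xp + Aᴴ * ((1 : Matrix (Fin m) (Fin m) ℂ) ⊗ₖ Xp)⁻¹ * A = Q)
    (hrho : spectralRadius ℂ
      (∑ i : Fin m,
        ((Xp⁻¹ * Matrix.of fun j k => A (i, j) k)ᵀ ⊗ₖ
          (Xp⁻¹ * Matrix.of fun j k => A (i, j) k)ᴴ)) < 1) :
    Xp = X_L := by
  classical
  -- notation
  set Ai : Fin m → Matrix (Fin n) (Fin n) ℂ := fun i => Matrix.of fun j k => A (i, j) k with hAi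
  set B : Fin m → Matrix (Fin n) (Fin n) ℂ := fun i => Xp⁻¹ * Ai i with hB
  set Y : Matrix (Fin n) (Fin n) ℂ := X_L - Xp with hYdef
  have hY : Y.PosSemidef := hmax Xp hXp hXpsol
  -- invertibility
  have hPXp : Xp⁻¹ * Xp = 1 := Matrix.nonsing_inv_mul Xp (Matrix.isUnit_iff_isUnit_det Xp |>.mp hXp.isUnit)
  have hXpP : Xp * Xp⁻¹ = 1 := Matrix.mul_nonsing_inv Xp (Matrix.isUnit_iff_isUnit_det Xp |>.mp hXp.isUnit)
  have hLXL : X_L⁻¹ * X_L = 1 := Matrix.nonsing_inv_mul X_L (Matrix.isUnit_iff_isUnit_det X_L |>.mp hXL.isUnit)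
  have hXLL : X_L * X_L⁻¹ = 1 := Matrix.mul_nonsing_inv X_L (Matrix.isUnit_iff_isUnit_det X_L |>.mp hXL.isUnit)
  -- Hermitian facts
  have hPh : (Xp⁻¹)ᴴ = Xp⁻¹ := hXp.inv.isHermitian
  have hYh : Yᴴ = Y := hY.isHermitian
  -- the two solution equations, block form
  have hinvK : ∀ Z : Matrix (Fin n) (Fin n) ℂ,
      ((1 : Matrix (Fin m) (Fin m) ℂ) ⊗ₖ Z)⁻¹ = (1 : Matrix (Fin m) (Fin m) ℂ) ⊗ₖ Z⁻¹ := by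
    intro Z
    rw [Matrix.inv_kronecker, inv_one]
  have hsolP : Xp + ∑ i : Fin m, (Ai i)ᴴ * Xp⁻¹ * Ai i = Q := by
    rw [← aux_block_sum m n A Xp⁻¹, ← hinvK]; exact hXpsol
  have hsolL : X_L + ∑ i : Fin m, (Ai i)ᴴ * X_L⁻¹ * Ai i = Q := by
    rw [← aux_block_sum m n A X_L⁻¹, ← hinvK]; exact hXLsol
  -- Y as a block sum
  have h_sum : Y = ∑ i : Fin m, (Ai i)ᴴ * (Xp⁻¹ - X_L⁻¹) * Ai i := by
    have h0' : X_L + ∑ i : Fin m, (Ai i)ᴴ * X_L⁻¹ * Ai i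
        = (∑ i : Fin m, (Ai i)ᴴ * Xp⁻¹ * Ai i) + Xp := by
      rw [hsolL, add_comm, hsolP]
    have : Y = (∑ i : Fin m, (Ai i)ᴴ * Xp⁻¹ * Ai i) - ∑ i : Fin m, (Ai i)ᴴ * X_L⁻¹ * Ai i := by
      rw [hYdef]
      exact sub_eq_sub_iff_add_eq_add.mpr h0'
    rw [this, ← Finset.sum_sub_distrib]
    refine Finset.sum_congr rfl fun i _ => ?_
    rw [Matrix.mul_sub, Matrix.sub_mul]
  -- the difference-of-inverses identity
  have hD : Xp⁻¹ - X_L⁻¹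
      = Xp⁻¹ * Y * Xp⁻¹ - Xp⁻¹ * Y * X_L⁻¹ * Y * Xp⁻¹ := by
    rw [hYdef]
    exact aux_inv_diff Xp X_L Xp⁻¹ X_L⁻¹ hPXp hXpP hLXL hXLL
  -- the gap
  have hper : ∀ i : Fin m, (B i)ᴴ * Y * B i - (Ai i)ᴴ * (Xp⁻¹ - X_L⁻¹) * Ai i
      = (Y * B i)ᴴ * X_L⁻¹ * (Y * B i) := by
    intro i
    have hBH : (B i)ᴴ = (Ai i)ᴴ * Xp⁻¹ := by rw [hB, Matrix.conjTranspose_mul, hPh]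
    have hYBH : (Y * B i)ᴴ = (Ai i)ᴴ * Xp⁻¹ * Y := by
      rw [Matrix.conjTranspose_mul, hYh, hBH]
    rw [hYBH, hBH, hD, hB]
    simp only [Matrix.mul_sub, Matrix.sub_mul, Matrix.mul_assoc]
    abel
  have hgap : (∑ i : Fin m, (B i)ᴴ * Y * B i) - Y
      = ∑ i : Fin m, (Y * B i)ᴴ * X_L⁻¹ * (Y * B i) := by
    have hs := Finset.sum_congr rfl fun i (_ : i ∈ Finset.univ) => hper i
    rw [Finset.sum_sub_distrib, ← h_sum] at hs
    exact hs
  have hgap_psd : ((∑ i : Fin m, (B i)ᴴ * Y * B i) - Y).PosSemidef := by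
    rw [hgap]
    exact aux_sum_posSemidef _ _ fun i _ =>
      (hXL.inv.posSemidef).conjTranspose_mul_mul_same (Y * B i)
  -- transposed operator
  set C : Fin m → Matrix (Fin n) (Fin n) ℂ := fun i => (B i)ᴴᵀ with hC
  have hCH : ∀ i, (C i)ᴴ = (B i)ᵀ := by
    intro i
    ext a b
    simp [hC]
  set Φ : Matrix (Fin n) (Fin n) ℂ → Matrix (Fin n) (Fin n) ℂ :=
    fun Z => ∑ i : Fin m, (C i)ᴴ * Z * C i with hΦ
  have hstep : (Φ Yᵀ - Yᵀ).PosSemidef := by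
    have h1 : Φ Yᵀ - Yᵀ = ((∑ i : Fin m, (B i)ᴴ * Y * B i) - Y)ᵀ := by
      rw [Matrix.transpose_sub (∑ i : Fin m, (B i)ᴴ * Y * B i) Y,
        Matrix.transpose_sum]
      congr 1
      refine Finset.sum_congr rfl fun i _ => ?_
      rw [Matrix.transpose_mul ((B i)ᴴ * Y) (B i), Matrix.transpose_mul ((B i)ᴴ) Y,
        ← Matrix.mul_assoc, ← hCH i]
      try simp only [hC]
    rw [h1]
    exact hgap_psd.transpose
  have hmono : ∀ Z : Matrix (Fin n) (Fin n) ℂ, Z.PosSemidef → (Φ Z).PosSemidef := by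
    intro Z hZ
    exact aux_sum_posSemidef _ _ fun i _ => hZ.conjTranspose_mul_mul_same (C i)
  have hΦsub : ∀ Z W : Matrix (Fin n) (Fin n) ℂ, Φ (Z - W) = Φ Z - Φ W := by
    intro Z W
    simp only [hΦ, Matrix.mul_sub, Matrix.sub_mul, Finset.sum_sub_distrib]
  have hiter : ∀ k : ℕ, (Φ^[k] Yᵀ - Yᵀ).PosSemidef := by
    intro k
    induction k with
    | zero => simpa using Matrix.PosSemidef.zero
    | succ k ih =>
      rw [Function.iterate_succ_apply']
      have h1 : Φ (Φ^[k] Yᵀ) - Yᵀ = Φ (Φ^[k] Yᵀ - Yᵀ) + (Φ Yᵀ - Yᵀ) := by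
        rw [hΦsub]; abel
      rw [h1]
      exact (hmono _ ih).add hstep
  -- vectorization
  set v : Fin n × Fin n → ℂ := fun p => Yᵀ p.1 p.2 with hv
  set Mk : Matrix (Fin n × Fin n) (Fin n × Fin n) ℂ :=
    ∑ i : Fin m, ((B i)ᵀ ⊗ₖ (B i)ᴴ) with hMk
  have hrho' : spectralRadius ℂ Mk < 1 := hrho
  have hvec1 : ∀ Z : Matrix (Fin n) (Fin n) ℂ,
      Mk *ᵥ (fun p => Z p.1 p.2) = fun p => (Φ Z) p.1 p.2 := by
    intro Z
    have hsum : Mk *ᵥ (fun p => Z p.1 p.2)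
        = ∑ i : Fin m, ((B i)ᵀ ⊗ₖ (B i)ᴴ) *ᵥ (fun p => Z p.1 p.2) := by
      funext p
      simp [hMk, Matrix.mulVec, dotProduct, Matrix.sum_apply, Finset.sum_apply,
        Finset.sum_mul, Finset.mul_sum]
      exact Finset.sum_comm
    rw [hsum]
    funext p
    rw [Finset.sum_apply]
    simp only [aux_vec n (B _) Z]
    rw [hΦ]
    simp only [Matrix.sum_apply]
    try rfl
  have hvecn : ∀ k : ℕ, (fun p : Fin n × Fin n => (Φ^[k] Yᵀ) p.1 p.2) = (Mk ^ k) *ᵥ v := by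
    intro k
    induction k with
    | zero => simp [Matrix.one_mulVec, hv]
    | succ k ih =>
      rw [Function.iterate_succ_apply', ← hvec1 (Φ^[k] Yᵀ), ih,
        Matrix.mulVec_mulVec, ← pow_succ']
  -- powers tend to zero
  have htend0 : Filter.Tendsto (fun k : ℕ => Mk ^ k) Filter.atTop (nhds 0) :=
    aux_pow_tendsto_zero Mk hrho'
  -- conclude Yᵀ *ᵥ x = 0 for all x
  have hYx : ∀ x : Fin n → ℂ, Yᵀ *ᵥ x = 0 := by
    intro x
    -- the linear functional
    set gl : Matrix (Fin n × Fin n) (Fin n × Fin n) ℂ →ₗ[ℂ] ℂ :=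
      { toFun := fun Nm => ∑ p : Fin n × Fin n,
          (starRingEnd ℂ) (x p.1) * x p.2 * ((Nm *ᵥ v) p)
        map_add' := by
          intro Nm Nm'
          simp [Matrix.add_mulVec, Pi.add_apply, mul_add, Finset.sum_add_distrib]
        map_smul' := by
          intro c Nm
          simp [Matrix.smul_mulVec, Pi.smul_apply, smul_eq_mul, Finset.mul_sum]
          ring_nf
          simp [mul_comm, mul_left_comm, mul_assoc] } with hgl
    have hglcont : Continuous gl := gl.continuous_of_finiteDimensional
    have hq : ∀ k : ℕ, star x ⬝ᵥ (Φ^[k] Yᵀ) *ᵥ x = gl (Mk ^ k) := by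
      intro k
      have hv2 := hvecn k
      simp only [hgl, LinearMap.coe_mk, AddHom.coe_mk, ← hv2]
      simp [dotProduct, Matrix.mulVec, Fintype.sum_prod_type, Finset.mul_sum,
        Pi.star_apply, mul_comm, mul_left_comm, mul_assoc]
    have htendq : Filter.Tendsto (fun k : ℕ => gl (Mk ^ k)) Filter.atTop (nhds 0) := by
      have := (hglcont.tendsto 0).comp htend0
      simpa [Function.comp_def] using this
    set t : ℂ := star x ⬝ᵥ Yᵀ *ᵥ x with ht
    have htle : ∀ k : ℕ, t ≤ gl (Mk ^ k) := by
      intro k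
      have h0 := (hiter k).dotProduct_mulVec_nonneg x
      rw [Matrix.sub_mulVec, dotProduct_sub] at h0
      rw [hq k] at h0
      rw [ht]
      exact sub_nonneg.mp h0
    have htre : t.re ≤ 0 := by
      have hre : Filter.Tendsto (fun k : ℕ => (gl (Mk ^ k)).re) Filter.atTop (nhds 0) := by
        have := (Complex.continuous_re.tendsto 0).comp htendq
        simpa [Function.comp_def] using this
      exact ge_of_tendsto' hre (fun k => (Complex.le_def.mp (htle k)).1)
    have htpos : 0 ≤ t := hY.transpose.dotProduct_mulVec_nonneg x
    have ht0 : t = 0 := by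
      have h1 := (Complex.nonneg_iff.mp htpos).1
      have h2 := (Complex.nonneg_iff.mp htpos).2
      have hre0 : t.re = 0 := le_antisymm htre h1
      apply Complex.ext
      · simpa using hre0
      · simpa using h2.symm
    exact (hY.transpose.dotProduct_mulVec_zero_iff x).mp ht0
  -- finish
  have hY0 : Y = 0 := by
    have hYT : Yᵀ = 0 := by
      ext a b
      have := congrFun (hYx (Pi.single b 1)) a
      simpa [Matrix.mulVec_single] using this
    calc Y = Yᵀᵀ := (Matrix.transpose_transpose Y).symm
      _ = 0 := by rw [hYT]; simp
  have hfin : X_L - Xp = 0 := hY0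
  exact (sub_eq_zero.mp hfin).symm
end

section
/- Let m, n be positive integers, let Q be an n×n Hermitian positive definite matrix, and let A be an (mn)×n complex matrix. If X₊ and X_L are both Hermitian positive definite solutions of the equation X + A* X̂^{-1} A = Q, then X₊ − X_L = A* X̂₊^{-1} (X̂₊ − X̂_L) X̂₊^{-1} A + A* X̂₊^{-1} (X̂₊ − X̂_L) X̂_L^{-1} (X̂₊ − X̂_L) X̂₊^{-1} A; in particular, setting C = X̂₊^{-1} A, the matrix (X₊ − X_L) − C* (I_m ⊗ (X₊ − X_L)) C equals A* X̂₊^{-1} (X̂₊ − X̂_L) X̂_L^{-1} (X̂₊ − X̂_L) X̂₊^{-1} A, which is positive semidefinite. -/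
open Matrix
open scoped Matrix.Norms.L2Operator Kronecker ComplexOrder

private lemma kron_hermitian' {m n : ℕ} {Z : Matrix (Fin n) (Fin n) ℂ} (hZ : Z.IsHermitian) :
    ((1 : Matrix (Fin m) (Fin m) ℂ) ⊗ₖ Z).IsHermitian := by
  ext ⟨i, j⟩ ⟨k, l⟩
  simp only [conjTranspose_apply, kroneckerMap_apply, star_mul']
  conv_rhs => rw [← hZ]
  simp only [conjTranspose_apply]
  by_cases h : i = k <;> simp [one_apply, h, eq_comm]

private lemma kron_posdef' {m n : ℕ} {Z : Matrix (Fin n) (Fin n) ℂ} (hZ : Z.PosDef) :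
    ((1 : Matrix (Fin m) (Fin m) ℂ) ⊗ₖ Z).PosDef := by
  refine PosDef.of_dotProduct_mulVec_pos (kron_hermitian' hZ.1) fun x hx => ?_
  have key : star x ⬝ᵥ (((1 : Matrix (Fin m) (Fin m) ℂ) ⊗ₖ Z) *ᵥ x)
      = ∑ i : Fin m, star (fun j => x (i, j)) ⬝ᵥ (Z *ᵥ fun j => x (i, j)) := by
    simp [dotProduct, mulVec, Fintype.sum_prod_type, one_apply, ite_mul,
      Finset.sum_ite_eq, Finset.sum_ite_eq']
  rw [key]
  obtain ⟨⟨i0, j0⟩, hij⟩ := Function.ne_iff.mp hx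
  refine Finset.sum_pos' (fun i _ => (hZ.posSemidef.dotProduct_mulVec_nonneg _)) ⟨i0, Finset.mem_univ _, hZ.dotProduct_mulVec_pos ?_⟩
  exact fun h => hij (congrFun h j0)

private lemma kron_sub' {m n : ℕ} (X Y : Matrix (Fin n) (Fin n) ℂ) :
    (1 : Matrix (Fin m) (Fin m) ℂ) ⊗ₖ (X - Y)
      = (1 : Matrix (Fin m) (Fin m) ℂ) ⊗ₖ X - (1 : Matrix (Fin m) (Fin m) ℂ) ⊗ₖ Y := by
  ext ⟨i, j⟩ ⟨k, l⟩
  simp [kroneckerMap_apply, mul_sub]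

/-- (Key identity in the proof of Lemma 2.4.) If `Xp` and `X_L` are Hermitian
positive definite solutions of `X + Aᴴ X̂⁻¹ A = Q`, then
`Xp − X_L = Aᴴ X̂p⁻¹ (X̂p − X̂_L) X̂p⁻¹ A + Aᴴ X̂p⁻¹ (X̂p − X̂_L) X̂_L⁻¹ (X̂p − X̂_L) X̂p⁻¹ A`,
and with `C = X̂p⁻¹ A`, `(Xp − X_L) − Cᴴ (I_m ⊗ (Xp − X_L)) C` equals the (positive
semidefinite) second term. -/
theorem statement6 (m n : ℕ) (hm : 0 < m) (hn : 0 < n)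
    (Q : Matrix (Fin n) (Fin n) ℂ) (hQ : Q.PosDef)
    (A : Matrix (Fin m × Fin n) (Fin n) ℂ)
    (Xp X_L : Matrix (Fin n) (Fin n) ℂ) (hXp : Xp.PosDef) (hXL : X_L.PosDef)
    (hXpsol : Xp + Aᴴ * ((1 : Matrix (Fin m) (Fin m) ℂ) ⊗ₖ Xp)⁻¹ * A = Q)
    (hXLsol : X_L + Aᴴ * ((1 : Matrix (Fin m) (Fin m) ℂ) ⊗ₖ X_L)⁻¹ * A = Q) :
    Xp - X_L =
      Aᴴ * ((1 : Matrix (Fin m) (Fin m) ℂ) ⊗ₖ Xp)⁻¹ *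
          ((1 : Matrix (Fin m) (Fin m) ℂ) ⊗ₖ Xp - (1 : Matrix (Fin m) (Fin m) ℂ) ⊗ₖ X_L) *
          ((1 : Matrix (Fin m) (Fin m) ℂ) ⊗ₖ Xp)⁻¹ * A +
        Aᴴ * ((1 : Matrix (Fin m) (Fin m) ℂ) ⊗ₖ Xp)⁻¹ *
          ((1 : Matrix (Fin m) (Fin m) ℂ) ⊗ₖ Xp - (1 : Matrix (Fin m) (Fin m) ℂ) ⊗ₖ X_L) *
          ((1 : Matrix (Fin m) (Fin m) ℂ) ⊗ₖ X_L)⁻¹ *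
          ((1 : Matrix (Fin m) (Fin m) ℂ) ⊗ₖ Xp - (1 : Matrix (Fin m) (Fin m) ℂ) ⊗ₖ X_L) *
          ((1 : Matrix (Fin m) (Fin m) ℂ) ⊗ₖ Xp)⁻¹ * A ∧
    (Xp - X_L) -
        (((1 : Matrix (Fin m) (Fin m) ℂ) ⊗ₖ Xp)⁻¹ * A)ᴴ *
          ((1 : Matrix (Fin m) (Fin m) ℂ) ⊗ₖ (Xp - X_L)) *
          (((1 : Matrix (Fin m) (Fin m) ℂ) ⊗ₖ Xp)⁻¹ * A) =
      Aᴴ * ((1 : Matrix (Fin m) (Fin m) ℂ) ⊗ₖ Xp)⁻¹ *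
        ((1 : Matrix (Fin m) (Fin m) ℂ) ⊗ₖ Xp - (1 : Matrix (Fin m) (Fin m) ℂ) ⊗ₖ X_L) *
        ((1 : Matrix (Fin m) (Fin m) ℂ) ⊗ₖ X_L)⁻¹ *
        ((1 : Matrix (Fin m) (Fin m) ℂ) ⊗ₖ Xp - (1 : Matrix (Fin m) (Fin m) ℂ) ⊗ₖ X_L) *
        ((1 : Matrix (Fin m) (Fin m) ℂ) ⊗ₖ Xp)⁻¹ * A ∧
    (Aᴴ * ((1 : Matrix (Fin m) (Fin m) ℂ) ⊗ₖ Xp)⁻¹ *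
        ((1 : Matrix (Fin m) (Fin m) ℂ) ⊗ₖ Xp - (1 : Matrix (Fin m) (Fin m) ℂ) ⊗ₖ X_L) *
        ((1 : Matrix (Fin m) (Fin m) ℂ) ⊗ₖ X_L)⁻¹ *
        ((1 : Matrix (Fin m) (Fin m) ℂ) ⊗ₖ Xp - (1 : Matrix (Fin m) (Fin m) ℂ) ⊗ₖ X_L) *
        ((1 : Matrix (Fin m) (Fin m) ℂ) ⊗ₖ Xp)⁻¹ * A).PosSemidef := by
  set P : Matrix (Fin m × Fin n) (Fin m × Fin n) ℂ := (1 : Matrix (Fin m) (Fin m) ℂ) ⊗ₖ Xp with hPdef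
  set L : Matrix (Fin m × Fin n) (Fin m × Fin n) ℂ := (1 : Matrix (Fin m) (Fin m) ℂ) ⊗ₖ X_L with hLdef
  have hP : P.PosDef := kron_posdef' hXp
  have hL : L.PosDef := kron_posdef' hXL
  have hPdu : IsUnit P.det := isUnit_iff_ne_zero.mpr hP.det_pos.ne'
  have hLdu : IsUnit L.det := isUnit_iff_ne_zero.mpr hL.det_pos.ne'
  have hPP : P * P⁻¹ = 1 := mul_nonsing_inv _ hPdu
  have hPP' : P⁻¹ * P = 1 := nonsing_inv_mul _ hPdu
  have hLL : L * L⁻¹ = 1 := mul_nonsing_inv _ hLdu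
  have hLL' : L⁻¹ * L = 1 := nonsing_inv_mul _ hLdu
  -- core identity
  have h1 : P⁻¹ * (P - L) = 1 - P⁻¹ * L := by rw [Matrix.mul_sub, hPP']
  have h2 : (P - L) * P⁻¹ = 1 - L * P⁻¹ := by rw [Matrix.sub_mul, hPP]
  have h3 : (1 - P⁻¹ * L) * L⁻¹ = L⁻¹ - P⁻¹ := by
    rw [Matrix.sub_mul, Matrix.one_mul, mul_assoc, hLL, mul_one]
  have h4 : L⁻¹ * (L * P⁻¹) = P⁻¹ := by rw [← mul_assoc, hLL', Matrix.one_mul]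
  have core : P⁻¹ * (P - L) * P⁻¹ + P⁻¹ * (P - L) * L⁻¹ * (P - L) * P⁻¹ = L⁻¹ - P⁻¹ := by
    rw [h1, h3, mul_assoc, h2]
    simp only [Matrix.sub_mul, Matrix.mul_sub, Matrix.one_mul, Matrix.mul_one, ← mul_assoc, hLL']
    abel
  -- from the two equations
  have hsub : Xp - X_L = Aᴴ * L⁻¹ * A - Aᴴ * P⁻¹ * A := by
    have h := hXpsol.trans hXLsol.symm
    rw [sub_eq_sub_iff_add_eq_add, h, add_comm]
  have first : Xp - X_L =
      Aᴴ * P⁻¹ * (P - L) * P⁻¹ * A + Aᴴ * P⁻¹ * (P - L) * L⁻¹ * (P - L) * P⁻¹ * A := by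
    have expand : Aᴴ * P⁻¹ * (P - L) * P⁻¹ * A + Aᴴ * P⁻¹ * (P - L) * L⁻¹ * (P - L) * P⁻¹ * A
        = Aᴴ * ((P⁻¹ * (P - L) * P⁻¹ + P⁻¹ * (P - L) * L⁻¹ * (P - L) * P⁻¹) * A) := by
      simp only [Matrix.add_mul, Matrix.mul_add, Matrix.mul_assoc]
    rw [expand, core, hsub]
    simp only [Matrix.sub_mul, Matrix.mul_sub, Matrix.mul_assoc]
  refine ⟨first, ?_, ?_⟩
  · have hPinvH : P⁻¹ᴴ = P⁻¹ := hP.isHermitian.inv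
    have hC : ((P⁻¹ * A)ᴴ * ((1 : Matrix (Fin m) (Fin m) ℂ) ⊗ₖ (Xp - X_L)) * (P⁻¹ * A))
        = Aᴴ * P⁻¹ * (P - L) * P⁻¹ * A := by
      rw [kron_sub', ← hPdef, ← hLdef, conjTranspose_mul, hPinvH]
      simp only [Matrix.mul_assoc]
    rw [hC, first]
    abel
  · have hDH : (P - L)ᴴ = P - L := by
      rw [conjTranspose_sub, hP.isHermitian.eq, hL.isHermitian.eq]
    have hPinvH : P⁻¹ᴴ = P⁻¹ := hP.isHermitian.inv
    have := hL.posSemidef.inv.conjTranspose_mul_mul_same ((P - L) * P⁻¹ * A)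
    have heq : ((P - L) * P⁻¹ * A)ᴴ * L⁻¹ * ((P - L) * P⁻¹ * A)
        = Aᴴ * P⁻¹ * (P - L) * L⁻¹ * ((P - L) * P⁻¹ * A) := by
      simp only [conjTranspose_mul, hDH, hPinvH, Matrix.mul_assoc]
    rw [heq] at this
    simpa only [Matrix.mul_assoc] using this
end

section
/- Let m, n be positive integers, let Q be an n×n Hermitian positive definite matrix, and let A be an (mn)×n complex matrix. Let X₊ be a Hermitian positive definite solution of the equation X + A* X̂^{-1} A = Q. If there exists an n×n Hermitian positive definite matrix P such that ‖(I_m ⊗ (P X₊^{-1})) A P^{-1}‖ < 1 (spectral norm), then X₊ is a maximal solution: X ≤ X₊ for every Hermitian positive definite solution X of the equation. -/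
open Matrix
open scoped Matrix.Norms.L2Operator Kronecker ComplexOrder

namespace Statement7Aux

lemma kron_one_mulVec {m n : ℕ} (Z : Matrix (Fin n) (Fin n) ℂ) (y : Fin m × Fin n → ℂ)
    (i : Fin m) (j : Fin n) :
    (((1 : Matrix (Fin m) (Fin m) ℂ) ⊗ₖ Z) *ᵥ y) (i, j)
      = (Z *ᵥ fun j' => y (i, j')) j := by
  simp only [mulVec, dotProduct, Fintype.sum_prod_type, kroneckerMap_apply, one_apply]
  rw [Finset.sum_eq_single i]
  · simp
  · intro b _ hb
    simp [Ne.symm hb]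
  · simp

lemma dot_block {m n : ℕ} (M : Matrix (Fin n) (Fin n) ℂ) (y : Fin m × Fin n → ℂ) :
    star y ⬝ᵥ (((1 : Matrix (Fin m) (Fin m) ℂ) ⊗ₖ M) *ᵥ y)
      = ∑ i, star (fun j => y (i, j)) ⬝ᵥ (M *ᵥ fun j => y (i, j)) := by
  simp only [dotProduct, Fintype.sum_prod_type, Pi.star_apply]
  refine Finset.sum_congr rfl fun i _ => Finset.sum_congr rfl fun j _ => ?_
  rw [kron_one_mulVec]

lemma dot_self_block {m n : ℕ} (g : Fin m × Fin n → ℂ) :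
    star g ⬝ᵥ g = ∑ i, star (fun j => g (i, j)) ⬝ᵥ (fun j => g (i, j)) := by
  simp [dotProduct, Fintype.sum_prod_type]

lemma conj_dot {k l : Type*} [Fintype k] [Fintype l] (B : Matrix k l ℂ) (M : Matrix k k ℂ)
    (x : l → ℂ) :
    star x ⬝ᵥ ((Bᴴ * M * B) *ᵥ x) = star (B *ᵥ x) ⬝ᵥ (M *ᵥ (B *ᵥ x)) := by
  rw [← mulVec_mulVec, ← mulVec_mulVec, dotProduct_mulVec, ← star_mulVec]

lemma herm_dot_real {k : Type*} [Fintype k] {M : Matrix k k ℂ} (hM : M.IsHermitian)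
    (x : k → ℂ) : (star x ⬝ᵥ (M *ᵥ x)).im = 0 := by
  have h : star (star x ⬝ᵥ (M *ᵥ x)) = star x ⬝ᵥ (M *ᵥ x) := by
    calc star (star x ⬝ᵥ (M *ᵥ x)) = star (M *ᵥ x) ⬝ᵥ star (star x) :=
          (star_dotProduct_star _ _).symm
      _ = (star x ᵥ* Mᴴ) ⬝ᵥ x := by rw [star_star, star_mulVec]
      _ = star x ⬝ᵥ (Mᴴ *ᵥ x) := by rw [← dotProduct_mulVec]
      _ = star x ⬝ᵥ (M *ᵥ x) := by rw [hM.eq]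
  have h2 := congrArg Complex.im h
  simp only [Complex.star_def, Complex.conj_im] at h2
  linarith

noncomputable def eN {k : Type*} [Fintype k] (u : k → ℂ) : ℝ :=
  ‖(WithLp.equiv 2 (k → ℂ)).symm u‖

lemma eN_nonneg {k : Type*} [Fintype k] (u : k → ℂ) : 0 ≤ eN u := norm_nonneg _

lemma re_dot_self {k : Type*} [Fintype k] (u : k → ℂ) :
    (star u ⬝ᵥ u).re = eN u ^ 2 := by
  have h : inner ℂ ((WithLp.equiv 2 (k → ℂ)).symm u) ((WithLp.equiv 2 (k → ℂ)).symm u)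
      = star u ⬝ᵥ u := by rw [dotProduct_comm]; rfl
  rw [← h, inner_self_eq_norm_sq_to_K]
  simp only [eN]
  norm_cast

lemma re_dot_le {k : Type*} [Fintype k] (u v : k → ℂ) :
    (star u ⬝ᵥ v).re ≤ eN u * eN v := by
  have h : inner ℂ ((WithLp.equiv 2 (k → ℂ)).symm u) ((WithLp.equiv 2 (k → ℂ)).symm v)
      = star u ⬝ᵥ v := by rw [dotProduct_comm]; rfl
  rw [← h]
  calc (inner ℂ ((WithLp.equiv 2 (k → ℂ)).symm u) ((WithLp.equiv 2 (k → ℂ)).symm v)).re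
      ≤ ‖(inner ℂ ((WithLp.equiv 2 (k → ℂ)).symm u) ((WithLp.equiv 2 (k → ℂ)).symm v))‖ :=
        Complex.re_le_norm _
    _ ≤ eN u * eN v := norm_inner_le_norm _ _

lemma eN_mulVec_le {k l : Type*} [Fintype k] [Fintype l] [DecidableEq k] [DecidableEq l] (B : Matrix k l ℂ) (u : l → ℂ) :
    eN (B *ᵥ u) ≤ ‖B‖ * eN u :=
  B.l2_opNorm_mulVec ((WithLp.equiv 2 (l → ℂ)).symm u)

end Statement7Aux

section MainProof

open Statement7Aux Filter

/-- (Lemma 2.6 of the paper.) Let `Xp` be a Hermitian positive definite solution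
of `X + Aᴴ X̂⁻¹ A = Q`. If there exists a Hermitian positive definite `P` with
`‖(I_m ⊗ (P Xp⁻¹)) A P⁻¹‖ < 1` (spectral norm), then `Xp` is a maximal solution. -/
theorem statement7 (m n : ℕ) (hm : 0 < m) (hn : 0 < n)
    (Q : Matrix (Fin n) (Fin n) ℂ) (hQ : Q.PosDef)
    (A : Matrix (Fin m × Fin n) (Fin n) ℂ)
    (Xp : Matrix (Fin n) (Fin n) ℂ) (hXp : Xp.PosDef)
    (hXpsol : Xp + Aᴴ * ((1 : Matrix (Fin m) (Fin m) ℂ) ⊗ₖ Xp)⁻¹ * A = Q)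
    (hP : ∃ P : Matrix (Fin n) (Fin n) ℂ, P.PosDef ∧
      ‖((1 : Matrix (Fin m) (Fin m) ℂ) ⊗ₖ (P * Xp⁻¹)) * A * P⁻¹‖ < 1) :
    ∀ X : Matrix (Fin n) (Fin n) ℂ, X.PosDef →
      X + Aᴴ * ((1 : Matrix (Fin m) (Fin m) ℂ) ⊗ₖ X)⁻¹ * A = Q → (Xp - X).PosSemidef := by
  classical
  obtain ⟨P, hPd, hq⟩ := hP
  intro X hX hXsol
  obtain ⟨L, hLdef⟩ : ∃ Lm : Matrix (Fin m × Fin n) (Fin n) ℂ,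
      Lm = ((1 : Matrix (Fin m) (Fin m) ℂ) ⊗ₖ (P * Xp⁻¹)) * A * P⁻¹ := ⟨_, rfl⟩
  rw [← hLdef] at hq
  obtain ⟨D, hDdef⟩ : ∃ Dm : Matrix (Fin n) (Fin n) ℂ, Dm = Xp - X := ⟨_, rfl⟩
  have hXpH : Xp.IsHermitian := hXp.isHermitian
  have hXH : X.IsHermitian := hX.isHermitian
  have hdXp : IsUnit Xp.det := (Matrix.isUnit_iff_isUnit_det _).mp hXp.isUnit
  have hdX : IsUnit X.det := (Matrix.isUnit_iff_isUnit_det _).mp hX.isUnit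
  have hdP : IsUnit P.det := (Matrix.isUnit_iff_isUnit_det _).mp hPd.isUnit
  have hYXp : Xp⁻¹ * Xp = 1 := Matrix.nonsing_inv_mul _ hdXp
  have hXpY : Xp * Xp⁻¹ = 1 := Matrix.mul_nonsing_inv _ hdXp
  have hZX : X⁻¹ * X = 1 := Matrix.nonsing_inv_mul _ hdX
  have hXZ : X * X⁻¹ = 1 := Matrix.mul_nonsing_inv _ hdX
  have hYH : (Xp⁻¹).IsHermitian := hXpH.inv
  have hDH : D.IsHermitian := by rw [hDdef]; exact hXpH.sub hXH
  have hZpd : (X⁻¹).PosDef := hX.inv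
  -- kron inverses
  have kinvXp : ((1 : Matrix (Fin m) (Fin m) ℂ) ⊗ₖ Xp)⁻¹
      = (1 : Matrix (Fin m) (Fin m) ℂ) ⊗ₖ Xp⁻¹ := by
    rw [Matrix.inv_kronecker, inv_one]
  have kinvX : ((1 : Matrix (Fin m) (Fin m) ℂ) ⊗ₖ X)⁻¹
      = (1 : Matrix (Fin m) (Fin m) ℂ) ⊗ₖ X⁻¹ := by
    rw [Matrix.inv_kronecker, inv_one]
  have heq : Xp + Aᴴ * ((1 : Matrix (Fin m) (Fin m) ℂ) ⊗ₖ Xp⁻¹) * A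
      = X + Aᴴ * ((1 : Matrix (Fin m) (Fin m) ℂ) ⊗ₖ X⁻¹) * A := by
    rw [← kinvXp, ← kinvX, hXpsol, hXsol]
  -- matrix identities
  have e0 : X⁻¹ - Xp⁻¹ = Xp⁻¹ * D * X⁻¹ := by
    have h : Xp⁻¹ * D * X⁻¹ = X⁻¹ - Xp⁻¹ := by
      calc Xp⁻¹ * D * X⁻¹ = (Xp⁻¹ * Xp - Xp⁻¹ * X) * X⁻¹ := by
            rw [hDdef, Matrix.mul_sub]
        _ = Xp⁻¹ * Xp * X⁻¹ - Xp⁻¹ * X * X⁻¹ := by rw [Matrix.sub_mul]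
        _ = X⁻¹ - Xp⁻¹ := by rw [hYXp, one_mul, Matrix.mul_assoc, hXZ, mul_one]
    exact h.symm
  have e1 : X⁻¹ * D * Xp⁻¹ = X⁻¹ - Xp⁻¹ := by
    calc X⁻¹ * D * Xp⁻¹ = (X⁻¹ * Xp - X⁻¹ * X) * Xp⁻¹ := by rw [hDdef, Matrix.mul_sub]
      _ = X⁻¹ * Xp * Xp⁻¹ - X⁻¹ * X * Xp⁻¹ := by rw [Matrix.sub_mul]
      _ = X⁻¹ - Xp⁻¹ := by rw [Matrix.mul_assoc X⁻¹ Xp Xp⁻¹, hXpY, mul_one, hZX, one_mul]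
  have key : X⁻¹ = Xp⁻¹ + ((Xp⁻¹)ᴴ * D * Xp⁻¹
      + (D * Xp⁻¹)ᴴ * X⁻¹ * (D * Xp⁻¹)) := by
    rw [conjTranspose_mul, hDH.eq, hYH.eq, Matrix.mul_assoc (Xp⁻¹ * D) X⁻¹ (D * Xp⁻¹),
      ← Matrix.mul_assoc X⁻¹ D Xp⁻¹, e1, Matrix.mul_sub, ← e0]
    abel
  have hDid : D = Aᴴ * ((1 : Matrix (Fin m) (Fin m) ℂ) ⊗ₖ ((Xp⁻¹)ᴴ * D * Xp⁻¹)) * A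
      + Aᴴ * ((1 : Matrix (Fin m) (Fin m) ℂ) ⊗ₖ ((D * Xp⁻¹)ᴴ * X⁻¹ * (D * Xp⁻¹))) * A := by
    have h2 : ((1 : Matrix (Fin m) (Fin m) ℂ) ⊗ₖ X⁻¹)
        = (1 : Matrix (Fin m) (Fin m) ℂ) ⊗ₖ Xp⁻¹
          + ((1 : Matrix (Fin m) (Fin m) ℂ) ⊗ₖ ((Xp⁻¹)ᴴ * D * Xp⁻¹)
            + (1 : Matrix (Fin m) (Fin m) ℂ) ⊗ₖ ((D * Xp⁻¹)ᴴ * X⁻¹ * (D * Xp⁻¹))) := by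
      rw [← kronecker_add, ← kronecker_add, ← key]
    have h3 : D = Aᴴ * ((1 : Matrix (Fin m) (Fin m) ℂ) ⊗ₖ X⁻¹) * A
        - Aᴴ * ((1 : Matrix (Fin m) (Fin m) ℂ) ⊗ₖ Xp⁻¹) * A := by
      rw [hDdef]
      exact sub_eq_sub_iff_add_eq_add.mpr (heq.trans (add_comm _ _))
    conv_lhs => rw [h3]
    rw [h2]
    simp only [Matrix.mul_add, Matrix.add_mul]
    abel
  -- quadratic identity
  have quad : ∀ x : Fin n → ℂ, star x ⬝ᵥ (D *ᵥ x)
      = (∑ i, star (Xp⁻¹ *ᵥ fun j => (A *ᵥ x) (i, j))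
            ⬝ᵥ (D *ᵥ (Xp⁻¹ *ᵥ fun j => (A *ᵥ x) (i, j))))
        + ∑ i, star ((D * Xp⁻¹) *ᵥ fun j => (A *ᵥ x) (i, j))
            ⬝ᵥ (X⁻¹ *ᵥ ((D * Xp⁻¹) *ᵥ fun j => (A *ᵥ x) (i, j))) := by
    intro x
    conv_lhs => rw [hDid]
    rw [Matrix.add_mulVec, dotProduct_add, conj_dot A _ x, conj_dot A _ x,
      dot_block, dot_block]
    simp only [conj_dot]
  -- flip lemma
  have hflip : ∀ v : Fin n → ℂ,
      (star v ⬝ᵥ ((X - Xp) *ᵥ v)).re = - (star v ⬝ᵥ (D *ᵥ v)).re := by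
    intro v
    have hXD : X - Xp = -D := by rw [hDdef, neg_sub]
    rw [hXD, Matrix.neg_mulVec, dotProduct_neg, Complex.neg_re]
  -- the contraction step
  have step : ∀ c : ℝ, 0 ≤ c →
      (∀ v : Fin n → ℂ, (star v ⬝ᵥ ((X - Xp) *ᵥ v)).re ≤ c * eN (P *ᵥ v) ^ 2) →
      ∀ v : Fin n → ℂ,
        (star v ⬝ᵥ ((X - Xp) *ᵥ v)).re ≤ c * ‖L‖ ^ 2 * eN (P *ᵥ v) ^ 2 := by
    intro c hc hrec x
    obtain ⟨v, hv⟩ : ∃ vm : Fin m → Fin n → ℂ,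
        ∀ i, (Xp⁻¹ *ᵥ fun j => (A *ᵥ x) (i, j)) = vm i := ⟨_, fun _ => rfl⟩
    obtain ⟨u, hu⟩ : ∃ um : Fin m → Fin n → ℂ,
        ∀ i, ((D * Xp⁻¹) *ᵥ fun j => (A *ᵥ x) (i, j)) = um i := ⟨_, fun _ => rfl⟩
    have hquad := quad x
    simp only [hv, hu] at hquad
    have h1 : ∀ i, 0 ≤ (star (u i) ⬝ᵥ (X⁻¹ *ᵥ u i)).re := by
      intro i
      have := hZpd.posSemidef.re_dotProduct_nonneg (u i)
      simpa using this
    obtain ⟨g, hgdef⟩ : ∃ gm : Fin m × Fin n → ℂ,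
        gm = ((1 : Matrix (Fin m) (Fin m) ℂ) ⊗ₖ (P * Xp⁻¹)) *ᵥ (A *ᵥ x) := ⟨_, rfl⟩
    have hPv : ∀ i, P *ᵥ v i = fun j => g (i, j) := by
      intro i
      funext j
      rw [← hv i, hgdef, kron_one_mulVec, mulVec_mulVec]
    have hsum : ∑ i, eN (P *ᵥ v i) ^ 2 = eN g ^ 2 := by
      have h1' : ∀ i, eN (P *ᵥ v i) ^ 2
          = (star (fun j => g (i, j)) ⬝ᵥ fun j => g (i, j)).re := by
        intro i
        rw [← re_dot_self, hPv i]
      simp only [h1']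
      rw [← Complex.re_sum, ← dot_self_block, re_dot_self]
    have hgL : g = L *ᵥ (P *ᵥ x) := by
      rw [hgdef, mulVec_mulVec, mulVec_mulVec]
      congr 1
      rw [hLdef, Matrix.mul_assoc (((1 : Matrix (Fin m) (Fin m) ℂ) ⊗ₖ (P * Xp⁻¹)) * A) P⁻¹ P,
        Matrix.nonsing_inv_mul _ hdP, Matrix.mul_one]
    have hgnorm : eN g ≤ ‖L‖ * eN (P *ᵥ x) := by
      rw [hgL]
      exact eN_mulVec_le _ _
    have hmain : (star x ⬝ᵥ ((X - Xp) *ᵥ x)).re ≤ c * eN g ^ 2 := by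
      rw [hflip x, hquad, Complex.add_re, Complex.re_sum, Complex.re_sum]
      have hstep1 : -((∑ i, (star (v i) ⬝ᵥ (D *ᵥ v i)).re)
            + ∑ i, (star (u i) ⬝ᵥ (X⁻¹ *ᵥ u i)).re)
          ≤ ∑ i, -(star (v i) ⬝ᵥ (D *ᵥ v i)).re := by
        have h2 : (0:ℝ) ≤ ∑ i, (star (u i) ⬝ᵥ (X⁻¹ *ᵥ u i)).re :=
          Finset.sum_nonneg fun i _ => h1 i
        rw [Finset.sum_neg_distrib]
        linarith
      refine hstep1.trans ?_
      rw [← hsum, Finset.mul_sum]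
      refine Finset.sum_le_sum fun i _ => ?_
      have hri := hrec (v i)
      rw [hflip (v i)] at hri
      linarith
    refine hmain.trans ?_
    have h0 : eN g ^ 2 ≤ (‖L‖ * eN (P *ᵥ x)) ^ 2 :=
      pow_le_pow_left₀ (eN_nonneg g) hgnorm 2
    calc c * eN g ^ 2 ≤ c * (‖L‖ * eN (P *ᵥ x)) ^ 2 :=
          mul_le_mul_of_nonneg_left h0 hc
      _ = c * ‖L‖ ^ 2 * eN (P *ᵥ x) ^ 2 := by ring
  -- base case
  have base : ∀ v : Fin n → ℂ,
      (star v ⬝ᵥ ((X - Xp) *ᵥ v)).re ≤ ‖X - Xp‖ * ‖P⁻¹‖ ^ 2 * eN (P *ᵥ v) ^ 2 := by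
    intro v
    have h1 : (star v ⬝ᵥ ((X - Xp) *ᵥ v)).re ≤ eN v * eN ((X - Xp) *ᵥ v) := re_dot_le _ _
    have h2 : eN ((X - Xp) *ᵥ v) ≤ ‖X - Xp‖ * eN v := eN_mulVec_le _ _
    have h3 : eN v ≤ ‖P⁻¹‖ * eN (P *ᵥ v) := by
      have hv : v = P⁻¹ *ᵥ (P *ᵥ v) := by
        rw [mulVec_mulVec, Matrix.nonsing_inv_mul _ hdP, one_mulVec]
      calc eN v = eN (P⁻¹ *ᵥ (P *ᵥ v)) := by rw [← hv]
        _ ≤ ‖P⁻¹‖ * eN (P *ᵥ v) := eN_mulVec_le _ _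
    calc (star v ⬝ᵥ ((X - Xp) *ᵥ v)).re ≤ eN v * eN ((X - Xp) *ᵥ v) := h1
      _ ≤ eN v * (‖X - Xp‖ * eN v) := mul_le_mul_of_nonneg_left h2 (eN_nonneg v)
      _ = ‖X - Xp‖ * eN v ^ 2 := by ring
      _ ≤ ‖X - Xp‖ * (‖P⁻¹‖ * eN (P *ᵥ v)) ^ 2 :=
          mul_le_mul_of_nonneg_left (pow_le_pow_left₀ (eN_nonneg v) h3 2) (norm_nonneg _)
      _ = ‖X - Xp‖ * ‖P⁻¹‖ ^ 2 * eN (P *ᵥ v) ^ 2 := by ring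
  have iter : ∀ k : ℕ, ∀ v : Fin n → ℂ,
      (star v ⬝ᵥ ((X - Xp) *ᵥ v)).re
        ≤ ‖X - Xp‖ * ‖P⁻¹‖ ^ 2 * (‖L‖ ^ 2) ^ k * eN (P *ᵥ v) ^ 2 := by
    intro k
    induction k with
    | zero => simpa using base
    | succ k ih =>
        have hck : 0 ≤ ‖X - Xp‖ * ‖P⁻¹‖ ^ 2 * (‖L‖ ^ 2) ^ k := by positivity
        have h := step _ hck ih
        intro v
        calc (star v ⬝ᵥ ((X - Xp) *ᵥ v)).re
            ≤ ‖X - Xp‖ * ‖P⁻¹‖ ^ 2 * (‖L‖ ^ 2) ^ k * ‖L‖ ^ 2 * eN (P *ᵥ v) ^ 2 := h v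
          _ = ‖X - Xp‖ * ‖P⁻¹‖ ^ 2 * (‖L‖ ^ 2) ^ (k + 1) * eN (P *ᵥ v) ^ 2 := by ring
  -- conclusion
  rw [← hDdef]
  refine Matrix.PosSemidef.of_dotProduct_mulVec_nonneg hDH fun x => ?_
  have him : (star x ⬝ᵥ (D *ᵥ x)).im = 0 := herm_dot_real hDH x
  have hre : 0 ≤ (star x ⬝ᵥ (D *ᵥ x)).re := by
    have hq2 : ‖L‖ ^ 2 < 1 := by nlinarith [norm_nonneg L]
    have h0 : Tendsto (fun k : ℕ => (‖L‖ ^ 2) ^ k) atTop (nhds 0) :=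
      tendsto_pow_atTop_nhds_zero_of_lt_one (by positivity) hq2
    have hlim : Tendsto
        (fun k : ℕ => ‖X - Xp‖ * ‖P⁻¹‖ ^ 2 * (‖L‖ ^ 2) ^ k * eN (P *ᵥ x) ^ 2)
        atTop (nhds 0) := by
      have h := (h0.const_mul (‖X - Xp‖ * ‖P⁻¹‖ ^ 2)).mul_const (eN (P *ᵥ x) ^ 2)
      simpa [mul_comm, mul_assoc, mul_left_comm] using h
    have hle : (star x ⬝ᵥ ((X - Xp) *ᵥ x)).re ≤ 0 :=
      ge_of_tendsto' hlim fun k => iter k x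
    rw [hflip x] at hle
    linarith
  rw [Complex.nonneg_iff]
  exact ⟨hre, him.symm⟩

end MainProof
end

section
/- Let m, n be positive integers, let Q be an n×n Hermitian positive definite matrix, and let A be an (mn)×n complex matrix. Let X₊ be a Hermitian positive definite solution of X + A* X̂^{-1} A = Q and let P be an n×n Hermitian positive definite matrix. Then Y₊ := P^{-1} X₊ P^{-1} is a Hermitian positive definite solution of the equation Y + C* Ŷ^{-1} C = P^{-1} Q P^{-1}, where C := (I_m ⊗ P^{-1}) A P^{-1}; moreover ‖(I_m ⊗ Y₊^{-1}) C‖ = ‖(I_m ⊗ (P X₊^{-1})) A P^{-1}‖ (spectral norms). -/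
open Matrix
open scoped Matrix.Norms.L2Operator Kronecker ComplexOrder

lemma posdef_conj {n : ℕ} {M B : Matrix (Fin n) (Fin n) ℂ} (hM : M.PosDef)
    (hB : IsUnit B.det) : (Bᴴ * M * B).PosDef := by
  refine posDef_iff_dotProduct_mulVec.mpr ⟨isHermitian_conjTranspose_mul_mul B hM.1, fun x hx => ?_⟩
  have hBx : B *ᵥ x ≠ 0 := by
    intro h
    exact hx (mulVec_injective_iff_isUnit.mpr ((isUnit_iff_isUnit_det B).mpr hB) (by simpa using h))
  have h2 := hM.dotProduct_mulVec_pos hBx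
  have : star x ⬝ᵥ (Bᴴ * M * B) *ᵥ x = star (B *ᵥ x) ⬝ᵥ M *ᵥ (B *ᵥ x) := by
    rw [← mulVec_mulVec, ← mulVec_mulVec, dotProduct_mulVec, star_mulVec]

  rwa [this]

lemma kron_conjT {m n : ℕ} (A : Matrix (Fin m) (Fin m) ℂ) (B : Matrix (Fin n) (Fin n) ℂ) :
    (A ⊗ₖ B)ᴴ = Aᴴ ⊗ₖ Bᴴ := by
  ext ⟨i, j⟩ ⟨k, l⟩
  simp [conjTranspose_apply, kroneckerMap_apply, mul_comm]


/-- (Transformation in the proof of Lemma 2.6.) If `Xp` is a Hermitian positive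
definite solution of `X + Aᴴ X̂⁻¹ A = Q` and `P` is Hermitian positive definite, then
`Yp = P⁻¹ Xp P⁻¹` is a Hermitian positive definite solution of `Y + Cᴴ Ŷ⁻¹ C = P⁻¹ Q P⁻¹`
with `C = (I_m ⊗ P⁻¹) A P⁻¹`, and `‖(I_m ⊗ Yp⁻¹) C‖ = ‖(I_m ⊗ (P Xp⁻¹)) A P⁻¹‖`. -/
theorem statement8 (m n : ℕ) (hm : 0 < m) (hn : 0 < n)
    (Q : Matrix (Fin n) (Fin n) ℂ) (hQ : Q.PosDef)
    (A : Matrix (Fin m × Fin n) (Fin n) ℂ)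
    (Xp : Matrix (Fin n) (Fin n) ℂ) (hXp : Xp.PosDef)
    (hXpsol : Xp + Aᴴ * ((1 : Matrix (Fin m) (Fin m) ℂ) ⊗ₖ Xp)⁻¹ * A = Q)
    (P : Matrix (Fin n) (Fin n) ℂ) (hP : P.PosDef) :
    (P⁻¹ * Xp * P⁻¹).PosDef ∧
      P⁻¹ * Xp * P⁻¹ +
          (((1 : Matrix (Fin m) (Fin m) ℂ) ⊗ₖ P⁻¹) * A * P⁻¹)ᴴ *
            ((1 : Matrix (Fin m) (Fin m) ℂ) ⊗ₖ (P⁻¹ * Xp * P⁻¹))⁻¹ *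
            (((1 : Matrix (Fin m) (Fin m) ℂ) ⊗ₖ P⁻¹) * A * P⁻¹) = P⁻¹ * Q * P⁻¹ ∧
      ‖((1 : Matrix (Fin m) (Fin m) ℂ) ⊗ₖ (P⁻¹ * Xp * P⁻¹)⁻¹) *
          (((1 : Matrix (Fin m) (Fin m) ℂ) ⊗ₖ P⁻¹) * A * P⁻¹)‖ =
        ‖((1 : Matrix (Fin m) (Fin m) ℂ) ⊗ₖ (P * Xp⁻¹)) * A * P⁻¹‖ := by
  have hPu : IsUnit P.det := isUnit_iff_ne_zero.mpr hP.det_pos.ne'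
  have hPiH : P⁻¹ᴴ = P⁻¹ := by rw [conjTranspose_nonsing_inv, hP.isHermitian.eq]
  have hpd : (P⁻¹ * Xp * P⁻¹).PosDef := by
    have := posdef_conj (B := P⁻¹) hXp (by simpa using hPu.inv)
    rwa [hPiH] at this
  have hinv3 : (P⁻¹ * Xp * P⁻¹)⁻¹ = P * Xp⁻¹ * P := by
    rw [Matrix.mul_inv_rev, Matrix.mul_inv_rev, nonsing_inv_nonsing_inv _ hPu,
      Matrix.mul_assoc]
  have hkXinv : ((1 : Matrix (Fin m) (Fin m) ℂ) ⊗ₖ Xp)⁻¹ = 1 ⊗ₖ Xp⁻¹ := by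
    rw [Matrix.inv_kronecker, inv_one]
  have hkinv : ((1 : Matrix (Fin m) (Fin m) ℂ) ⊗ₖ (P⁻¹ * Xp * P⁻¹))⁻¹
      = 1 ⊗ₖ (P * Xp⁻¹ * P) := by
    rw [Matrix.inv_kronecker, inv_one, hinv3]
  have hmid : ((1 : Matrix (Fin m) (Fin m) ℂ) ⊗ₖ P⁻¹) *
      ((1 : Matrix (Fin m) (Fin m) ℂ) ⊗ₖ (P * (Xp⁻¹ * P))) *
      ((1 : Matrix (Fin m) (Fin m) ℂ) ⊗ₖ P⁻¹) = 1 ⊗ₖ Xp⁻¹ := by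
    rw [← Matrix.mul_kronecker_mul, ← Matrix.mul_kronecker_mul]
    simp [Matrix.mul_assoc, nonsing_inv_mul_cancel_left _ _ hPu, mul_nonsing_inv _ hPu]
  refine ⟨hpd, ?_, ?_⟩
  · have hC : (((1 : Matrix (Fin m) (Fin m) ℂ) ⊗ₖ P⁻¹) * A * P⁻¹)ᴴ
        = P⁻¹ * Aᴴ * ((1 : Matrix (Fin m) (Fin m) ℂ) ⊗ₖ P⁻¹) := by
      rw [conjTranspose_mul, conjTranspose_mul, kron_conjT, conjTranspose_one, hPiH,
        Matrix.mul_assoc]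
    have key : ∀ (Z : Matrix (Fin m × Fin n) (Fin n) ℂ),
        ((1 : Matrix (Fin m) (Fin m) ℂ) ⊗ₖ P⁻¹) *
          (((1 : Matrix (Fin m) (Fin m) ℂ) ⊗ₖ (P * (Xp⁻¹ * P))) *
            (((1 : Matrix (Fin m) (Fin m) ℂ) ⊗ₖ P⁻¹) * Z)) =
        ((1 : Matrix (Fin m) (Fin m) ℂ) ⊗ₖ Xp⁻¹) * Z := fun Z => by
      rw [← Matrix.mul_assoc, ← Matrix.mul_assoc, hmid]
    rw [hC, hkinv, ← hXpsol, hkXinv]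
    simp only [Matrix.add_mul, Matrix.mul_add, Matrix.mul_assoc]
    rw [key]
  · have heq : ((1 : Matrix (Fin m) (Fin m) ℂ) ⊗ₖ (P⁻¹ * Xp * P⁻¹)⁻¹) *
        (((1 : Matrix (Fin m) (Fin m) ℂ) ⊗ₖ P⁻¹) * A * P⁻¹) =
        ((1 : Matrix (Fin m) (Fin m) ℂ) ⊗ₖ (P * Xp⁻¹)) * A * P⁻¹ := by
      rw [hinv3, ← Matrix.mul_assoc, ← Matrix.mul_assoc, ← Matrix.mul_kronecker_mul,
        Matrix.one_mul, mul_nonsing_inv_cancel_right _ _ hPu]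
    rw [heq]
end

section
/- Let m, n be positive integers, let Q be an n×n Hermitian positive definite matrix with unique Hermitian positive definite square root Q^{1/2}, and let A be an (mn)×n complex matrix. An n×n Hermitian positive definite matrix X satisfies X + A* X̂^{-1} A = Q if and only if Y := Q^{-1/2} X Q^{-1/2} is a Hermitian positive definite matrix satisfying Y + B* Ŷ^{-1} B = I, where B := (I_m ⊗ Q^{-1/2}) A Q^{-1/2}. -/
open Matrix
open scoped Matrix.Norms.L2Operator Kronecker ComplexOrder

private lemma posdef_conj_aux {n : ℕ} {X C : Matrix (Fin n) (Fin n) ℂ}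
    (hX : X.PosDef) (hC : IsUnit C) : (Cᴴ * X * C).PosDef := by
  constructor
  · simpa [Matrix.IsHermitian, Matrix.conjTranspose_mul, Matrix.mul_assoc] using
      congrArg (fun Z => Cᴴ * Z * C) hX.isHermitian.eq
  · exact (hX.conjTranspose_mul_mul_same (Matrix.mulVec_injective_of_isUnit hC)).2

private lemma kron_one_conjTranspose {m n : ℕ} (M : Matrix (Fin n) (Fin n) ℂ) :
    ((1 : Matrix (Fin m) (Fin m) ℂ) ⊗ₖ M)ᴴ = (1 : Matrix (Fin m) (Fin m) ℂ) ⊗ₖ Mᴴ := by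
  ext ⟨a, b⟩ ⟨c, d⟩
  simp [Matrix.conjTranspose_apply, Matrix.one_apply, eq_comm]
  aesop

/-- (Reduction of Eq. (1) to Eq. (3) in the paper.) A Hermitian positive
definite `X` satisfies `X + Aᴴ X̂⁻¹ A = Q` if and only if `Y = Q^{-1/2} X Q^{-1/2}` is a
Hermitian positive definite solution of `Y + Bᴴ Ŷ⁻¹ B = I` where
`B = (I_m ⊗ Q^{-1/2}) A Q^{-1/2}`. -/
theorem statement9 (m n : ℕ) (hm : 0 < m) (hn : 0 < n)
    (Q : Matrix (Fin n) (Fin n) ℂ) (hQ : Q.PosDef)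
    (sqrtQ : Matrix (Fin n) (Fin n) ℂ) (hsqrtQ : sqrtQ.PosDef) (hsq : sqrtQ * sqrtQ = Q)
    (A : Matrix (Fin m × Fin n) (Fin n) ℂ)
    (X : Matrix (Fin n) (Fin n) ℂ) (hX : X.PosDef) :
    X + Aᴴ * ((1 : Matrix (Fin m) (Fin m) ℂ) ⊗ₖ X)⁻¹ * A = Q ↔
      ((sqrtQ⁻¹ * X * sqrtQ⁻¹).PosDef ∧
        sqrtQ⁻¹ * X * sqrtQ⁻¹ +
            (((1 : Matrix (Fin m) (Fin m) ℂ) ⊗ₖ sqrtQ⁻¹) * A * sqrtQ⁻¹)ᴴ *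
              ((1 : Matrix (Fin m) (Fin m) ℂ) ⊗ₖ (sqrtQ⁻¹ * X * sqrtQ⁻¹))⁻¹ *
              (((1 : Matrix (Fin m) (Fin m) ℂ) ⊗ₖ sqrtQ⁻¹) * A * sqrtQ⁻¹) = 1) := by
  set S := sqrtQ with hS
  have hSu : IsUnit S := hsqrtQ.isUnit
  have hSdet : IsUnit S.det := (Matrix.isUnit_iff_isUnit_det _).mp hSu
  have hXdet : IsUnit X.det := (Matrix.isUnit_iff_isUnit_det _).mp hX.isUnit
  have hSC : S * S⁻¹ = 1 := Matrix.mul_nonsing_inv _ hSdet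
  have hCS : S⁻¹ * S = 1 := Matrix.nonsing_inv_mul _ hSdet
  have hCu : IsUnit S⁻¹ := hsqrtQ.inv.isUnit
  have hCH : S⁻¹ᴴ = S⁻¹ := hsqrtQ.isHermitian.inv.eq
  -- positive definiteness of Y
  have hY : (S⁻¹ * X * S⁻¹).PosDef := by
    have := posdef_conj_aux hX hCu
    rwa [hCH] at this
  -- inverse of Y
  have hYinv : (S⁻¹ * X * S⁻¹)⁻¹ = S * X⁻¹ * S := by
    rw [Matrix.mul_inv_rev, Matrix.mul_inv_rev, Matrix.nonsing_inv_nonsing_inv _ hSdet,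
      Matrix.mul_assoc]
  -- the middle term identity
  have hmid : (((1 : Matrix (Fin m) (Fin m) ℂ) ⊗ₖ S⁻¹) * A * S⁻¹)ᴴ *
      ((1 : Matrix (Fin m) (Fin m) ℂ) ⊗ₖ (S⁻¹ * X * S⁻¹))⁻¹ *
      (((1 : Matrix (Fin m) (Fin m) ℂ) ⊗ₖ S⁻¹) * A * S⁻¹) =
      S⁻¹ * (Aᴴ * ((1 : Matrix (Fin m) (Fin m) ℂ) ⊗ₖ X)⁻¹ * A) * S⁻¹ := by
    rw [Matrix.conjTranspose_mul, Matrix.conjTranspose_mul, kron_one_conjTranspose, hCH,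
      Matrix.inv_kronecker, inv_one, hYinv, Matrix.inv_kronecker, inv_one]
    have h1 : ∀ Z : Matrix (Fin m × Fin n) (Fin n) ℂ,
        ((1 : Matrix (Fin m) (Fin m) ℂ) ⊗ₖ S⁻¹) *
          (((1 : Matrix (Fin m) (Fin m) ℂ) ⊗ₖ (S * (X⁻¹ * S))) *
            (((1 : Matrix (Fin m) (Fin m) ℂ) ⊗ₖ S⁻¹) * Z)) =
        ((1 : Matrix (Fin m) (Fin m) ℂ) ⊗ₖ X⁻¹) * Z := by
      intro Z
      rw [← Matrix.mul_assoc, ← Matrix.mul_assoc, ← Matrix.mul_kronecker_mul,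
        ← Matrix.mul_kronecker_mul, mul_one, mul_one]
      have h2 : S⁻¹ * (S * (X⁻¹ * S)) * S⁻¹ = X⁻¹ := by
        rw [← Matrix.mul_assoc, hCS, Matrix.one_mul, Matrix.mul_assoc, hSC, Matrix.mul_one]
      rw [h2]
    simp only [Matrix.mul_assoc]
    rw [h1]
  have hQ1 : S⁻¹ * Q * S⁻¹ = 1 := by
    rw [← hsq, ← Matrix.mul_assoc, Matrix.mul_assoc S⁻¹ S S, ← Matrix.mul_assoc S⁻¹ S,
      hCS, Matrix.one_mul, hSC]
  constructor
  · intro h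
    refine ⟨hY, ?_⟩
    rw [hmid, ← Matrix.add_mul, ← Matrix.mul_add, h, hQ1]
  · rintro ⟨-, h⟩
    rw [hmid, ← Matrix.add_mul, ← Matrix.mul_add, ← hQ1] at h
    have h2 := congrArg (fun Z => S * Z * S) h
    simp only [Matrix.mul_assoc] at h2
    rw [← Matrix.mul_assoc S S⁻¹, hSC, Matrix.one_mul, ← Matrix.mul_assoc S S⁻¹, hSC,
      Matrix.one_mul] at h2
    rw [hCS, Matrix.mul_one, Matrix.mul_one] at h2
    rw [Matrix.mul_assoc]
    exact h2
end
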